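/- arXiv:0902.2155 — 3 statements merged into one kernel-verified Lean document; each statement's English description precedes it below -/
import Mathlib

section
/- Let F be a connected ℕ-divisible supertropical semifield. Suppose f, g ∈ F[λ] have no common tangible root, neither f nor g is a monomial, and f + g is ghost. Then, after possibly interchanging f and g, there exist ν-values α < β in G₀ \ {0} such that f is β-left half-tangible, g is α-right half-tangible, f(a)^ν = g(a)^ν for every tangible a with α < a^ν < β, deg(f) > deg(g), and the degree of the lowest-order nonzero monomial of g is strictly less than that of f. -/
open Polynomial

/-- A supertropical semiring: a commutative semiring with an idempotent
ghost map `nu` (a semiring homomorphism onto the ghost ideal), satisfying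
supertropicality and bipotence. -/
class Supertropical (R : Type*) extends CommSemiring R where
  nu : R → R
  nu_idem : ∀ a : R, nu (nu a) = nu a
  nu_add : ∀ a b : R, nu (a + b) = nu a + nu b
  nu_mul : ∀ a b : R, nu (a * b) = nu a * nu b
  nu_zero : nu (0 : R) = 0
  supertropicality : ∀ a b : R, nu a = nu b → a + b = nu a
  bipotence : ∀ a b : R, a + b = a ∨ a + b = b ∨ (a + b = nu a ∧ nu a = nu b)

namespace Supertropical

variable {R : Type*} [Supertropical R]

/-- membership in the ghost ideal `G₀ = {a | ν a = a}` -/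
def ghost (a : R) : Prop := nu a = a

/-- tangible elements: `T = R \ (G₀ ∪ {0})` (note `0 ∈ G₀`). -/
def tangible (a : R) : Prop := ¬ ghost a

/-- the order on ν-values: `a^ν ≤ b^ν` iff `a^ν + b^ν = b^ν` -/
def nuLe (a b : R) : Prop := nu a + nu b = nu b

/-- strict order on ν-values -/
def nuLt (a b : R) : Prop := nuLe a b ∧ nu a ≠ nu b

/-- the basic open interval `W_{α,β} = {a | α^ν < a^ν < β^ν}` of the ν-topology -/
def interval (α β : R) : Set R := {a : R | nuLt α a ∧ nuLt a β}

/-- the tangible open interval `W_{α,β} ∩ T` -/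
def tangInterval (α β : R) : Set R := {a : R | tangible a ∧ nuLt α a ∧ nuLt a β}

/-- `R` is connected if no open interval is the union of two disjoint
nonempty open intervals. -/
def STConnected (R : Type*) [Supertropical R] : Prop :=
  ¬ ∃ α β γ₁ δ₁ γ₂ δ₂ : R,
      interval α β = interval γ₁ δ₁ ∪ interval γ₂ δ₂ ∧
      interval γ₁ δ₁ ∩ interval γ₂ δ₂ = (∅ : Set R) ∧
      (interval γ₁ δ₁).Nonempty ∧ (interval γ₂ δ₂).Nonempty

end Supertropical

open Supertropical

/-- A supertropical semifield: the tangible elements form a multiplicative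
abelian group, and `ν(T) = G₀ \ {0}`. -/
class STSemifield (R : Type*) extends Supertropical R where
  tangible_one : tangible (1 : R)
  tangible_mul : ∀ a b : R, tangible a → tangible b → tangible (a * b)
  tangible_inv : ∀ a : R, tangible a → ∃ b : R, tangible b ∧ a * b = 1
  nu_onto : ∀ g : R, ghost g → g ≠ 0 → ∃ t : R, tangible t ∧ nu t = g

/-- An ℕ-divisible supertropical semifield. -/
class STDivSemifield (R : Type*) extends STSemifield R where
  divisible : ∀ (a : R) (n : ℕ), 1 ≤ n → ∃ b : R, b ^ n = a ∧ (tangible a → tangible b)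

namespace Supertropical

variable {R : Type*} [Supertropical R]

/-- a polynomial is ghost if all its values are ghost -/
def ghostPoly (f : R[X]) : Prop := ∀ a : R, ghost (f.eval a)

/-- e-equivalence of polynomials: they define the same function -/
def eEquiv (f g : R[X]) : Prop := ∀ a : R, f.eval a = g.eval a

/-- `g` e-divides `f` if `f` is e-equivalent to `g * h` for some `h` -/
def eDivides (g f : R[X]) : Prop := ∃ h : R[X], eEquiv f (g * h)

/-- a polynomial all of whose nonzero coefficients are tangible -/
def tangPoly (f : R[X]) : Prop := ∀ i : ℕ, f.coeff i ≠ 0 → tangible (f.coeff i)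

/-- monic: leading coefficient `1` or `ν(1)` -/
def stMonic (f : R[X]) : Prop := f.leadingCoeff = 1 ∨ f.leadingCoeff = nu 1

/-- a common tangible root of two polynomials -/
def commonTangibleRoot (f g : R[X]) (a : R) : Prop :=
  tangible a ∧ ghost (f.eval a) ∧ ghost (g.eval a)

/-- relative primeness of polynomials -/
def RelPrime (f g : R[X]) : Prop :=
  ¬ ∃ p q : R[X], tangPoly p ∧ tangPoly q ∧ ¬ (p = 0 ∧ q = 0) ∧
      p.natDegree < g.natDegree ∧ q.natDegree < f.natDegree ∧
      ghostPoly (p * f + q * g) ∧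
      (p * f).natDegree = (q * g).natDegree ∧
      (p * f).natTrailingDegree = (q * g).natTrailingDegree

/-- a full polynomial: all coefficients up to the degree are nonzero, and
`ν(αᵢ²) ≥ ν(α_{i-1}·α_{i+1})` for `0 < i < deg` -/
def fullPoly (f : R[X]) : Prop :=
  (∀ i ≤ f.natDegree, f.coeff i ≠ 0) ∧
  ∀ i : ℕ, 0 < i → i < f.natDegree →
    nuLe (f.coeff (i - 1) * f.coeff (i + 1)) (f.coeff i * f.coeff i)

end Supertropical

/-- the resultant matrix of `f` (of degree `m`) and `g` (of degree `n`):
rows `0 ≤ i < n` carry the coefficients of `f`, shifted, and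
rows `n ≤ i < n + m` carry the coefficients of `g`, shifted. -/
def resMatrix {R : Type*} [CommSemiring R] (m n : ℕ) (f g : R[X]) :
    Matrix (Fin (m + n)) (Fin (m + n)) R := fun i j =>
  if (i : ℕ) < n then
    (if (i : ℕ) ≤ (j : ℕ) then f.coeff ((j : ℕ) - (i : ℕ)) else 0)
  else
    (if (i : ℕ) - n ≤ (j : ℕ) then g.coeff ((j : ℕ) - ((i : ℕ) - n)) else 0)

/-- the supertropical determinant (permanent) of a square matrix -/
def sdet {R : Type*} [CommSemiring R] {k : ℕ} (A : Matrix (Fin k) (Fin k) R) : R :=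
  ∑ σ : Equiv.Perm (Fin k), ∏ i, A i (σ i)

/-- the resultant `|Re(f,g)|` for `f` of degree `m` and `g` of degree `n` -/
def resultant {R : Type*} [CommSemiring R] (m n : ℕ) (f g : R[X]) : R :=
  sdet (resMatrix m n f g)

/-- the resultant at the actual degrees of `f` and `g` -/
def Res {R : Type*} [CommSemiring R] (f g : R[X]) : R :=
  resultant f.natDegree g.natDegree f g


open Supertropical Polynomial


/-- a monomial `c·λ^i` -/
def isMonomial {R : Type*} [Supertropical R] (f : R[X]) : Prop :=
  ∃ (i : ℕ) (c : R), f = Polynomial.C c * Polynomial.X ^ i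


/-! ### Auxiliary development -/

namespace STAux

open Supertropical

section Basic
variable {F : Type*} [STDivSemifield F]

theorem gh_nu (a : F) : ghost (nu a) := nu_idem a

theorem gh_zero : ghost (0 : F) := nu_zero

theorem add_self (a : F) : a + a = nu a := supertropicality a a rfl

theorem tang_ne_zero {a : F} (h : tangible a) : a ≠ 0 := fun e => h (e ▸ gh_zero)

theorem gh_mul {a : F} (h : ghost a) (b : F) : ghost (a * b) := by
  have h1 : a = a + a := by rw [add_self]; exact h.symm
  have : a * b = a * b + a * b := by nth_rewrite 1 [h1]; rw [add_mul]
  rw [ghost]; rw [this, add_self]; exact (nu_idem _)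

theorem gh_mul' {b : F} (h : ghost b) (a : F) : ghost (a * b) := by
  rw [mul_comm]; exact gh_mul h a

theorem nuLe_refl (a : F) : nuLe a a := by
  rw [nuLe, add_self, nu_idem]

theorem nuLe_of_nu_eq {a b : F} (h : nu a = nu b) : nuLe a b := by
  rw [nuLe, h, add_self, nu_idem]

theorem nuLe_antisymm {a b : F} (h1 : nuLe a b) (h2 : nuLe b a) : nu a = nu b := by
  rw [nuLe] at h1 h2; rw [← h2, add_comm, h1]

theorem nuLe_trans {a b c : F} (h1 : nuLe a b) (h2 : nuLe b c) : nuLe a c := by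
  rw [nuLe] at h1 h2 ⊢
  calc nu a + nu c = nu a + (nu b + nu c) := by rw [h2]
    _ = (nu a + nu b) + nu c := (add_assoc _ _ _).symm
    _ = nu b + nu c := by rw [h1]
    _ = nu c := h2

theorem nuLe_total (a b : F) : nuLe a b ∨ nuLe b a := by
  rcases bipotence (nu a) (nu b) with h | h | ⟨h, h2⟩
  · right; rw [nuLe, add_comm]; exact h
  · left; exact h
  · rw [nu_idem, nu_idem] at h2; left; exact nuLe_of_nu_eq h2

theorem nuLt_iff {a b : F} : nuLt a b ↔ ¬ nuLe b a := by
  constructor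
  · rintro ⟨h1, h2⟩ h3; exact h2 (nuLe_antisymm h1 h3)
  · intro h; rcases nuLe_total a b with h1 | h1
    · exact ⟨h1, fun e => h (nuLe_of_nu_eq e.symm)⟩
    · exact absurd h1 h

theorem nuLe_or_nuLt (a b : F) : nuLe a b ∨ nuLt b a := by
  rcases Classical.em (nuLe a b) with h | h
  · exact Or.inl h
  · right; rw [nuLt_iff]; exact h

theorem nuLt_of_nuLe_of_nuLt {a b c : F} (h1 : nuLe a b) (h2 : nuLt b c) : nuLt a c := by
  rw [nuLt_iff] at h2 ⊢; exact fun h3 => h2 (nuLe_trans h3 h1)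

theorem nuLt_of_nuLt_of_nuLe {a b c : F} (h1 : nuLt a b) (h2 : nuLe b c) : nuLt a c := by
  rw [nuLt_iff] at h1 ⊢; exact fun h3 => h1 (nuLe_trans h2 h3)

theorem nuLt_trans {a b c : F} (h1 : nuLt a b) (h2 : nuLt b c) : nuLt a c :=
  nuLt_of_nuLe_of_nuLt h1.1 h2

theorem nuLt_irrefl {a : F} (h : nuLt a a) : False := h.2 rfl

theorem nuLe_of_nuLt {a b : F} (h : nuLt a b) : nuLe a b := h.1

theorem nuLt_congr_left {a a' b : F} (h : nu a = nu a') (h1 : nuLt a b) : nuLt a' b := by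
  refine ⟨?_, fun e => h1.2 (h.trans e)⟩
  rw [nuLe, ← h]; exact h1.1

theorem nuLt_congr_right {a b b' : F} (h : nu b = nu b') (h1 : nuLt a b) : nuLt a b' := by
  refine ⟨?_, fun e => h1.2 (e.trans h.symm)⟩
  rw [nuLe, ← h]; exact h1.1

theorem nuLe_congr_left {a a' b : F} (h : nu a = nu a') (h1 : nuLe a b) : nuLe a' b := by
  rw [nuLe, ← h]; exact h1

theorem nuLe_congr_right {a b b' : F} (h : nu b = nu b') (h1 : nuLe a b) : nuLe a b' := by
  rw [nuLe, ← h]; exact h1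

theorem add_eq_right {a b : F} (h : nuLt a b) : a + b = b := by
  rcases bipotence a b with h1 | h1 | ⟨h1, h2⟩
  · exfalso
    have h3 : nu (a + b) = nu a := by rw [h1]
    rw [nu_add] at h3
    have h4 : nuLe b a := by rw [nuLe, add_comm]; exact h3
    exact h.2 (nuLe_antisymm h.1 h4)
  · exact h1
  · exact absurd h2 h.2

theorem add_eq_left {a b : F} (h : nuLt b a) : a + b = a := by rw [add_comm]; exact add_eq_right h

theorem gh_add_left {a b : F} (hg : ghost a) (h : nuLe b a) : a + b = a := by
  rcases bipotence a b with h1 | h1 | ⟨h1, h2⟩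
  · exact h1
  · have h3 : nuLe a b := by
      have h4 : nu (a + b) = nu b := by rw [h1]
      rwa [nu_add] at h4
    rw [supertropicality a b (nuLe_antisymm h3 h)]; exact hg
  · rw [h1]; exact hg

theorem ghost_add_of_nu_eq {a b : F} (h : nu a = nu b) : ghost (a + b) := by
  rw [ghost, supertropicality a b h]; exact nu_idem a

theorem nu_mul_nu (a b : F) : nu a * nu b = nu (a * b) := by
  rw [nu_mul]

theorem nuLe_mul_right {a b : F} (c : F) (h : nuLe a b) : nuLe (a * c) (b * c) := by
  rw [nuLe, nu_mul, nu_mul, ← add_mul, h]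

theorem one_ne_zero' : (1 : F) ≠ 0 := by
  intro e
  have := STSemifield.tangible_one (R := F)
  apply this
  rw [ghost, e, nu_zero]

theorem nu_one_ne_zero : nu (1 : F) ≠ 0 := by
  intro e
  have h2 : (1 : F) + 1 = 0 := by rw [add_self, e]
  have h3 : ∀ x : F, x + x = 0 := by
    intro x
    calc x + x = x * (1 + 1) := by rw [mul_add, mul_one]
      _ = 0 := by rw [h2, mul_zero]
  have h4 : ∀ x : F, nu x = 0 := fun x => (add_self x).symm.trans (h3 x)
  have h5 : (1 : F) + 0 = 0 := by
    have := supertropicality (1 : F) 0 (by rw [h4, nu_zero])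
    rw [this, h4]
  rw [add_zero] at h5
  exact one_ne_zero' h5

theorem exists_nu_inv {c : F} (hc : c ≠ 0) : ∃ s : F, tangible s ∧ nu c * nu s = nu 1 := by
  rcases Classical.em (ghost c) with hg | ht
  · obtain ⟨t, ht, hts⟩ := STSemifield.nu_onto c hg hc
    obtain ⟨s, hs, hst⟩ := STSemifield.tangible_inv t ht
    exact ⟨s, hs, by rw [← hts, nu_idem, nu_mul_nu, hst]⟩
  · obtain ⟨s, hs, hst⟩ := STSemifield.tangible_inv c ht
    exact ⟨s, hs, by rw [nu_mul_nu, hst]⟩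

theorem nu_ne_zero {c : F} (hc : c ≠ 0) : nu c ≠ 0 := by
  obtain ⟨s, _, hs⟩ := exists_nu_inv hc
  intro e
  rw [e, zero_mul] at hs
  exact nu_one_ne_zero hs.symm

theorem nu_eq_zero_iff {c : F} : nu c = 0 ↔ c = 0 := by
  constructor
  · intro h; by_contra hc; exact nu_ne_zero hc h
  · intro h; rw [h, nu_zero]

theorem mul_ne_zero' {a b : F} (ha : a ≠ 0) (hb : b ≠ 0) : a * b ≠ 0 := by
  intro e
  obtain ⟨s, _, hs⟩ := exists_nu_inv ha
  obtain ⟨t, _, ht⟩ := exists_nu_inv hb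
  have : nu (a*b) * (nu s * nu t) = nu 1 * nu 1 := by
    rw [← nu_mul_nu]
    calc nu a * nu b * (nu s * nu t) = (nu a * nu s) * (nu b * nu t) := by ring
      _ = nu 1 * nu 1 := by rw [hs, ht]
  rw [e, nu_zero, zero_mul] at this
  rw [nu_mul_nu, mul_one] at this
  exact nu_one_ne_zero this.symm

theorem nuLe_cancel_right {a b c : F} (hc : c ≠ 0) (h : nuLe (a * c) (b * c)) : nuLe a b := by
  obtain ⟨s, _, hs⟩ := exists_nu_inv hc
  have h2 := nuLe_mul_right s h
  rw [nuLe, nu_mul, nu_mul, nu_mul, nu_mul] at h2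
  rw [mul_assoc, mul_assoc, hs] at h2
  rw [nuLe]
  have e : ∀ x : F, nu x * nu 1 = nu x := by
    intro x; rw [nu_mul_nu, mul_one]
  rwa [e, e] at h2

theorem nuLt_mul_right {a b : F} {c : F} (hc : c ≠ 0) (h : nuLt a b) : nuLt (a * c) (b * c) := by
  refine ⟨nuLe_mul_right c h.1, fun e => ?_⟩
  have h1 : nuLe (a*c) (b*c) := nuLe_of_nu_eq e
  have h2 : nuLe (b*c) (a*c) := nuLe_of_nu_eq e.symm
  exact h.2 (nuLe_antisymm (nuLe_cancel_right hc h1) (nuLe_cancel_right hc h2))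

theorem nuLt_cancel_right {a b c : F} (hc : c ≠ 0) (h : nuLt (a * c) (b * c)) : nuLt a b := by
  refine ⟨nuLe_cancel_right hc h.1, fun e => h.2 ?_⟩
  rw [← nu_mul_nu, ← nu_mul_nu, e]

theorem zero_nuLe (a : F) : nuLe 0 a := by rw [nuLe, nu_zero, zero_add]

theorem zero_nuLt {a : F} (ha : a ≠ 0) : nuLt 0 a :=
  ⟨zero_nuLe a, fun e => nu_ne_zero ha (by rw [← e, nu_zero])⟩

theorem pow_ne_zero' {a : F} (ha : a ≠ 0) (n : ℕ) : a ^ n ≠ 0 := by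
  induction n with
  | zero => simpa using one_ne_zero'
  | succ k ih => rw [pow_succ]; exact mul_ne_zero' ih ha

theorem nuLe_pow {a b : F} (h : nuLe a b) (n : ℕ) : nuLe (a ^ n) (b ^ n) := by
  induction n with
  | zero => simpa using nuLe_refl (1 : F)
  | succ k ih =>
    rw [pow_succ, pow_succ, nuLe, nu_mul, nu_mul]
    rw [nuLe] at ih h
    calc nu (a^k) * nu a + nu (b^k) * nu b
        = nu (a^k) * nu a + (nu (b^k) * nu a + nu (b^k) * nu b) := by
          rw [← mul_add, h]
      _ = (nu (a^k) + nu (b^k)) * nu a + nu (b^k) * nu b := by ring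
      _ = nu (b^k) * nu a + nu (b^k) * nu b := by rw [ih]
      _ = nu (b^k) * (nu a + nu b) := by ring
      _ = nu (b^k) * nu b := by rw [h]

theorem ne_zero_of_nuLt {a b : F} (h : nuLt a b) : b ≠ 0 := by
  intro e; rw [e] at h; rw [nuLt_iff] at h; exact h (zero_nuLe a)

theorem nuLt_pow {a b : F} (ha : a ≠ 0) (h : nuLt a b) {n : ℕ} (hn : 1 ≤ n) :
    nuLt (a ^ n) (b ^ n) := by
  induction n with
  | zero => omega
  | succ k ih =>
    rcases Nat.eq_zero_or_pos k with h0 | h0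
    · subst h0; simpa [pow_one] using h
    · have ihk := ih h0
      have hb : b ≠ 0 := ne_zero_of_nuLt h
      have h1 : nuLt (a^k * a) (b^k * a) := nuLt_mul_right ha ihk
      have h2 : nuLt (b^k * a) (b^k * b) := by
        rw [mul_comm (b^k) a, mul_comm (b^k) b]
        exact nuLt_mul_right (pow_ne_zero' hb k) h
      rw [pow_succ, pow_succ]
      exact nuLt_trans h1 h2

theorem nuLt_cancel_pow {a b : F} (ha : a ≠ 0) {n : ℕ} (hn : 1 ≤ n)
    (h : nuLt (a ^ n) (b ^ n)) : nuLt a b := by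
  rcases nuLe_or_nuLt a b with h1 | h1
  · rcases Classical.em (nu a = nu b) with e | e
    · exfalso
      have e1 := nuLe_pow (nuLe_of_nu_eq e) n
      have e2 := nuLe_pow (nuLe_of_nu_eq e.symm) n
      exact h.2 (nuLe_antisymm e1 e2)
    · exact ⟨h1, e⟩
  · exfalso
    have := nuLe_pow h1.1 n
    rw [nuLt_iff] at h; exact h this

end Basic

section Sums
variable {F : Type*} [STDivSemifield F] {ι : Type*}

theorem nuLe_add {a b c : F} (h1 : nuLe a c) (h2 : nuLe b c) : nuLe (a + b) c := by
  rw [nuLe, nu_add, add_assoc, h2, h1]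

theorem nuLe_add_left (a b : F) : nuLe a (a + b) := by
  rw [nuLe, nu_add, ← add_assoc, add_self (nu a), nu_idem]

theorem nuLe_add_right (a b : F) : nuLe b (a + b) := by
  have h := nuLe_add_left b a
  exact nuLe_congr_right (by rw [add_comm]) h

theorem nuLe_sum {s : Finset ι} {v : ι → F} {c : F} (h : ∀ i ∈ s, nuLe (v i) c) :
    nuLe (s.sum v) c := by
  classical
  induction s using Finset.induction_on with
  | empty => simpa using zero_nuLe c
  | @insert a s' hx ih =>
    rw [Finset.sum_insert hx]
    exact nuLe_add (h a (Finset.mem_insert_self a s'))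
      (ih fun i hi => h i (Finset.mem_insert_of_mem hi))

theorem nuLe_single_sum {s : Finset ι} {v : ι → F} {i : ι} (hi : i ∈ s) :
    nuLe (v i) (s.sum v) := by
  classical
  induction s using Finset.induction_on with
  | empty => exact absurd hi (Finset.notMem_empty i)
  | @insert a s' hx ih =>
    rw [Finset.sum_insert hx]
    rcases Finset.mem_insert.mp hi with h | h
    · subst h; exact nuLe_add_left _ _
    · exact nuLe_trans (ih h) (nuLe_add_right _ _)

theorem exists_max {s : Finset ι} (hs : s.Nonempty) (v : ι → F) :
    ∃ i ∈ s, ∀ j ∈ s, nuLe (v j) (v i) := by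
  classical
  induction s using Finset.induction_on with
  | empty => exact absurd hs (by simp)
  | @insert a s' hx ih =>
    rcases s'.eq_empty_or_nonempty with he | he
    · subst he
      exact ⟨a, Finset.mem_insert_self a _, by
        intro j hj
        rcases Finset.mem_insert.mp hj with h | h
        · subst h; exact nuLe_refl _
        · exact absurd h (Finset.notMem_empty j)⟩
    · obtain ⟨i, hi, hmax⟩ := ih he
      rcases nuLe_total (v i) (v a) with h | h
      · refine ⟨a, Finset.mem_insert_self a _, ?_⟩
        intro j hj
        rcases Finset.mem_insert.mp hj with h' | h'
        · subst h'; exact nuLe_refl _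
        · exact nuLe_trans (hmax j h') h
      · refine ⟨i, Finset.mem_insert_of_mem hi, ?_⟩
        intro j hj
        rcases Finset.mem_insert.mp hj with h' | h'
        · subst h'; exact h
        · exact hmax j h'

theorem gh_add_sum {c : F} (hc : ghost c) {s : Finset ι} {v : ι → F}
    (h : ∀ i ∈ s, nuLe (v i) c) : c + s.sum v = c := by
  classical
  induction s using Finset.induction_on with
  | empty => simp
  | @insert a s' hx ih =>
    rw [Finset.sum_insert hx, ← add_assoc,
      gh_add_left hc (h a (Finset.mem_insert_self a s'))]
    exact ih fun i hi => h i (Finset.mem_insert_of_mem hi)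

theorem nu_sum_max {s : Finset ι} {v : ι → F} {i₀ : ι} (hi : i₀ ∈ s)
    (hmax : ∀ j ∈ s, nuLe (v j) (v i₀)) : nu (s.sum v) = nu (v i₀) :=
  nuLe_antisymm (nuLe_sum hmax) (nuLe_single_sum hi)

theorem sum_eq_max {s : Finset ι} {v : ι → F} {i₀ : ι} (hi : i₀ ∈ s) (hi0 : v i₀ ≠ 0)
    (hstr : ∀ j ∈ s, j ≠ i₀ → nuLt (v j) (v i₀)) : s.sum v = v i₀ := by
  classical
  rw [← Finset.add_sum_erase s v hi]
  rcases (s.erase i₀).eq_empty_or_nonempty with he | he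
  · rw [he, Finset.sum_empty, add_zero]
  · obtain ⟨j₁, hj₁, hmax⟩ := exists_max he v
    have hj₁s : j₁ ∈ s := Finset.mem_of_mem_erase hj₁
    have hj₁ne : j₁ ≠ i₀ := Finset.ne_of_mem_erase hj₁
    have hlt : nuLt ((s.erase i₀).sum v) (v i₀) :=
      nuLt_congr_left (nu_sum_max hj₁ hmax).symm (hstr j₁ hj₁s hj₁ne)
    exact add_eq_left hlt

theorem ghost_sum_of_ghost_max {s : Finset ι} {v : ι → F} {i₀ : ι} (hi : i₀ ∈ s)
    (hg : ghost (v i₀)) (hmax : ∀ j ∈ s, nuLe (v j) (v i₀)) : ghost (s.sum v) := by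
  classical
  rw [← Finset.add_sum_erase s v hi,
    gh_add_sum hg (fun i hi' => hmax i (Finset.mem_of_mem_erase hi'))]
  exact hg

theorem ghost_sum_of_tie {s : Finset ι} {v : ι → F} {i₀ j₀ : ι} (hi : i₀ ∈ s) (hj : j₀ ∈ s)
    (hne : j₀ ≠ i₀) (he : nu (v j₀) = nu (v i₀)) (hmax : ∀ j ∈ s, nuLe (v j) (v i₀)) :
    ghost (s.sum v) := by
  classical
  rw [← Finset.add_sum_erase s v hi,
    ← Finset.add_sum_erase _ v (Finset.mem_erase.mpr ⟨hne, hj⟩), ← add_assoc]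
  have hg : ghost (v i₀ + v j₀) := by rw [add_comm]; exact ghost_add_of_nu_eq he
  have hnu : nu (v i₀ + v j₀) = nu (v i₀) := by
    rw [nu_add, he, add_self (nu (v i₀)), nu_idem]
  rw [gh_add_sum hg (fun i hi' => nuLe_congr_right hnu.symm
    (hmax i (Finset.mem_of_mem_erase (Finset.mem_of_mem_erase hi'))))]
  exact hg

theorem key_nuLe {x y : F} (hg : ghost (x + y)) (hx : tangible x) : nuLe x y := by
  rcases bipotence x y with h | h | ⟨h, h2⟩
  · exact absurd (h ▸ hg) hx
  · have h3 : nu (x + y) = nu y := by rw [h]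
    rw [nu_add] at h3; exact h3
  · exact nuLe_of_nu_eq h2

end Sums

section Eval
variable {F : Type*} [STDivSemifield F]
open Polynomial

/-- the `i`-th monomial value of `f` at `a` -/
noncomputable def trm (f : F[X]) (a : F) (i : ℕ) : F := f.coeff i * a ^ i

theorem eval_eq_sum_trm (f : F[X]) (a : F) : f.eval a = ∑ i ∈ f.support, trm f a i := by
  rw [Polynomial.eval_eq_sum, Polynomial.sum_def]; rfl

theorem tang_one : tangible (1 : F) := STSemifield.tangible_one

theorem tang_pow {a : F} (h : tangible a) (n : ℕ) : tangible (a ^ n) := by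
  induction n with
  | zero => simpa using tang_one
  | succ k ih => rw [pow_succ]; exact STSemifield.tangible_mul _ _ ih h

theorem trm_ne_zero {f : F[X]} {a : F} (ha : tangible a) {i : ℕ} (hi : i ∈ f.support) :
    trm f a i ≠ 0 :=
  mul_ne_zero' (Polynomial.mem_support_iff.mp hi) (pow_ne_zero' (tang_ne_zero ha) i)

theorem tang_trm_iff {f : F[X]} {a : F} (ha : tangible a) (i : ℕ) :
    tangible (trm f a i) ↔ tangible (f.coeff i) := by
  constructor
  · intro h hgc; exact h (gh_mul hgc _)
  · intro h hg
    exact STSemifield.tangible_mul _ _ h (tang_pow ha i) hg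

/-- `i` strictly dominates at `a` in `f` -/
def DomAt (f : F[X]) (a : F) (i : ℕ) : Prop :=
  i ∈ f.support ∧ ∀ j ∈ f.support, j ≠ i → nuLt (trm f a j) (trm f a i)

theorem exists_max_trm {f : F[X]} (hf : f ≠ 0) (a : F) :
    ∃ i ∈ f.support, ∀ j ∈ f.support, nuLe (trm f a j) (trm f a i) :=
  exists_max (Polynomial.support_nonempty.mpr hf) _

theorem nu_eval_max {f : F[X]} {a : F} {i : ℕ} (hi : i ∈ f.support)
    (hmax : ∀ j ∈ f.support, nuLe (trm f a j) (trm f a i)) :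
    nu (f.eval a) = nu (trm f a i) := by
  rw [eval_eq_sum_trm]; exact nu_sum_max hi hmax

theorem nuLe_trm_eval {f : F[X]} {a : F} {i : ℕ} (hi : i ∈ f.support) :
    nuLe (trm f a i) (f.eval a) := by
  rw [eval_eq_sum_trm]; exact nuLe_single_sum hi

theorem eval_eq_of_dom {f : F[X]} {a : F} {i : ℕ} (ha : tangible a) (hd : DomAt f a i) :
    f.eval a = trm f a i := by
  rw [eval_eq_sum_trm]
  exact sum_eq_max hd.1 (trm_ne_zero ha hd.1) hd.2

theorem nu_eval_of_dom {f : F[X]} {a : F} {i : ℕ} (ha : tangible a) (hd : DomAt f a i) :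
    nu (f.eval a) = nu (trm f a i) := by rw [eval_eq_of_dom ha hd]

theorem tang_eval_iff {f : F[X]} {a : F} (hf : f ≠ 0) (ha : tangible a) :
    tangible (f.eval a) ↔ ∃ i, DomAt f a i ∧ tangible (f.coeff i) := by
  obtain ⟨i₀, hi₀, hmax⟩ := exists_max_trm hf a
  constructor
  · intro h
    refine ⟨i₀, ⟨hi₀, ?_⟩, ?_⟩
    · intro j hj hne
      rcases Classical.em (nu (trm f a j) = nu (trm f a i₀)) with e | e
      · exfalso
        have hg := ghost_sum_of_tie hi₀ hj hne e hmax
        rw [← eval_eq_sum_trm] at hg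
        exact h hg
      · exact ⟨hmax j hj, e⟩
    · by_contra hgc
      have hg : ghost (f.coeff i₀) := Classical.not_not.mp hgc
      have h2 := ghost_sum_of_ghost_max hi₀ (gh_mul hg _) hmax
      rw [← eval_eq_sum_trm] at h2
      exact h h2
  · rintro ⟨i, hd, htc⟩
    rw [eval_eq_of_dom ha hd]
    exact (tang_trm_iff ha i).mpr htc

theorem dom_unique {f : F[X]} {a : F} {i j : ℕ} (hd : DomAt f a i) (hd' : DomAt f a j) :
    i = j := by
  by_contra hne
  exact nuLt_irrefl (nuLt_trans (hd.2 j hd'.1 (Ne.symm hne)) (hd'.2 i hd.1 hne))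

end Eval

section Cross
variable {F : Type*} [STDivSemifield F]

theorem nu_mul_one (a : F) : nu a * nu 1 = nu a := by rw [nu_mul_nu, mul_one]

theorem nu_trichot (a b : F) : nuLt a b ∨ nu a = nu b ∨ nuLt b a := by
  rcases Classical.em (nu a = nu b) with e | e
  · exact Or.inr (Or.inl e)
  · rcases nuLe_total a b with h | h
    · exact Or.inl ⟨h, e⟩
    · exact Or.inr (Or.inr ⟨h, fun e2 => e e2.symm⟩)

theorem nu_pow_congr {x y : F} (h : nu x = nu y) (n : ℕ) : nu (x ^ n) = nu (y ^ n) := by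
  induction n with
  | zero => rw [pow_zero, pow_zero]
  | succ k ih => rw [pow_succ, pow_succ, ← nu_mul_nu, ← nu_mul_nu, ih, h]

theorem exists_tang_lift {c : F} (hc : c ≠ 0) : ∃ t : F, tangible t ∧ nu t = nu c := by
  rcases Classical.em (ghost c) with hg | ht
  · obtain ⟨t, ht, hts⟩ := STSemifield.nu_onto c hg hc
    exact ⟨t, ht, hts.trans hg.symm⟩
  · exact ⟨c, ht, rfl⟩

/-- `θ` is the crossing point of the monomials `c·λ^i` and `d·λ^j` (`i < j`). -/
def IsCross (c : F) (i : ℕ) (d : F) (j : ℕ) (θ : F) : Prop :=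
  tangible θ ∧ ∀ x : F, tangible x →
    ((nuLt x θ → nuLt (d * x ^ j) (c * x ^ i)) ∧
     (nu x = nu θ → nu (c * x ^ i) = nu (d * x ^ j)) ∧
     (nuLt θ x → nuLt (c * x ^ i) (d * x ^ j)))

theorem exists_cross {c d : F} (hc : c ≠ 0) (hd : d ≠ 0) {i j : ℕ} (hij : i < j) :
    ∃ θ : F, IsCross c i d j θ := by
  obtain ⟨tc, htc, htcn⟩ := exists_tang_lift hc
  obtain ⟨td, htd, htdn⟩ := exists_tang_lift hd
  obtain ⟨s, hs, hst⟩ := STSemifield.tangible_inv td htd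
  have hn1 : 1 ≤ j - i := by omega
  obtain ⟨θ, hpow, htng⟩ := STDivSemifield.divisible (tc * s) (j - i) hn1
  have hθ : tangible θ := htng (fun hg => STSemifield.tangible_mul tc s htc hs hg)
  have hθ0 : θ ≠ 0 := tang_ne_zero hθ
  have hji : (j - i) + i = j := by omega
  have hsplit : θ ^ j = θ ^ i * (tc * s) := by
    rw [← hpow, ← pow_add]; congr 1; omega
  have hds : nu (d * s) = nu 1 := by
    rw [← nu_mul_nu, htdn.symm, nu_mul_nu, hst]
  -- the crossing equation
  have E : nu (d * θ ^ j) = nu (c * θ ^ i) := by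
    rw [hsplit]
    have h1 : d * (θ ^ i * (tc * s)) = (tc * θ ^ i) * (d * s) := by ring
    rw [h1, ← nu_mul_nu (tc * θ ^ i) (d * s), hds, nu_mul_one,
      ← nu_mul_nu tc (θ ^ i), htcn, nu_mul_nu c (θ ^ i)]
  refine ⟨θ, hθ, ?_⟩
  intro x hx
  have hx0 : x ≠ 0 := tang_ne_zero hx
  have hxp : ∀ n : ℕ, x ^ n ≠ 0 := pow_ne_zero' hx0
  have hθp : ∀ n : ℕ, θ ^ n ≠ 0 := pow_ne_zero' hθ0
  refine ⟨?_, ?_, ?_⟩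
  · -- below the crossing, the low monomial wins
    intro hlt
    have h1 : nuLt (x ^ (j - i)) (θ ^ (j - i)) := nuLt_pow hx0 hlt hn1
    have hM : c * (θ ^ i * x ^ i) ≠ 0 :=
      mul_ne_zero' hc (mul_ne_zero' (hθp i) (hxp i))
    have h2 := nuLt_mul_right hM h1
    have hhx : x ^ (j - i) * x ^ i = x ^ j := by rw [← pow_add, hji]
    have hhθ : θ ^ (j - i) * θ ^ i = θ ^ j := by rw [← pow_add, hji]
    have el : x ^ (j - i) * (c * (θ ^ i * x ^ i)) = (c * θ ^ i) * x ^ j := by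
      calc x ^ (j - i) * (c * (θ ^ i * x ^ i))
          = (c * θ ^ i) * (x ^ (j-i) * x ^ i) := by ring
        _ = (c * θ ^ i) * x ^ j := by rw [hhx]
    have er : θ ^ (j - i) * (c * (θ ^ i * x ^ i)) = (c * x ^ i) * θ ^ j := by
      calc θ ^ (j - i) * (c * (θ ^ i * x ^ i)) = (c * x ^ i) * (θ ^ (j-i) * θ ^ i) := by ring
        _ = (c * x ^ i) * θ ^ j := by rw [hhθ]
    rw [el, er] at h2
    have e1 : nu ((c * θ ^ i) * x ^ j) = nu ((d * x ^ j) * θ ^ j) := by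
      have h3 : (d * x ^ j) * θ ^ j = (d * θ ^ j) * x ^ j := by ring
      rw [h3, ← nu_mul_nu (d * θ ^ j) (x ^ j), ← nu_mul_nu (c * θ ^ i) (x ^ j), E]
    have h4 : nuLt ((d * x ^ j) * θ ^ j) ((c * x ^ i) * θ ^ j) :=
      nuLt_congr_left e1 h2
    exact nuLt_cancel_right (hθp j) h4
  · -- at the crossing
    intro he
    have h1 : nu (x ^ i) = nu (θ ^ i) := nu_pow_congr he i
    have h2 : nu (x ^ j) = nu (θ ^ j) := nu_pow_congr he j
    rw [← nu_mul_nu c (x ^ i), ← nu_mul_nu d (x ^ j), h1, h2,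
      nu_mul_nu c (θ ^ i), nu_mul_nu d (θ ^ j), ← E]
  · -- above the crossing, the high monomial wins
    intro hlt
    have h1 : nuLt (θ ^ (j - i)) (x ^ (j - i)) := nuLt_pow hθ0 hlt hn1
    have hM : d * (x ^ i * θ ^ i) ≠ 0 :=
      mul_ne_zero' hd (mul_ne_zero' (hxp i) (hθp i))
    have h2 := nuLt_mul_right hM h1
    have hhx : x ^ (j - i) * x ^ i = x ^ j := by rw [← pow_add, hji]
    have hhθ : θ ^ (j - i) * θ ^ i = θ ^ j := by rw [← pow_add, hji]
    have el : θ ^ (j - i) * (d * (x ^ i * θ ^ i)) = (d * θ ^ j) * x ^ i := by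
      calc θ ^ (j - i) * (d * (x ^ i * θ ^ i)) = d * (θ ^ (j-i) * θ ^ i) * x ^ i := by ring
        _ = (d * θ ^ j) * x ^ i := by rw [hhθ]
    have er : x ^ (j - i) * (d * (x ^ i * θ ^ i)) = (d * x ^ j) * θ ^ i := by
      calc x ^ (j - i) * (d * (x ^ i * θ ^ i)) = d * (x ^ (j-i) * x ^ i) * θ ^ i := by ring
        _ = (d * x ^ j) * θ ^ i := by rw [hhx]
    rw [el, er] at h2
    have e1 : nu ((d * θ ^ j) * x ^ i) = nu ((c * x ^ i) * θ ^ i) := by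
      have h3 : (c * x ^ i) * θ ^ i = (c * θ ^ i) * x ^ i := by ring
      rw [h3, ← nu_mul_nu (d * θ ^ j) (x ^ i), ← nu_mul_nu (c * θ ^ i) (x ^ i), E]
    have h4 : nuLt ((c * x ^ i) * θ ^ i) ((d * x ^ j) * θ ^ i) :=
      nuLt_congr_left e1 h2
    exact nuLt_cancel_right (hθp i) h4

theorem cross_low {c d θ : F} {i j : ℕ} (hcr : IsCross c i d j θ) {x : F} (hx : tangible x)
    (h : nuLt (c * x ^ i) (d * x ^ j)) : nuLt θ x := by
  rcases nu_trichot x θ with h1 | h1 | h1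
  · exact absurd h (by rw [nuLt_iff]; intro _; exact (nuLt_iff.mp ((hcr.2 x hx).1 h1)) h.1)
  · exact absurd (((hcr.2 x hx).2.1 h1)) (fun e => h.2 e)
  · exact h1

theorem cross_high {c d θ : F} {i j : ℕ} (hcr : IsCross c i d j θ) {x : F} (hx : tangible x)
    (h : nuLt (d * x ^ j) (c * x ^ i)) : nuLt x θ := by
  rcases nu_trichot x θ with h1 | h1 | h1
  · exact h1
  · exact absurd (((hcr.2 x hx).2.1 h1)) (fun e => h.2 e.symm)
  · exact absurd h (by rw [nuLt_iff]; intro _; exact (nuLt_iff.mp ((hcr.2 x hx).2.2 h1)) h.1)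

theorem cross_eq {c d θ : F} {i j : ℕ} (hcr : IsCross c i d j θ) {x : F} (hx : tangible x)
    (h : nu (c * x ^ i) = nu (d * x ^ j)) : nu x = nu θ := by
  rcases nu_trichot x θ with h1 | h1 | h1
  · exact absurd ((hcr.2 x hx).1 h1).2 (fun e => e h.symm)
  · exact h1
  · exact absurd ((hcr.2 x hx).2.2 h1).2 (fun e => e h)

end Cross

section Climb
variable {F : Type*} [STDivSemifield F]
open Polynomial

theorem exists_cross' (c : F) (i : ℕ) (d : F) (j : ℕ) :
    ∃ θ : F, tangible θ ∧ (c ≠ 0 → d ≠ 0 → i < j → IsCross c i d j θ) := by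
  rcases Classical.em (c ≠ 0 ∧ d ≠ 0 ∧ i < j) with h | h
  · obtain ⟨θ, hθ⟩ := exists_cross h.1 h.2.1 h.2.2
    exact ⟨θ, hθ.1, fun _ _ _ => hθ⟩
  · exact ⟨1, tang_one, fun hc hd hij => absurd ⟨hc, hd, hij⟩ h⟩

noncomputable def crossPt (c : F) (i : ℕ) (d : F) (j : ℕ) : F :=
  Classical.choose (exists_cross' c i d j)

theorem crossPt_tang (c : F) (i : ℕ) (d : F) (j : ℕ) : tangible (crossPt c i d j) :=
  (Classical.choose_spec (exists_cross' c i d j)).1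

theorem crossPt_spec {c d : F} {i j : ℕ} (hc : c ≠ 0) (hd : d ≠ 0) (hij : i < j) :
    IsCross c i d j (crossPt c i d j) :=
  (Classical.choose_spec (exists_cross' c i d j)).2 hc hd hij

theorem cross_nu_canon {c d : F} {i j : ℕ} (hc : c ≠ 0) (hd : d ≠ 0) (hij : i < j) {θ : F}
    (hcr : IsCross c i d j θ) : nu θ = nu (crossPt c i d j) :=
  cross_eq (crossPt_spec hc hd hij) hcr.1 ((hcr.2 θ hcr.1).2.1 rfl)

theorem trm_nu_congr {f : F[X]} {x x' : F} (h : nu x = nu x') (i : ℕ) :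
    nu (trm f x i) = nu (trm f x' i) := by
  rw [trm, trm, ← nu_mul_nu, ← nu_mul_nu, nu_pow_congr h i]

theorem domAt_congr {f : F[X]} {x x' : F} (h : nu x = nu x') {i : ℕ} (hd : DomAt f x i) :
    DomAt f x' i :=
  ⟨hd.1, fun j hj hne => nuLt_congr_left (trm_nu_congr h j)
    (nuLt_congr_right (trm_nu_congr h i) (hd.2 j hj hne))⟩

theorem ghost_eval_congr {f : F[X]} {x x' : F} (hx : tangible x) (hx' : tangible x')
    (h : nu x = nu x') (hg : ghost (f.eval x)) : ghost (f.eval x') := by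
  by_contra ht
  rcases Classical.em (f = 0) with he | hf
  · rw [he] at ht; simp at ht; exact ht gh_zero
  · obtain ⟨i, hd, htc⟩ := (tang_eval_iff hf hx').mp ht
    exact ((tang_eval_iff hf hx).mpr ⟨i, domAt_congr h.symm hd, htc⟩) hg

theorem tangible_eval_congr {f : F[X]} {x x' : F} (hx : tangible x) (hx' : tangible x')
    (h : nu x = nu x') (hg : tangible (f.eval x)) : tangible (f.eval x') := by
  intro hgg
  exact hg (ghost_eval_congr hx' hx h.symm hgg)

theorem dom_lt_of_dom {f : F[X]} {y x : F} (hy : tangible y) (hx : tangible x)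
    (hyx : nuLt y x) {s u : ℕ} (hds : DomAt f y s) (hdu : DomAt f x u) (hne : s ≠ u) :
    s < u := by
  rcases Nat.lt_or_ge s u with h | h
  · exact h
  · exfalso
    have hus : u < s := by omega
    have hcr := crossPt_spec (Polynomial.mem_support_iff.mp hdu.1)
      (Polynomial.mem_support_iff.mp hds.1) hus
    have h1 : nuLt (crossPt (f.coeff u) u (f.coeff s) s) y :=
      cross_low hcr hy (hds.2 u hdu.1 (Ne.symm hne))
    have h2 : nuLt x (crossPt (f.coeff u) u (f.coeff s) s) :=
      cross_high hcr hx (hdu.2 s hds.1 hne)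
    exact nuLt_irrefl (nuLt_trans (nuLt_trans h1 hyx) h2)

theorem climb_up_aux {f : F[X]} {x : F} (hx : tangible x) (hgx : ghost (f.eval x)) :
    ∀ n : ℕ, ∀ y : F, ∀ s : ℕ, tangible y → nuLt y x → DomAt f y s →
      tangible (f.coeff s) → f.natDegree - s ≤ n →
      ∃ θ : F, tangible θ ∧ ghost (f.eval θ) ∧ nuLt y θ ∧ nuLe θ x ∧
        ∃ i j : ℕ, i ∈ f.support ∧ j ∈ f.support ∧ i < j ∧
          IsCross (f.coeff i) i (f.coeff j) j θ := by
  intro n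
  induction n using Nat.strong_induction_on with
  | _ n ih =>
    intro y s hy hyx hds htcs hmeas
    have hf : f ≠ 0 := by
      intro e
      have := hds.1
      rw [e] at this
      simp at this
    obtain ⟨i₀, hi₀, hmax⟩ := exists_max_trm hf x
    rcases Classical.em (∃ j ∈ f.support, j ≠ i₀ ∧ nu (trm f x j) = nu (trm f x i₀))
      with htie | hstrict
    · obtain ⟨j, hj, hjne, hje⟩ := htie
      rcases Nat.lt_or_ge j i₀ with hlt | hge
      · have hcr := crossPt_spec (Polynomial.mem_support_iff.mp hj)
          (Polynomial.mem_support_iff.mp hi₀) hlt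
        have hxe : nu x = nu (crossPt (f.coeff j) j (f.coeff i₀) i₀) :=
          cross_eq hcr hx hje
        exact ⟨_, hcr.1, ghost_eval_congr hx hcr.1 hxe hgx, nuLt_congr_right hxe hyx,
          nuLe_of_nu_eq hxe.symm, j, i₀, hj, hi₀, hlt, hcr⟩
      · have hlt : i₀ < j := by omega
        have hcr := crossPt_spec (Polynomial.mem_support_iff.mp hi₀)
          (Polynomial.mem_support_iff.mp hj) hlt
        have hxe : nu x = nu (crossPt (f.coeff i₀) i₀ (f.coeff j) j) :=
          cross_eq hcr hx hje.symm
        exact ⟨_, hcr.1, ghost_eval_congr hx hcr.1 hxe hgx, nuLt_congr_right hxe hyx,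
          nuLe_of_nu_eq hxe.symm, i₀, j, hi₀, hj, hlt, hcr⟩
    · have hstrict' : ∀ j ∈ f.support, j ≠ i₀ → nu (trm f x j) ≠ nu (trm f x i₀) := by
        intro j hj hne he
        exact hstrict ⟨j, hj, hne, he⟩
      have hdx : DomAt f x i₀ := ⟨hi₀, fun j hj hne => ⟨hmax j hj, hstrict' j hj hne⟩⟩
      have hgc : ghost (f.coeff i₀) := by
        by_contra htc
        exact ((tang_eval_iff hf hx).mpr ⟨i₀, hdx, htc⟩) hgx
      have hsne : s ≠ i₀ := fun e => (e ▸ htcs) hgc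
      have hslt : s < i₀ := dom_lt_of_dom hy hx hyx hds hdx hsne
      have hcr := crossPt_spec (Polynomial.mem_support_iff.mp hds.1)
        (Polynomial.mem_support_iff.mp hi₀) hslt
      set θc := crossPt (f.coeff s) s (f.coeff i₀) i₀ with hθcdef
      have hyθ : nuLt y θc := cross_high hcr hy (hds.2 i₀ hi₀ (Ne.symm hsne))
      have hθx : nuLt θc x := cross_low hcr hx (hdx.2 s hds.1 hsne)
      rcases Classical.em (ghost (f.eval θc)) with hgθ | htθ
      · exact ⟨θc, hcr.1, hgθ, hyθ, nuLe_of_nuLt hθx, s, i₀, hds.1, hi₀, hslt, hcr⟩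
      · obtain ⟨u, hdu, htcu⟩ := (tang_eval_iff hf hcr.1).mp htθ
        have hune : u ≠ s := by
          intro e
          subst e
          have h1 := hdu.2 i₀ hi₀ (Ne.symm hsne)
          have h2 : nu (trm f θc u) = nu (trm f θc i₀) := (hcr.2 θc hcr.1).2.1 rfl
          exact h1.2 h2.symm
        have hsu : s < u := dom_lt_of_dom hy hcr.1 hyθ hds hdu (Ne.symm hune)
        have hud : u ≤ f.natDegree := Polynomial.le_natDegree_of_mem_supp u hdu.1
        obtain ⟨θ, htθ2, hgθ2, hltθ2, hleθ2, hcrθ2⟩ :=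
          ih (f.natDegree - u) (by omega) θc u hcr.1 hθx hdu htcu (le_refl _)
        exact ⟨θ, htθ2, hgθ2, nuLt_trans hyθ hltθ2, hleθ2, hcrθ2⟩

theorem climb_up {f : F[X]} {y x : F} (hy : tangible y) (hx : tangible x) (hyx : nuLt y x)
    (hty : tangible (f.eval y)) (hgx : ghost (f.eval x)) :
    ∃ θ : F, tangible θ ∧ ghost (f.eval θ) ∧ nuLt y θ ∧ nuLe θ x ∧
      ∃ i j : ℕ, i ∈ f.support ∧ j ∈ f.support ∧ i < j ∧
        IsCross (f.coeff i) i (f.coeff j) j θ := by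
  have hf : f ≠ 0 := by
    intro e; rw [e] at hty; simp at hty; exact hty gh_zero
  obtain ⟨s, hds, htc⟩ := (tang_eval_iff hf hy).mp hty
  exact climb_up_aux hx hgx f.natDegree y s hy hyx hds htc (by omega)

theorem climb_down_aux {f : F[X]} {x : F} (hx : tangible x) (hgx : ghost (f.eval x)) :
    ∀ n : ℕ, ∀ y : F, ∀ s : ℕ, tangible y → nuLt x y → DomAt f y s →
      tangible (f.coeff s) → s ≤ n →
      ∃ θ : F, tangible θ ∧ ghost (f.eval θ) ∧ nuLe x θ ∧ nuLt θ y ∧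
        ∃ i j : ℕ, i ∈ f.support ∧ j ∈ f.support ∧ i < j ∧
          IsCross (f.coeff i) i (f.coeff j) j θ := by
  intro n
  induction n using Nat.strong_induction_on with
  | _ n ih =>
    intro y s hy hxy hds htcs hmeas
    have hf : f ≠ 0 := by
      intro e
      have := hds.1
      rw [e] at this
      simp at this
    obtain ⟨i₀, hi₀, hmax⟩ := exists_max_trm hf x
    rcases Classical.em (∃ j ∈ f.support, j ≠ i₀ ∧ nu (trm f x j) = nu (trm f x i₀))
      with htie | hstrict
    · obtain ⟨j, hj, hjne, hje⟩ := htie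
      rcases Nat.lt_or_ge j i₀ with hlt | hge
      · have hcr := crossPt_spec (Polynomial.mem_support_iff.mp hj)
          (Polynomial.mem_support_iff.mp hi₀) hlt
        have hxe : nu x = nu (crossPt (f.coeff j) j (f.coeff i₀) i₀) :=
          cross_eq hcr hx hje
        exact ⟨_, hcr.1, ghost_eval_congr hx hcr.1 hxe hgx, nuLe_of_nu_eq hxe,
          nuLt_congr_left hxe hxy, j, i₀, hj, hi₀, hlt, hcr⟩
      · have hlt : i₀ < j := by omega
        have hcr := crossPt_spec (Polynomial.mem_support_iff.mp hi₀)
          (Polynomial.mem_support_iff.mp hj) hlt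
        have hxe : nu x = nu (crossPt (f.coeff i₀) i₀ (f.coeff j) j) :=
          cross_eq hcr hx hje.symm
        exact ⟨_, hcr.1, ghost_eval_congr hx hcr.1 hxe hgx, nuLe_of_nu_eq hxe,
          nuLt_congr_left hxe hxy, i₀, j, hi₀, hj, hlt, hcr⟩
    · have hstrict' : ∀ j ∈ f.support, j ≠ i₀ → nu (trm f x j) ≠ nu (trm f x i₀) := by
        intro j hj hne he
        exact hstrict ⟨j, hj, hne, he⟩
      have hdx : DomAt f x i₀ := ⟨hi₀, fun j hj hne => ⟨hmax j hj, hstrict' j hj hne⟩⟩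
      have hgc : ghost (f.coeff i₀) := by
        by_contra htc
        exact ((tang_eval_iff hf hx).mpr ⟨i₀, hdx, htc⟩) hgx
      have hsne : i₀ ≠ s := fun e => (e ▸ htcs) hgc
      have hslt : i₀ < s := dom_lt_of_dom hx hy hxy hdx hds hsne
      have hcr := crossPt_spec (Polynomial.mem_support_iff.mp hi₀)
        (Polynomial.mem_support_iff.mp hds.1) hslt
      set θc := crossPt (f.coeff i₀) i₀ (f.coeff s) s with hθcdef
      have hxθ : nuLt x θc := cross_high hcr hx (hdx.2 s hds.1 (Ne.symm hsne))
      have hθy : nuLt θc y := cross_low hcr hy (hds.2 i₀ hi₀ hsne)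
      rcases Classical.em (ghost (f.eval θc)) with hgθ | htθ
      · exact ⟨θc, hcr.1, hgθ, nuLe_of_nuLt hxθ, hθy, i₀, s, hi₀, hds.1, hslt, hcr⟩
      · obtain ⟨u, hdu, htcu⟩ := (tang_eval_iff hf hcr.1).mp htθ
        have hune : u ≠ s := by
          intro e
          subst e
          have h1 := hdu.2 i₀ hi₀ hsne
          have h2 : nu (trm f θc i₀) = nu (trm f θc u) := (hcr.2 θc hcr.1).2.1 rfl
          exact h1.2 h2
        have hsu : u < s := dom_lt_of_dom hcr.1 hy hθy hdu hds hune
        obtain ⟨θ, htθ2, hgθ2, hleθ2, hltθ2, hcrθ2⟩ :=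
          ih u (by omega) θc u hcr.1 hxθ hdu htcu (le_refl _)
        exact ⟨θ, htθ2, hgθ2, hleθ2, nuLt_trans hltθ2 hθy, hcrθ2⟩

theorem climb_down {f : F[X]} {x y : F} (hx : tangible x) (hy : tangible y) (hxy : nuLt x y)
    (hgx : ghost (f.eval x)) (hty : tangible (f.eval y)) :
    ∃ θ : F, tangible θ ∧ ghost (f.eval θ) ∧ nuLe x θ ∧ nuLt θ y ∧
      ∃ i j : ℕ, i ∈ f.support ∧ j ∈ f.support ∧ i < j ∧
        IsCross (f.coeff i) i (f.coeff j) j θ := by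
  have hf : f ≠ 0 := by
    intro e; rw [e] at hty; simp at hty; exact hty gh_zero
  obtain ⟨s, hds, htc⟩ := (tang_eval_iff hf hy).mp hty
  exact climb_down_aux hx hgx s y s hy hxy hds htc (le_refl _)

end Climb

section Structure
variable {F : Type*} [STDivSemifield F]
open Polynomial
open scoped Classical

theorem unidom {g : F[X]} :
    ∀ n : ℕ, ∀ p q : F, ∀ k₁ k₂ : ℕ, tangible p → tangible q → nuLt p q →
      (∀ z : F, tangible z → nuLe p z → nuLe z q → tangible (g.eval z)) →
      DomAt g p k₁ → DomAt g q k₂ → k₂ - k₁ ≤ n → k₁ = k₂ := by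
  intro n
  induction n using Nat.strong_induction_on with
  | _ n ih =>
    intro p q k₁ k₂ hp hq hpq hall hd1 hd2 hmeas
    by_contra hne
    have hg : g ≠ 0 := by
      intro e; have := hd1.1; rw [e] at this; simp at this
    have hlt : k₁ < k₂ := dom_lt_of_dom hp hq hpq hd1 hd2 hne
    have hcr := crossPt_spec (Polynomial.mem_support_iff.mp hd1.1)
      (Polynomial.mem_support_iff.mp hd2.1) hlt
    set θ := crossPt (g.coeff k₁) k₁ (g.coeff k₂) k₂ with hθdef
    have hpθ : nuLt p θ := cross_high hcr hp (hd1.2 k₂ hd2.1 (Ne.symm hne))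
    have hθq : nuLt θ q := cross_low hcr hq (hd2.2 k₁ hd1.1 hne)
    have htθ : tangible (g.eval θ) :=
      hall θ hcr.1 (nuLe_of_nuLt hpθ) (nuLe_of_nuLt hθq)
    obtain ⟨u, hdu, _⟩ := (tang_eval_iff hg hcr.1).mp htθ
    have hu1 : u ≠ k₁ := by
      intro e; subst e
      have h1 := hdu.2 k₂ hd2.1 (Ne.symm hne)
      have h2 : nu (trm g θ u) = nu (trm g θ k₂) := (hcr.2 θ hcr.1).2.1 rfl
      exact h1.2 h2.symm
    have hku : k₁ < u := dom_lt_of_dom hp hcr.1 hpθ hd1 hdu (fun e => hu1 e.symm)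
    have hu2 : u < k₂ := dom_lt_of_dom hcr.1 hq hθq hdu hd2 (by
      intro e; subst e
      have h1 := hdu.2 k₁ hd1.1 (fun e2 => hu1 e2.symm)
      have h2 : nu (trm g θ k₁) = nu (trm g θ u) := (hcr.2 θ hcr.1).2.1 rfl
      exact h1.2 h2)
    have := ih (u - k₁) (by omega) p θ k₁ u hp hcr.1 hpθ
      (fun z hz h1 h2 => hall z hz h1 (nuLe_trans h2 (nuLe_of_nuLt hθq)))
      hd1 hdu (le_refl _)
    exact hu1 this.symm

theorem unidom' {g : F[X]} {p q : F} {k₁ k₂ : ℕ} (hp : tangible p) (hq : tangible q)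
    (hpq : nuLt p q)
    (hall : ∀ z : F, tangible z → nuLe p z → nuLe z q → tangible (g.eval z))
    (hd1 : DomAt g p k₁) (hd2 : DomAt g q k₂) : k₁ = k₂ :=
  unidom (k₂ - k₁) p q k₁ k₂ hp hq hpq hall hd1 hd2 (le_refl _)

/-- the finite set of all crossing points of pairs of monomials of `f` and `g` -/
noncomputable def thetaSet (f g : F[X]) : Finset F :=
  ((f.support ∪ g.support) ×ˢ (f.support ∪ g.support)).biUnion fun ij =>
    {crossPt (f.coeff ij.1) ij.1 (f.coeff ij.2) ij.2,
     crossPt (f.coeff ij.1) ij.1 (g.coeff ij.2) ij.2,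
     crossPt (g.coeff ij.1) ij.1 (f.coeff ij.2) ij.2,
     crossPt (g.coeff ij.1) ij.1 (g.coeff ij.2) ij.2}

theorem mem_thetaSet_ff {f g : F[X]} {i j : ℕ} (hi : i ∈ f.support) (hj : j ∈ f.support) :
    crossPt (f.coeff i) i (f.coeff j) j ∈ thetaSet f g := by
  unfold thetaSet
  apply Finset.mem_biUnion.mpr
  refine ⟨(i, j), Finset.mem_product.mpr ⟨Finset.mem_union_left _ hi,
    Finset.mem_union_left _ hj⟩, ?_⟩
  simp

theorem mem_thetaSet_gg {f g : F[X]} {i j : ℕ} (hi : i ∈ g.support) (hj : j ∈ g.support) :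
    crossPt (g.coeff i) i (g.coeff j) j ∈ thetaSet f g := by
  unfold thetaSet
  apply Finset.mem_biUnion.mpr
  refine ⟨(i, j), Finset.mem_product.mpr ⟨Finset.mem_union_right _ hi,
    Finset.mem_union_right _ hj⟩, ?_⟩
  simp

theorem mem_thetaSet_fg {f g : F[X]} {i j : ℕ} (hi : i ∈ f.support) (hj : j ∈ g.support) :
    crossPt (f.coeff i) i (g.coeff j) j ∈ thetaSet f g := by
  unfold thetaSet
  apply Finset.mem_biUnion.mpr
  refine ⟨(i, j), Finset.mem_product.mpr ⟨Finset.mem_union_left _ hi,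
    Finset.mem_union_right _ hj⟩, ?_⟩
  simp

theorem mem_thetaSet_gf {f g : F[X]} {i j : ℕ} (hi : i ∈ g.support) (hj : j ∈ f.support) :
    crossPt (g.coeff i) i (f.coeff j) j ∈ thetaSet f g := by
  unfold thetaSet
  apply Finset.mem_biUnion.mpr
  refine ⟨(i, j), Finset.mem_product.mpr ⟨Finset.mem_union_right _ hi,
    Finset.mem_union_left _ hj⟩, ?_⟩
  simp

theorem dom_top {f g : F[X]} (hf : f ≠ 0) {x : F} (hx : tangible x)
    (hbeyond : ∀ θ ∈ thetaSet f g, nuLt θ x) : DomAt f x f.natDegree := by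
  refine ⟨Polynomial.natDegree_mem_support_of_nonzero hf, ?_⟩
  intro j hj hne
  have hjlt : j < f.natDegree :=
    lt_of_le_of_ne (Polynomial.le_natDegree_of_mem_supp j hj) hne
  have hcr := crossPt_spec (Polynomial.mem_support_iff.mp hj)
    (Polynomial.mem_support_iff.mp (Polynomial.natDegree_mem_support_of_nonzero hf)) hjlt
  exact (hcr.2 x hx).2.2 (hbeyond _ (mem_thetaSet_ff hj
    (Polynomial.natDegree_mem_support_of_nonzero hf)))

theorem dom_top' {f g : F[X]} (hg : g ≠ 0) {x : F} (hx : tangible x)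
    (hbeyond : ∀ θ ∈ thetaSet f g, nuLt θ x) : DomAt g x g.natDegree := by
  refine ⟨Polynomial.natDegree_mem_support_of_nonzero hg, ?_⟩
  intro j hj hne
  have hjlt : j < g.natDegree :=
    lt_of_le_of_ne (Polynomial.le_natDegree_of_mem_supp j hj) hne
  have hcr := crossPt_spec (Polynomial.mem_support_iff.mp hj)
    (Polynomial.mem_support_iff.mp (Polynomial.natDegree_mem_support_of_nonzero hg)) hjlt
  exact (hcr.2 x hx).2.2 (hbeyond _ (mem_thetaSet_gg hj
    (Polynomial.natDegree_mem_support_of_nonzero hg)))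

theorem dom_bot {f g : F[X]} (hf : f ≠ 0) {x : F} (hx : tangible x)
    (hbelow : ∀ θ ∈ thetaSet f g, nuLt x θ) : DomAt f x f.natTrailingDegree := by
  refine ⟨Polynomial.natTrailingDegree_mem_support_of_nonzero hf, ?_⟩
  intro j hj hne
  have hjlt : f.natTrailingDegree < j :=
    lt_of_le_of_ne (Polynomial.natTrailingDegree_le_of_mem_supp j hj) (Ne.symm hne)
  have hcr := crossPt_spec
    (Polynomial.mem_support_iff.mp (Polynomial.natTrailingDegree_mem_support_of_nonzero hf))
    (Polynomial.mem_support_iff.mp hj) hjlt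
  exact (hcr.2 x hx).1 (hbelow _ (mem_thetaSet_ff
    (Polynomial.natTrailingDegree_mem_support_of_nonzero hf) hj))

theorem dom_bot' {f g : F[X]} (hg : g ≠ 0) {x : F} (hx : tangible x)
    (hbelow : ∀ θ ∈ thetaSet f g, nuLt x θ) : DomAt g x g.natTrailingDegree := by
  refine ⟨Polynomial.natTrailingDegree_mem_support_of_nonzero hg, ?_⟩
  intro j hj hne
  have hjlt : g.natTrailingDegree < j :=
    lt_of_le_of_ne (Polynomial.natTrailingDegree_le_of_mem_supp j hj) (Ne.symm hne)
  have hcr := crossPt_spec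
    (Polynomial.mem_support_iff.mp (Polynomial.natTrailingDegree_mem_support_of_nonzero hg))
    (Polynomial.mem_support_iff.mp hj) hjlt
  exact (hcr.2 x hx).1 (hbelow _ (mem_thetaSet_gg
    (Polynomial.natTrailingDegree_mem_support_of_nonzero hg) hj))

theorem density {x y : F} (hx : tangible x) (hy : tangible y) (hxy : nuLt x y) :
    ∃ z : F, tangible z ∧ nuLt x z ∧ nuLt z y := by
  obtain ⟨z, hz2, hzt⟩ := STDivSemifield.divisible (x * y) 2 (by omega)
  have hz : tangible z := hzt (STSemifield.tangible_mul _ _ hx hy)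
  have hx0 : x ≠ 0 := tang_ne_zero hx
  have hy0 : y ≠ 0 := tang_ne_zero hy
  refine ⟨z, hz, ?_, ?_⟩
  · rcases nuLe_or_nuLt z x with h | h
    · exfalso
      have h2 := nuLe_pow h 2
      rw [hz2] at h2
      have h3 : nuLe (y * x) (x * x) := by
        have e1 : x * y = y * x := mul_comm x y
        have e2 : x ^ 2 = x * x := pow_two x
        rw [← e1, ← e2]; exact h2
      exact (nuLt_iff.mp hxy) (nuLe_cancel_right hx0 h3)
    · exact h
  · rcases nuLe_or_nuLt y z with h | h
    · exfalso
      have h2 := nuLe_pow h 2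
      rw [hz2] at h2
      have h3 : nuLe (y * y) (x * y) := by
        have e2 : y ^ 2 = y * y := pow_two y
        rw [← e2]; exact h2
      exact (nuLt_iff.mp hxy) (nuLe_cancel_right hy0 h3)
    · exact h

theorem exists_gt_one_unit {t : F} (ht : tangible t) (htn : nu t ≠ nu 1) :
    ∃ u : F, tangible u ∧ nuLt 1 u := by
  rcases nu_trichot 1 t with h | h | h
  · exact ⟨t, ht, h⟩
  · exact absurd h.symm htn
  · obtain ⟨s, hs, hst⟩ := STSemifield.tangible_inv t ht
    refine ⟨s, hs, ?_⟩
    rcases nuLe_or_nuLt s 1 with h2 | h2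
    · exfalso
      have h3 := nuLe_mul_right t h2
      rw [one_mul] at h3
      have h4 : s * t = 1 := by rw [mul_comm]; exact hst
      rw [h4] at h3
      exact (nuLt_iff.mp h) h3
    · exact h2

theorem exists_lt_one_unit {u : F} (hu : tangible u) (hu1 : nuLt 1 u) :
    ∃ v : F, tangible v ∧ nuLt v 1 := by
  obtain ⟨s, hs, hst⟩ := STSemifield.tangible_inv u hu
  refine ⟨s, hs, ?_⟩
  rcases nuLe_or_nuLt 1 s with h2 | h2
  · exfalso
    have h3 := nuLe_mul_right u h2
    rw [one_mul] at h3
    have h4 : s * u = 1 := by rw [mul_comm]; exact hst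
    rw [h4] at h3
    exact (nuLt_iff.mp hu1) h3
  · exact h2

theorem exists_beyond_up {u : F} (hu : tangible u) (hu1 : nuLt 1 u) (S : Finset F) :
    ∃ x : F, tangible x ∧ ∀ θ ∈ S, nuLt θ x := by
  rcases S.eq_empty_or_nonempty with he | hne
  · exact ⟨1, tang_one, by simp [he]⟩
  · obtain ⟨m, hm, hmax⟩ := exists_max hne id
    rcases Classical.em (m = (0 : F)) with h0 | h0
    · refine ⟨1, tang_one, fun θ hθ => ?_⟩
      have h1 : nuLe θ m := hmax θ hθ
      rw [h0] at h1
      have h2 : nu θ = 0 := by rw [nuLe, nu_zero, add_zero] at h1; exact h1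
      rw [nu_eq_zero_iff.mp h2]
      exact zero_nuLt one_ne_zero'
    · obtain ⟨t, ht, htn⟩ := exists_tang_lift h0
      refine ⟨t * u, STSemifield.tangible_mul _ _ ht hu, fun θ hθ => ?_⟩
      have h1 : nuLe θ t := nuLe_congr_right htn.symm (hmax θ hθ)
      have h2 : nuLt (1 * t) (u * t) := nuLt_mul_right (tang_ne_zero ht) hu1
      rw [one_mul, mul_comm u t] at h2
      exact nuLt_of_nuLe_of_nuLt h1 h2

theorem exists_min {ι : Type*} {s : Finset ι} (hs : s.Nonempty) (v : ι → F) :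
    ∃ i ∈ s, ∀ j ∈ s, nuLe (v i) (v j) := by
  classical
  induction s using Finset.induction_on with
  | empty => exact absurd hs (by simp)
  | @insert a s' hx ih =>
    rcases s'.eq_empty_or_nonempty with he | he
    · subst he
      exact ⟨a, Finset.mem_insert_self a _, by
        intro j hj
        rcases Finset.mem_insert.mp hj with h | h
        · subst h; exact nuLe_refl _
        · exact absurd h (Finset.notMem_empty j)⟩
    · obtain ⟨i, hi, hmin⟩ := ih he
      rcases nuLe_total (v a) (v i) with h | h
      · refine ⟨a, Finset.mem_insert_self a _, ?_⟩
        intro j hj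
        rcases Finset.mem_insert.mp hj with h' | h'
        · subst h'; exact nuLe_refl _
        · exact nuLe_trans h (hmin j h')
      · refine ⟨i, Finset.mem_insert_of_mem hi, ?_⟩
        intro j hj
        rcases Finset.mem_insert.mp hj with h' | h'
        · subst h'; exact h
        · exact hmin j h'

theorem exists_beyond_down {u : F} (hu : tangible u) (hu1 : nuLt 1 u) (S : Finset F)
    (hS : ∀ θ ∈ S, θ ≠ 0) : ∃ x : F, tangible x ∧ ∀ θ ∈ S, nuLt x θ := by
  obtain ⟨v, hv, hv1⟩ := exists_lt_one_unit hu hu1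
  rcases S.eq_empty_or_nonempty with he | hne
  · exact ⟨1, tang_one, by simp [he]⟩
  · obtain ⟨m, hm, hmin⟩ := exists_min hne id
    obtain ⟨t, ht, htn⟩ := exists_tang_lift (hS m hm)
    refine ⟨t * v, STSemifield.tangible_mul _ _ ht hv, fun θ hθ => ?_⟩
    have h1 : nuLe t θ := by
      have := hmin θ hθ
      exact nuLe_congr_left htn.symm this
    have h2 : nuLt (v * t) (1 * t) := nuLt_mul_right (tang_ne_zero ht) hv1
    rw [one_mul, mul_comm v t] at h2
    exact nuLt_of_nuLt_of_nuLe h2 h1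

theorem exists_window_below {u : F} (hu : tangible u) (hu1 : nuLt 1 u) (S : Finset F)
    {p : F} (hp : tangible p) :
    ∃ w : F, tangible w ∧ nuLt w p ∧ ∀ θ ∈ S, nuLt θ w ∨ ¬ nuLt θ p := by
  classical
  obtain ⟨v, hv, hv1⟩ := exists_lt_one_unit hu hu1
  set T := S.filter (fun θ => nuLt θ p) with hT
  have hwp : nuLt (p * v) p := by
    have h2 : nuLt (v * p) (1 * p) := nuLt_mul_right (tang_ne_zero hp) hv1
    rw [one_mul, mul_comm v p] at h2
    exact h2
  rcases T.eq_empty_or_nonempty with he | hne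
  · refine ⟨p * v, STSemifield.tangible_mul _ _ hp hv, hwp, fun θ hθ => ?_⟩
    right
    intro hcon
    have : θ ∈ T := Finset.mem_filter.mpr ⟨hθ, hcon⟩
    rw [he] at this
    exact Finset.notMem_empty θ this
  · obtain ⟨m, hm, hmax⟩ := exists_max hne id
    have hmp : nuLt m p := (Finset.mem_filter.mp hm).2
    rcases Classical.em (m = (0 : F)) with h0 | h0
    · refine ⟨p * v, STSemifield.tangible_mul _ _ hp hv, hwp, fun θ hθ => ?_⟩
      rcases Classical.em (nuLt θ p) with hc | hc
      · left
        have h1 : nuLe θ m := hmax θ (Finset.mem_filter.mpr ⟨hθ, hc⟩)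
        rw [h0] at h1
        have h2 : nu θ = 0 := by rw [nuLe, nu_zero, add_zero] at h1; exact h1
        rw [nu_eq_zero_iff.mp h2]
        exact zero_nuLt (mul_ne_zero' (tang_ne_zero hp) (tang_ne_zero hv))
      · right; exact hc
    · obtain ⟨t, ht, htn⟩ := exists_tang_lift h0
      have htp : nuLt t p := nuLt_congr_left htn.symm hmp
      obtain ⟨w, hw, htw, hwp'⟩ := density ht hp htp
      refine ⟨w, hw, hwp', fun θ hθ => ?_⟩
      rcases Classical.em (nuLt θ p) with hc | hc
      · left
        have h1 : nuLe θ t := nuLe_congr_right htn.symm (hmax θ (Finset.mem_filter.mpr ⟨hθ, hc⟩))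
        exact nuLt_of_nuLe_of_nuLt h1 htw
      · right; exact hc

theorem exists_window_above {u : F} (hu : tangible u) (hu1 : nuLt 1 u) (S : Finset F)
    {p : F} (hp : tangible p) :
    ∃ w : F, tangible w ∧ nuLt p w ∧ ∀ θ ∈ S, nuLt w θ ∨ ¬ nuLt p θ := by
  classical
  set T := S.filter (fun θ => nuLt p θ) with hT
  have hwp : nuLt p (p * u) := by
    have h2 : nuLt (1 * p) (u * p) := nuLt_mul_right (tang_ne_zero hp) hu1
    rw [one_mul, mul_comm u p] at h2
    exact h2
  rcases T.eq_empty_or_nonempty with he | hne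
  · refine ⟨p * u, STSemifield.tangible_mul _ _ hp hu, hwp, fun θ hθ => ?_⟩
    right
    intro hcon
    have : θ ∈ T := Finset.mem_filter.mpr ⟨hθ, hcon⟩
    rw [he] at this
    exact Finset.notMem_empty θ this
  · obtain ⟨m, hm, hmin⟩ := exists_min hne id
    have hmp : nuLt p m := (Finset.mem_filter.mp hm).2
    have h0 : m ≠ 0 := ne_zero_of_nuLt hmp
    obtain ⟨t, ht, htn⟩ := exists_tang_lift h0
    have htp : nuLt p t := nuLt_congr_right htn.symm hmp
    obtain ⟨w, hw, hpw, hwt⟩ := density hp ht htp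
    refine ⟨w, hw, hpw, fun θ hθ => ?_⟩
    rcases Classical.em (nuLt p θ) with hc | hc
    · left
      have h1 : nuLe t θ := nuLe_congr_left htn.symm (hmin θ (Finset.mem_filter.mpr ⟨hθ, hc⟩))
      exact nuLt_of_nuLt_of_nuLe hwt h1
    · right; exact hc

theorem thetaSet_tangible {f g : F[X]} {θ : F} (h : θ ∈ thetaSet f g) : tangible θ := by
  unfold thetaSet at h
  obtain ⟨ij, _, hmem⟩ := Finset.mem_biUnion.mp h
  simp only [Finset.mem_insert, Finset.mem_singleton] at hmem
  rcases hmem with h | h | h | h <;> (subst h; exact crossPt_tang _ _ _ _)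

theorem nuLe_split {x y : F} (h : nuLe x y) : nuLt x y ∨ nu x = nu y := by
  rcases Classical.em (nu x = nu y) with e | e
  · exact Or.inr e
  · exact Or.inl ⟨h, e⟩

theorem nuLt_asymm {x y : F} (h : nuLt x y) (h' : nuLt y x) : False :=
  nuLt_irrefl (nuLt_trans h h')

theorem trm_coeff_congr {f g : F[X]} {k : ℕ} (h : nu (f.coeff k) = nu (g.coeff k)) (x : F) :
    nu (trm f x k) = nu (trm g x k) := by
  rw [trm, trm, ← nu_mul_nu, ← nu_mul_nu, h]

theorem trm_cancel {f g : F[X]} {k : ℕ} {x : F} (hx : x ≠ 0)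
    (h : nuLe (trm f x k) (trm g x k)) : nuLe (f.coeff k) (g.coeff k) :=
  nuLe_cancel_right (pow_ne_zero' hx k) h

theorem dom_persist_down {f g : F[X]} {p w : F} (hp : tangible p) (hw : tangible w)
    (hwp : nuLt w p) {k : ℕ} (hd : DomAt g p k)
    (hwin : ∀ θ ∈ thetaSet f g, nuLt θ w ∨ ¬ nuLt θ p) : DomAt g w k := by
  refine ⟨hd.1, ?_⟩
  intro l hl hlk
  rcases Nat.lt_or_ge l k with h | h
  · have hcr := crossPt_spec (Polynomial.mem_support_iff.mp hl)
      (Polynomial.mem_support_iff.mp hd.1) h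
    have hθp : nuLt (crossPt (g.coeff l) l (g.coeff k) k) p :=
      cross_low hcr hp (hd.2 l hl hlk)
    have hθw : nuLt (crossPt (g.coeff l) l (g.coeff k) k) w := by
      rcases hwin _ (mem_thetaSet_gg hl hd.1) with h2 | h2
      · exact h2
      · exact absurd hθp h2
    exact (hcr.2 w hw).2.2 hθw
  · have hkl : k < l := by omega
    have hcr := crossPt_spec (Polynomial.mem_support_iff.mp hd.1)
      (Polynomial.mem_support_iff.mp hl) hkl
    have hpθ : nuLt p (crossPt (g.coeff k) k (g.coeff l) l) :=
      cross_high hcr hp (hd.2 l hl hlk)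
    exact (hcr.2 w hw).1 (nuLt_trans hwp hpθ)

theorem dom_persist_up {f g : F[X]} {q w : F} (hq : tangible q) (hw : tangible w)
    (hqw : nuLt q w) {k : ℕ} (hd : DomAt g q k)
    (hwin : ∀ θ ∈ thetaSet f g, nuLt w θ ∨ ¬ nuLt q θ) : DomAt g w k := by
  refine ⟨hd.1, ?_⟩
  intro l hl hlk
  rcases Nat.lt_or_ge l k with h | h
  · have hcr := crossPt_spec (Polynomial.mem_support_iff.mp hl)
      (Polynomial.mem_support_iff.mp hd.1) h
    have hθq : nuLt (crossPt (g.coeff l) l (g.coeff k) k) q :=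
      cross_low hcr hq (hd.2 l hl hlk)
    exact (hcr.2 w hw).2.2 (nuLt_trans hθq hqw)
  · have hkl : k < l := by omega
    have hcr := crossPt_spec (Polynomial.mem_support_iff.mp hd.1)
      (Polynomial.mem_support_iff.mp hl) hkl
    have hqθ : nuLt q (crossPt (g.coeff k) k (g.coeff l) l) :=
      cross_high hcr hq (hd.2 l hl hlk)
    have hwθ : nuLt w (crossPt (g.coeff k) k (g.coeff l) l) := by
      rcases hwin _ (mem_thetaSet_gg hd.1 hl) with h2 | h2
      · exact h2
      · exact absurd hqθ h2
    exact (hcr.2 w hw).1 hwθ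

theorem dom_persist_down_f {f g : F[X]} {p w : F} (hp : tangible p) (hw : tangible w)
    (hwp : nuLt w p) {k : ℕ} (hd : DomAt f p k)
    (hwin : ∀ θ ∈ thetaSet f g, nuLt θ w ∨ ¬ nuLt θ p) : DomAt f w k := by
  refine ⟨hd.1, ?_⟩
  intro l hl hlk
  rcases Nat.lt_or_ge l k with h | h
  · have hcr := crossPt_spec (Polynomial.mem_support_iff.mp hl)
      (Polynomial.mem_support_iff.mp hd.1) h
    have hθp : nuLt (crossPt (f.coeff l) l (f.coeff k) k) p :=
      cross_low hcr hp (hd.2 l hl hlk)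
    have hθw : nuLt (crossPt (f.coeff l) l (f.coeff k) k) w := by
      rcases hwin _ (mem_thetaSet_ff hl hd.1) with h2 | h2
      · exact h2
      · exact absurd hθp h2
    exact (hcr.2 w hw).2.2 hθw
  · have hkl : k < l := by omega
    have hcr := crossPt_spec (Polynomial.mem_support_iff.mp hd.1)
      (Polynomial.mem_support_iff.mp hl) hkl
    have hpθ : nuLt p (crossPt (f.coeff k) k (f.coeff l) l) :=
      cross_high hcr hp (hd.2 l hl hlk)
    exact (hcr.2 w hw).1 (nuLt_trans hwp hpθ)

theorem dom_persist_up_f {f g : F[X]} {q w : F} (hq : tangible q) (hw : tangible w)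
    (hqw : nuLt q w) {k : ℕ} (hd : DomAt f q k)
    (hwin : ∀ θ ∈ thetaSet f g, nuLt w θ ∨ ¬ nuLt q θ) : DomAt f w k := by
  refine ⟨hd.1, ?_⟩
  intro l hl hlk
  rcases Nat.lt_or_ge l k with h | h
  · have hcr := crossPt_spec (Polynomial.mem_support_iff.mp hl)
      (Polynomial.mem_support_iff.mp hd.1) h
    have hθq : nuLt (crossPt (f.coeff l) l (f.coeff k) k) q :=
      cross_low hcr hq (hd.2 l hl hlk)
    exact (hcr.2 w hw).2.2 (nuLt_trans hθq hqw)
  · have hkl : k < l := by omega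
    have hcr := crossPt_spec (Polynomial.mem_support_iff.mp hd.1)
      (Polynomial.mem_support_iff.mp hl) hkl
    have hqθ : nuLt q (crossPt (f.coeff k) k (f.coeff l) l) :=
      cross_high hcr hq (hd.2 l hl hlk)
    have hwθ : nuLt w (crossPt (f.coeff k) k (f.coeff l) l) := by
      rcases hwin _ (mem_thetaSet_ff hd.1 hl) with h2 | h2
      · exact h2
      · exact absurd hqθ h2
    exact (hcr.2 w hw).1 hwθ

end Structure

section Core
variable {F : Type*} [STDivSemifield F]
open Polynomial
open scoped Classical

theorem core_aux (f g : F[X]) {u : F} (hu : tangible u) (hu1 : nuLt 1 u)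
    (hno' : ∀ z : F, tangible z → ¬(ghost (f.eval z) ∧ ghost (g.eval z)))
    (hgsum : ∀ z : F, ghost (f.eval z + g.eval z)) :
    ∀ n : ℕ, ∀ a b c : F, tangible a → tangible b → tangible c → nuLt a b → nuLt b c →
      tangible (f.eval a) → ghost (f.eval b) → tangible (f.eval c) →
      ((thetaSet f g).filter (fun θ => nuLt a θ ∧ nuLt θ c)).card ≤ n → False := by
  intro n
  induction n using Nat.strong_induction_on with
  | _ n ih =>
    intro a b c ha hb hc hab hbc hfa hfb hfc hmeas
    have H2 : ∀ z : F, tangible z → tangible (f.eval z) → nuLe (f.eval z) (g.eval z) :=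
      fun z _ ht => key_nuLe (hgsum z) ht
    have H3 : ∀ z : F, tangible z → tangible (g.eval z) → nuLe (g.eval z) (f.eval z) := by
      intro z _ ht
      have hgs : ghost (g.eval z + f.eval z) := by rw [add_comm]; exact hgsum z
      exact key_nuLe hgs ht
    have hS1ne : ((thetaSet f g).filter
        (fun θ => ghost (f.eval θ) ∧ nuLt a θ ∧ nuLe θ b)).Nonempty := by
      obtain ⟨θ, hθt, hθg, haθ, hθb, i, j, hi, hj, hij, hcr⟩ := climb_up ha hb hab hfa hfb
      have hcanon := cross_nu_canon (Polynomial.mem_support_iff.mp hi)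
        (Polynomial.mem_support_iff.mp hj) hij hcr
      exact ⟨crossPt (f.coeff i) i (f.coeff j) j, Finset.mem_filter.mpr
        ⟨mem_thetaSet_ff hi hj, ghost_eval_congr hθt (crossPt_tang _ _ _ _) hcanon hθg,
         nuLt_congr_right hcanon haθ, nuLe_congr_left hcanon hθb⟩⟩
    obtain ⟨p, hpmem, hpmin⟩ := exists_min hS1ne id
    have hpfilter := Finset.mem_filter.mp hpmem
    have hpΘ : p ∈ thetaSet f g := hpfilter.1
    have hp : tangible p := thetaSet_tangible hpΘ
    have hgfp : ghost (f.eval p) := hpfilter.2.1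
    have hap : nuLt a p := hpfilter.2.2.1
    have hpb : nuLe p b := hpfilter.2.2.2
    have hintL : ∀ z : F, tangible z → nuLt a z → nuLt z p → tangible (f.eval z) := by
      intro z hz haz hzp
      by_contra hgz
      have hgz' : ghost (f.eval z) := Classical.not_not.mp hgz
      obtain ⟨θ, hθt, hθg, haθ, hθz, i, j, hi, hj, hij, hcr⟩ := climb_up ha hz haz hfa hgz'
      have hcanon := cross_nu_canon (Polynomial.mem_support_iff.mp hi)
        (Polynomial.mem_support_iff.mp hj) hij hcr
      have hmem2 : crossPt (f.coeff i) i (f.coeff j) j ∈ (thetaSet f g).filter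
          (fun θ => ghost (f.eval θ) ∧ nuLt a θ ∧ nuLe θ b) := Finset.mem_filter.mpr
        ⟨mem_thetaSet_ff hi hj, ghost_eval_congr hθt (crossPt_tang _ _ _ _) hcanon hθg,
         nuLt_congr_right hcanon haθ,
         nuLe_congr_left hcanon (nuLe_trans hθz (nuLe_trans (nuLe_of_nuLt hzp) hpb))⟩
      have h1 : nuLe p (crossPt (f.coeff i) i (f.coeff j) j) := hpmin _ hmem2
      have h2 : nuLt (crossPt (f.coeff i) i (f.coeff j) j) p :=
        nuLt_congr_left hcanon (nuLt_of_nuLe_of_nuLt hθz hzp)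
      exact (nuLt_iff.mp h2) h1
    have hS2ne : ((thetaSet f g).filter
        (fun θ => ghost (f.eval θ) ∧ nuLe b θ ∧ nuLt θ c)).Nonempty := by
      obtain ⟨θ, hθt, hθg, hbθ, hθc, i, j, hi, hj, hij, hcr⟩ := climb_down hb hc hbc hfb hfc
      have hcanon := cross_nu_canon (Polynomial.mem_support_iff.mp hi)
        (Polynomial.mem_support_iff.mp hj) hij hcr
      exact ⟨crossPt (f.coeff i) i (f.coeff j) j, Finset.mem_filter.mpr
        ⟨mem_thetaSet_ff hi hj, ghost_eval_congr hθt (crossPt_tang _ _ _ _) hcanon hθg,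
         nuLe_congr_right hcanon hbθ, nuLt_congr_left hcanon hθc⟩⟩
    obtain ⟨q, hqmem, hqmax⟩ := exists_max hS2ne id
    have hqfilter := Finset.mem_filter.mp hqmem
    have hqΘ : q ∈ thetaSet f g := hqfilter.1
    have hq : tangible q := thetaSet_tangible hqΘ
    have hgfq : ghost (f.eval q) := hqfilter.2.1
    have hbq : nuLe b q := hqfilter.2.2.1
    have hqc : nuLt q c := hqfilter.2.2.2
    have hintR : ∀ z : F, tangible z → nuLt q z → nuLt z c → tangible (f.eval z) := by
      intro z hz hqz hzc
      by_contra hgz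
      have hgz' : ghost (f.eval z) := Classical.not_not.mp hgz
      obtain ⟨θ, hθt, hθg, hzθ, hθc, i, j, hi, hj, hij, hcr⟩ := climb_down hz hc hzc hgz' hfc
      have hcanon := cross_nu_canon (Polynomial.mem_support_iff.mp hi)
        (Polynomial.mem_support_iff.mp hj) hij hcr
      have hmem2 : crossPt (f.coeff i) i (f.coeff j) j ∈ (thetaSet f g).filter
          (fun θ => ghost (f.eval θ) ∧ nuLe b θ ∧ nuLt θ c) := Finset.mem_filter.mpr
        ⟨mem_thetaSet_ff hi hj, ghost_eval_congr hθt (crossPt_tang _ _ _ _) hcanon hθg,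
         nuLe_congr_right hcanon (nuLe_trans hbq (nuLe_trans (nuLe_of_nuLt hqz) hzθ)),
         nuLt_congr_left hcanon hθc⟩
      have h1 : nuLe (crossPt (f.coeff i) i (f.coeff j) j) q := hqmax _ hmem2
      have h2 : nuLt q (crossPt (f.coeff i) i (f.coeff j) j) :=
        nuLt_congr_right hcanon (nuLt_of_nuLt_of_nuLe hqz hzθ)
      exact (nuLt_iff.mp h2) h1
    have hpq : nuLe p q := nuLe_trans hpb hbq
    rcases Classical.em (∃ t : F, tangible t ∧ nuLt p t ∧ nuLt t q ∧ tangible (f.eval t))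
      with ⟨t, htt, hpt, htq, hft⟩ | hmid
    · set T := (thetaSet f g).filter (fun θ => nuLt a θ ∧ nuLt θ c) with hT
      set T' := (thetaSet f g).filter (fun θ => nuLt a θ ∧ nuLt θ t) with hT'
      have hsub : T' ⊆ T := by
        intro θ hθ
        have h1 := Finset.mem_filter.mp hθ
        exact Finset.mem_filter.mpr ⟨h1.1, h1.2.1,
          nuLt_trans h1.2.2 (nuLt_trans htq hqc)⟩
      have hqT : q ∈ T := Finset.mem_filter.mpr ⟨hqΘ, nuLt_of_nuLt_of_nuLe hab hbq, hqc⟩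
      have hqT' : q ∉ T' := by
        intro hcon
        exact nuLt_asymm htq (Finset.mem_filter.mp hcon).2.2
      have hcard : T'.card < T.card :=
        Finset.card_lt_card ((Finset.ssubset_iff_of_subset hsub).mpr ⟨q, hqT, hqT'⟩)
      exact ih T'.card (by omega) a p t ha hp htt hap hpt hfa hgfp hft (le_refl _)
    · have hGH : ∀ z : F, tangible z → nuLe p z → nuLe z q → ghost (f.eval z) := by
        intro z hz hpz hzq
        rcases nuLe_split hpz with h1 | h1
        · rcases nuLe_split hzq with h2 | h2
          · by_contra hcon
            exact hmid ⟨z, hz, h1, h2, hcon⟩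
          · exact ghost_eval_congr hq hz h2.symm hgfq
        · exact ghost_eval_congr hp hz h1 hgfp
      have hgt : ∀ z : F, tangible z → nuLe p z → nuLe z q → tangible (g.eval z) := by
        intro z hz h1 h2
        by_contra hcon
        exact hno' z hz ⟨hGH z hz h1 h2, Classical.not_not.mp hcon⟩
      have hgne : g ≠ 0 := by
        intro e
        have h3 := hgt p hp (nuLe_refl p) hpq
        rw [e] at h3; simp at h3; exact h3 gh_zero
      have hfne : f ≠ 0 := by
        intro e; rw [e] at hfa; simp at hfa; exact hfa gh_zero
      obtain ⟨k, hdgp, hkc⟩ := (tang_eval_iff hgne hp).mp (hgt p hp (nuLe_refl p) hpq)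
      have hdgq : DomAt g q k := by
        rcases nuLe_split hpq with h1 | h1
        · obtain ⟨k', hdgq', _⟩ := (tang_eval_iff hgne hq).mp (hgt q hq hpq (nuLe_refl q))
          have he := unidom' hp hq h1 hgt hdgp hdgq'
          rw [he]; exact hdgq'
        · exact domAt_congr h1 hdgp
      obtain ⟨w₀, hw₀, hw₀p, hwin₀⟩ := exists_window_below hu hu1 (thetaSet f g) hp
      obtain ⟨w, hw, hwp, haw, hwin⟩ :
          ∃ w : F, tangible w ∧ nuLt w p ∧ nuLt a w ∧
            ∀ θ ∈ thetaSet f g, nuLt θ w ∨ ¬ nuLt θ p := by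
        rcases nuLe_or_nuLt w₀ a with hcase | hcase
        · obtain ⟨z, hz, haz, hzp⟩ := density ha hp hap
          refine ⟨z, hz, hzp, haz, fun θ hθ => ?_⟩
          rcases hwin₀ θ hθ with h1 | h1
          · left; exact nuLt_trans (nuLt_of_nuLt_of_nuLe h1 hcase) haz
          · right; exact h1
        · exact ⟨w₀, hw₀, hw₀p, hcase, hwin₀⟩
      have hfw : tangible (f.eval w) := hintL w hw haw hwp
      have hdgw : DomAt g w k := dom_persist_down hp hw hwp hdgp hwin
      have hgw : tangible (g.eval w) := (tang_eval_iff hgne hw).mpr ⟨k, hdgw, hkc⟩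
      obtain ⟨w₁, hw₁, hqw₁, hwin₁⟩ := exists_window_above hu hu1 (thetaSet f g) hq
      obtain ⟨w', hw', hqw', hw'c, hwin'⟩ :
          ∃ w' : F, tangible w' ∧ nuLt q w' ∧ nuLt w' c ∧
            ∀ θ ∈ thetaSet f g, nuLt w' θ ∨ ¬ nuLt q θ := by
        rcases nuLe_or_nuLt c w₁ with hcase | hcase
        · obtain ⟨z, hz, hqz, hzc⟩ := density hq hc hqc
          refine ⟨z, hz, hqz, hzc, fun θ hθ => ?_⟩
          rcases hwin₁ θ hθ with h1 | h1
          · left; exact nuLt_trans (nuLt_of_nuLt_of_nuLe hzc hcase) h1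
          · right; exact h1
        · exact ⟨w₁, hw₁, hqw₁, hcase, hwin₁⟩
      have hfw' : tangible (f.eval w') := hintR w' hw' hqw' hw'c
      have hdgw' : DomAt g w' k := dom_persist_up hq hw' hqw' hdgq hwin'
      have hEw : nu (f.eval w) = nu (g.eval w) :=
        nuLe_antisymm (H2 w hw hfw) (H3 w hw hgw)
      obtain ⟨r, hr, hrmax⟩ := exists_max_trm hfne p
      have hnufp : nu (f.eval p) = nu (trm f p r) := nu_eval_max hr hrmax
      have hnuGp : nu (g.eval p) = nu (trm g p k) := nu_eval_of_dom hp hdgp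
      have hgtp : tangible (g.eval p) := hgt p hp (nuLe_refl p) hpq
      have gLEf_p : nuLe (trm g p k) (trm f p r) :=
        nuLe_congr_right hnufp (nuLe_congr_left hnuGp (H3 p hp hgtp))
      have hnuGw : nu (g.eval w) = nu (trm g w k) := nu_eval_of_dom hw hdgw
      have fLEg_w : nuLe (trm f w r) (trm g w k) :=
        nuLe_congr_right hnuGw (nuLe_trans (nuLe_trm_eval hr) (nuLe_of_nu_eq hEw))
      have hnuGw' : nu (g.eval w') = nu (trm g w' k) := nu_eval_of_dom hw' hdgw'
      have hw0 : w ≠ 0 := tang_ne_zero hw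
      have hp0 : p ≠ 0 := tang_ne_zero hp
      have contra_up : ∀ j : ℕ, j ∈ f.support → nuLt (trm g w' k) (trm f w' j) → False := by
        intro j hjs hlt
        have h1 : nuLt (trm g w' k) (f.eval w') :=
          nuLt_of_nuLt_of_nuLe hlt (nuLe_trm_eval hjs)
        have h2 : nuLt (trm g w' k) (g.eval w') :=
          nuLt_of_nuLt_of_nuLe h1 (H2 w' hw' hfw')
        exact nuLt_irrefl (nuLt_congr_right hnuGw' h2)
      rcases Nat.lt_trichotomy r k with hrk | hrk | hrk
      · -- r < k
        have hcr := crossPt_spec (Polynomial.mem_support_iff.mp hr)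
          (Polynomial.mem_support_iff.mp hdgp.1) hrk
        have hpθ : nuLe p (crossPt (f.coeff r) r (g.coeff k) k) := by
          rcases nu_trichot (crossPt (f.coeff r) r (g.coeff k) k) p with h1 | h1 | h1
          · exact absurd gLEf_p (nuLt_iff.mp ((hcr.2 p hp).2.2 h1))
          · exact nuLe_of_nu_eq h1.symm
          · exact nuLe_of_nuLt h1
        have hwθ : nuLt w (crossPt (f.coeff r) r (g.coeff k) k) :=
          nuLt_of_nuLt_of_nuLe hwp hpθ
        exact absurd fLEg_w (nuLt_iff.mp ((hcr.2 w hw).1 hwθ))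
      · -- r = k
        subst hrk
        have EQc : nu (f.coeff r) = nu (g.coeff r) :=
          nuLe_antisymm (trm_cancel hw0 fLEg_w) (trm_cancel hp0 gLEf_p)
        obtain ⟨s, hdfw, hsc⟩ := (tang_eval_iff hfne hw).mp hfw
        have hsk : s = r := by
          by_contra hne
          have h1 := hdfw.2 r hr (fun e => hne e.symm)
          have h2 : nu (trm f w r) = nu (trm g w r) := trm_coeff_congr EQc w
          have h3 : nu (trm f w s) = nu (f.eval w) := (nu_eval_of_dom hw hdfw).symm
          have h4 : nu (trm f w r) = nu (trm f w s) := by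
            rw [h2, ← hnuGw, ← hEw, ← h3]
          exact h1.2 h4
        subst hsk
        have hnd : ¬ DomAt f p s := by
          intro hcon
          exact ((tang_eval_iff hfne hp).mpr ⟨s, hcon, hsc⟩) hgfp
        have hex : ∃ j ∈ f.support, j ≠ s ∧ nu (trm f p j) = nu (trm f p s) := by
          by_contra hcon
          push_neg at hcon
          exact hnd ⟨hr, fun j hj hne => by
            rcases nuLe_split (hrmax j hj) with h1 | h1
            · exact h1
            · exact absurd h1 (hcon j hj hne)⟩
        obtain ⟨j, hjs, hjk, htie⟩ := hex
        rcases Nat.lt_or_ge j s with hjlt | hjge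
        · have hcr := crossPt_spec (Polynomial.mem_support_iff.mp hjs)
            (Polynomial.mem_support_iff.mp hr) hjlt
          have hpθ : nu p = nu (crossPt (f.coeff j) j (f.coeff s) s) :=
            cross_eq hcr hp htie
          have hwθ : nuLt w (crossPt (f.coeff j) j (f.coeff s) s) :=
            nuLt_congr_right hpθ hwp
          exact nuLt_asymm ((hcr.2 w hw).1 hwθ) (hdfw.2 j hjs hjk)
        · have hklt : s < j := by omega
          have hcr := crossPt_spec (Polynomial.mem_support_iff.mp hr)
            (Polynomial.mem_support_iff.mp hjs) hklt
          have hpθ : nu p = nu (crossPt (f.coeff s) s (f.coeff j) j) :=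
            cross_eq hcr hp htie.symm
          have hθw' : nuLt (crossPt (f.coeff s) s (f.coeff j) j) w' :=
            nuLt_congr_left hpθ (nuLt_of_nuLe_of_nuLt hpq hqw')
          have h1 := (hcr.2 w' hw').2.2 hθw'
          exact contra_up j hjs (nuLt_congr_left (trm_coeff_congr EQc w') h1)
      · -- k < r
        have hcr := crossPt_spec (Polynomial.mem_support_iff.mp hdgp.1)
          (Polynomial.mem_support_iff.mp hr) hrk
        have hθp : nuLe (crossPt (g.coeff k) k (f.coeff r) r) p := by
          rcases nu_trichot p (crossPt (g.coeff k) k (f.coeff r) r) with h1 | h1 | h1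
          · exact absurd gLEf_p (nuLt_iff.mp ((hcr.2 p hp).1 h1))
          · exact nuLe_of_nu_eq h1.symm
          · exact nuLe_of_nuLt h1
        have hθw' : nuLt (crossPt (g.coeff k) k (f.coeff r) r) w' :=
          nuLt_of_nuLe_of_nuLt (nuLe_trans hθp hpq) hqw'
        exact contra_up r hr ((hcr.2 w' hw').2.2 hθw')

theorem no_tgt {f g : F[X]} {u : F} (hu : tangible u) (hu1 : nuLt 1 u)
    (hno' : ∀ z : F, tangible z → ¬(ghost (f.eval z) ∧ ghost (g.eval z)))
    (hgsum : ∀ z : F, ghost (f.eval z + g.eval z))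
    {a b c : F} (ha : tangible a) (hb : tangible b) (hc : tangible c)
    (hab : nuLt a b) (hbc : nuLt b c) (hfa : tangible (f.eval a))
    (hfb : ghost (f.eval b)) (hfc : tangible (f.eval c)) : False :=
  core_aux f g hu hu1 hno' hgsum _ a b c ha hb hc hab hbc hfa hfb hfc (le_refl _)

theorem not_monomial_ne_zero {f : F[X]} (hm : ¬ isMonomial f) : f ≠ 0 := by
  intro e
  exact hm ⟨0, 0, by rw [e]; simp⟩

theorem not_monomial_td_lt_deg {f : F[X]} (hm : ¬ isMonomial f) :
    f.natTrailingDegree < f.natDegree := by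
  rcases Nat.lt_or_ge f.natTrailingDegree f.natDegree with h | h
  · exact h
  · exfalso
    have he : f.natTrailingDegree = f.natDegree :=
      le_antisymm (Polynomial.natTrailingDegree_le_natDegree f) h
    have hsub : f.support ⊆ {f.natDegree} := by
      intro a ha
      have h1 := Polynomial.le_natDegree_of_mem_supp a ha
      have h2 := Polynomial.natTrailingDegree_le_of_mem_supp a ha
      simp only [Finset.mem_singleton]
      omega
    have hcard : f.support.card ≤ 1 := by
      calc f.support.card ≤ ({f.natDegree} : Finset ℕ).card := Finset.card_le_card hsub
        _ = 1 := Finset.card_singleton _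
    obtain ⟨n, a, he2⟩ := Polynomial.card_support_le_one_iff_monomial.mp hcard
    exact hm ⟨n, a, by rw [he2, Polynomial.C_mul_X_pow_eq_monomial]⟩

theorem eval_ghost_of_trivial (hall : ∀ t : F, tangible t → nu t = nu 1) {f : F[X]}
    (htd : f.natTrailingDegree < f.natDegree) (hfne : f ≠ 0) {z : F} (hz : tangible z) :
    ghost (f.eval z) := by
  have hnu : ∀ c : F, c ≠ 0 → nu c = nu 1 := by
    intro c hc
    obtain ⟨t, ht, htn⟩ := exists_tang_lift hc
    rw [← htn]; exact hall t ht
  have key : ∀ i ∈ f.support, nu (trm f z i) = nu 1 * nu 1 := by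
    intro i hi
    rw [trm, ← nu_mul_nu, hnu _ (Polynomial.mem_support_iff.mp hi),
      hnu _ (pow_ne_zero' (tang_ne_zero hz) i)]
  rw [eval_eq_sum_trm]
  refine ghost_sum_of_tie (Polynomial.natTrailingDegree_mem_support_of_nonzero hfne)
    (Polynomial.natDegree_mem_support_of_nonzero hfne) (by omega) ?_ ?_
  · rw [key _ (Polynomial.natDegree_mem_support_of_nonzero hfne),
      key _ (Polynomial.natTrailingDegree_mem_support_of_nonzero hfne)]
  · intro j hj
    exact nuLe_of_nu_eq (by
      rw [key _ hj, key _ (Polynomial.natTrailingDegree_mem_support_of_nonzero hfne)])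

theorem exists_ghost_point (f g : F[X]) {u : F} (hu : tangible u) (hu1 : nuLt 1 u)
    (hfne : f ≠ 0) (htd : f.natTrailingDegree < f.natDegree) :
    ∃ z : F, tangible z ∧ ghost (f.eval z) := by
  by_contra hcon
  push_neg at hcon
  have hcon' : ∀ z : F, tangible z → tangible (f.eval z) := fun z hz => hcon z hz
  obtain ⟨xl, hxl, hxlbel⟩ := exists_beyond_down hu hu1 (thetaSet f g)
    (fun θ hθ => tang_ne_zero (thetaSet_tangible hθ))
  obtain ⟨xh, hxh, hxhbey⟩ := exists_beyond_up hu hu1 (thetaSet f g)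
  have hdl : DomAt f xl f.natTrailingDegree := dom_bot hfne hxl hxlbel
  have hdh : DomAt f xh f.natDegree := dom_top hfne hxh hxhbey
  have hne : f.natTrailingDegree ≠ f.natDegree := by omega
  rcases nu_trichot xl xh with h | h | h
  · exact hne (unidom' hxl hxh h (fun z hz _ _ => hcon' z hz) hdl hdh)
  · exact hne (dom_unique (domAt_congr h hdl) hdh)
  · exact absurd (dom_lt_of_dom hxh hxl h hdh hdl (by omega)) (by omega)

/-- the ghost locus of `f` is upward closed or downward closed -/
theorem up_or_down {f g : F[X]} {u : F} (hu : tangible u) (hu1 : nuLt 1 u)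
    (hno' : ∀ z : F, tangible z → ¬(ghost (f.eval z) ∧ ghost (g.eval z)))
    (hgsum : ∀ z : F, ghost (f.eval z + g.eval z))
    (hge : ∃ e : F, tangible e ∧ ghost (g.eval e)) :
    (∀ x y : F, tangible x → tangible y → ghost (f.eval x) → nuLt x y → ghost (f.eval y)) ∨
    (∀ x y : F, tangible x → tangible y → ghost (f.eval x) → nuLt y x → ghost (f.eval y)) := by
  have hno'' : ∀ z : F, tangible z → ¬(ghost (g.eval z) ∧ ghost (f.eval z)) :=
    fun z hz hc => hno' z hz ⟨hc.2, hc.1⟩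
  have hgsum' : ∀ z : F, ghost (g.eval z + f.eval z) := by
    intro z; rw [add_comm]; exact hgsum z
  by_contra hcon
  push_neg at hcon
  obtain ⟨⟨x, y, hx, hy, hgx, hxy, hty⟩, ⟨x', y', hx', hy', hgx', hy'x', hty'⟩⟩ := hcon
  have hty2 : tangible (f.eval y) := hty
  have hty2' : tangible (f.eval y') := hty'
  -- y' vs x
  rcases nu_trichot y' x with h1 | h1 | h1
  · -- pattern A : y' < x < y
    exact no_tgt hu hu1 hno' hgsum hy' hx hy h1 hxy hty2' hgx hty2
  · exact hty2' (ghost_eval_congr hx hy' h1.symm hgx)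
  · -- x < y' < x' : pattern B
    obtain ⟨e, he, hge'⟩ := hge
    have hgtx : tangible (g.eval x) := by
      by_contra hc
      exact hno' x hx ⟨hgx, Classical.not_not.mp hc⟩
    have hgtx' : tangible (g.eval x') := by
      by_contra hc
      exact hno' x' hx' ⟨hgx', Classical.not_not.mp hc⟩
    rcases nu_trichot e x with h2 | h2 | h2
    · -- e < x : look at f at e
      rcases Classical.em (ghost (f.eval e)) with h3 | h3
      · exact hno' e he ⟨h3, hge'⟩
      · exact no_tgt hu hu1 hno' hgsum he hx hy' h2 h1 h3 hgx hty2'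
    · exact hgtx (ghost_eval_congr he hx h2 hge')
    · rcases nu_trichot e x' with h4 | h4 | h4
      · -- x < e < x' : pattern A for g
        exact no_tgt hu hu1 hno'' hgsum' hx he hx' h2 h4 hgtx hge' hgtx'
      · exact hgtx' (ghost_eval_congr he hx' h4 hge')
      · rcases Classical.em (ghost (f.eval e)) with h3 | h3
        · exact hno' e he ⟨h3, hge'⟩
        · exact no_tgt hu hu1 hno' hgsum hy' hx' he hy'x' h4 hty2' hgx' h3

theorem exact_threshold_up (f g : F[X]) {u : F} (hu : tangible u) (hu1 : nuLt 1 u)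
    (hUp : ∀ x y : F, tangible x → tangible y → ghost (f.eval x) → nuLt x y →
      ghost (f.eval y))
    (hne : ∃ z : F, tangible z ∧ ghost (f.eval z))
    (htang : ∃ z : F, tangible z ∧ tangible (f.eval z)) :
    ∃ β₀ : F, tangible β₀ ∧ ∀ z : F, tangible z → (ghost (f.eval z) ↔ nuLe β₀ z) := by
  classical
  obtain ⟨zf, hzf, hzfg⟩ := hne
  obtain ⟨zg, hzg, hzgt⟩ := htang
  have hord : nuLt zg zf := by
    rcases nu_trichot zg zf with h | h | h
    · exact h
    · exact absurd (ghost_eval_congr hzf hzg h.symm hzfg) hzgt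
    · exact absurd (hUp zf zg hzf hzg hzfg h) hzgt
  have hSne : ((thetaSet f g).filter (fun θ => ghost (f.eval θ))).Nonempty := by
    obtain ⟨θ, hθt, hθg, _, _, i, j, hi, hj, hij, hcr⟩ := climb_up hzg hzf hord hzgt hzfg
    have hcanon := cross_nu_canon (Polynomial.mem_support_iff.mp hi)
      (Polynomial.mem_support_iff.mp hj) hij hcr
    exact ⟨crossPt (f.coeff i) i (f.coeff j) j, Finset.mem_filter.mpr
      ⟨mem_thetaSet_ff hi hj, ghost_eval_congr hθt (crossPt_tang _ _ _ _) hcanon hθg⟩⟩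
  obtain ⟨β₀, hβmem, hβmin⟩ := exists_min hSne id
  have hβfil := Finset.mem_filter.mp hβmem
  have hβt : tangible β₀ := thetaSet_tangible hβfil.1
  have hβg : ghost (f.eval β₀) := hβfil.2
  refine ⟨β₀, hβt, fun z hz => ⟨?_, ?_⟩⟩
  · intro hgz
    by_contra hcon
    have hzβ : nuLt z β₀ := by
      rw [nuLt_iff]; exact hcon
    rcases nu_trichot zg z with h | h | h
    · obtain ⟨θ, hθt, hθg, _, hθz, i, j, hi, hj, hij, hcr⟩ := climb_up hzg hz h hzgt hgz
      have hcanon := cross_nu_canon (Polynomial.mem_support_iff.mp hi)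
        (Polynomial.mem_support_iff.mp hj) hij hcr
      have hmem2 : crossPt (f.coeff i) i (f.coeff j) j ∈
          (thetaSet f g).filter (fun θ => ghost (f.eval θ)) := Finset.mem_filter.mpr
        ⟨mem_thetaSet_ff hi hj, ghost_eval_congr hθt (crossPt_tang _ _ _ _) hcanon hθg⟩
      have h1 : nuLe β₀ (crossPt (f.coeff i) i (f.coeff j) j) := hβmin _ hmem2
      have h2 : nuLe (crossPt (f.coeff i) i (f.coeff j) j) z := nuLe_congr_left hcanon hθz
      exact (nuLt_iff.mp hzβ) (nuLe_trans h1 h2)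
    · exact hzgt (ghost_eval_congr hz hzg h.symm hgz)
    · exact hzgt (hUp z zg hz hzg hgz h)
  · intro hle
    rcases nuLe_split hle with h | h
    · exact hUp β₀ z hβt hz hβg h
    · exact ghost_eval_congr hβt hz h hβg

theorem exact_threshold_down (f g : F[X]) {u : F} (hu : tangible u) (hu1 : nuLt 1 u)
    (hDown : ∀ x y : F, tangible x → tangible y → ghost (g.eval x) → nuLt y x →
      ghost (g.eval y))
    (hne : ∃ z : F, tangible z ∧ ghost (g.eval z))
    (htang : ∃ z : F, tangible z ∧ tangible (g.eval z)) :
    ∃ α₀ : F, tangible α₀ ∧ ∀ z : F, tangible z → (ghost (g.eval z) ↔ nuLe z α₀) := by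
  classical
  obtain ⟨zG, hzG, hzGg⟩ := hne
  obtain ⟨zT, hzT, hzTt⟩ := htang
  have hord : nuLt zG zT := by
    rcases nu_trichot zG zT with h | h | h
    · exact h
    · exact absurd (ghost_eval_congr hzG hzT h hzGg) hzTt
    · exact absurd (hDown zG zT hzG hzT hzGg h) hzTt
  have hSne : ((thetaSet f g).filter (fun θ => ghost (g.eval θ))).Nonempty := by
    obtain ⟨θ, hθt, hθg, _, _, i, j, hi, hj, hij, hcr⟩ := climb_down hzG hzT hord hzGg hzTt
    have hcanon := cross_nu_canon (Polynomial.mem_support_iff.mp hi)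
      (Polynomial.mem_support_iff.mp hj) hij hcr
    exact ⟨crossPt (g.coeff i) i (g.coeff j) j, Finset.mem_filter.mpr
      ⟨mem_thetaSet_gg hi hj, ghost_eval_congr hθt (crossPt_tang _ _ _ _) hcanon hθg⟩⟩
  obtain ⟨α₀, hαmem, hαmax⟩ := exists_max hSne id
  have hαfil := Finset.mem_filter.mp hαmem
  have hαt : tangible α₀ := thetaSet_tangible hαfil.1
  have hαg : ghost (g.eval α₀) := hαfil.2
  refine ⟨α₀, hαt, fun z hz => ⟨?_, ?_⟩⟩
  · intro hgz
    by_contra hcon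
    have hαz : nuLt α₀ z := by
      rw [nuLt_iff]; exact hcon
    rcases nu_trichot z zT with h | h | h
    · obtain ⟨θ, hθt, hθg, hzθ, _, i, j, hi, hj, hij, hcr⟩ := climb_down hz hzT h hgz hzTt
      have hcanon := cross_nu_canon (Polynomial.mem_support_iff.mp hi)
        (Polynomial.mem_support_iff.mp hj) hij hcr
      have hmem2 : crossPt (g.coeff i) i (g.coeff j) j ∈
          (thetaSet f g).filter (fun θ => ghost (g.eval θ)) := Finset.mem_filter.mpr
        ⟨mem_thetaSet_gg hi hj, ghost_eval_congr hθt (crossPt_tang _ _ _ _) hcanon hθg⟩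
      have h1 : nuLe (crossPt (g.coeff i) i (g.coeff j) j) α₀ := hαmax _ hmem2
      have h2 : nuLe z (crossPt (g.coeff i) i (g.coeff j) j) := nuLe_congr_right hcanon hzθ
      exact (nuLt_iff.mp hαz) (nuLe_trans h2 h1)
    · exact hzTt (ghost_eval_congr hz hzT h hgz)
    · exact hzTt (hDown z zT hz hzT hgz h)
  · intro hle
    rcases nuLe_split hle with h | h
    · exact hDown α₀ z hαt hz hαg h
    · exact ghost_eval_congr hαt hz h.symm hαg

theorem master (f g : F[X]) {u : F} (hu : tangible u) (hu1 : nuLt 1 u)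
    (hno' : ∀ z : F, tangible z → ¬(ghost (f.eval z) ∧ ghost (g.eval z)))
    (hgsum : ∀ z : F, ghost (f.eval z + g.eval z))
    (hfm : ¬ isMonomial f) (hgm : ¬ isMonomial g)
    (hUp : ∀ x y : F, tangible x → tangible y → ghost (f.eval x) → nuLt x y →
      ghost (f.eval y))
    (hDown : ∀ x y : F, tangible x → tangible y → ghost (g.eval x) → nuLt y x →
      ghost (g.eval y)) :
    ∃ α β : F, ghost α ∧ α ≠ 0 ∧ ghost β ∧ β ≠ 0 ∧ nuLt α β ∧
      (∀ a : F, tangible a → (tangible (f.eval a) ↔ nuLt a β)) ∧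
      (∀ a : F, tangible a → (tangible (g.eval a) ↔ nuLt α a)) ∧
      (∀ a : F, tangible a → nuLt α a → nuLt a β → nu (f.eval a) = nu (g.eval a)) ∧
      g.natDegree < f.natDegree ∧ g.natTrailingDegree < f.natTrailingDegree := by
  have hfne := not_monomial_ne_zero hfm
  have hgne := not_monomial_ne_zero hgm
  have htdf := not_monomial_td_lt_deg hfm
  have htdg := not_monomial_td_lt_deg hgm
  have H2 : ∀ z : F, tangible z → tangible (f.eval z) → nuLe (f.eval z) (g.eval z) :=
    fun z _ ht => key_nuLe (hgsum z) ht
  have H3 : ∀ z : F, tangible z → tangible (g.eval z) → nuLe (g.eval z) (f.eval z) := by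
    intro z _ ht
    have hgs : ghost (g.eval z + f.eval z) := by rw [add_comm]; exact hgsum z
    exact key_nuLe hgs ht
  obtain ⟨zf, hzf, hzfg⟩ := exists_ghost_point f g hu hu1 hfne htdf
  obtain ⟨zg, hzg, hzgg⟩ := exists_ghost_point g f hu hu1 hgne htdg
  have hftzg : tangible (f.eval zg) := by
    by_contra hc; exact hno' zg hzg ⟨Classical.not_not.mp hc, hzgg⟩
  have hgtzf : tangible (g.eval zf) := by
    by_contra hc; exact hno' zf hzf ⟨hzfg, Classical.not_not.mp hc⟩
  obtain ⟨β₀, hβt, hβiff⟩ :=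
    exact_threshold_up f g hu hu1 hUp ⟨zf, hzf, hzfg⟩ ⟨zg, hzg, hftzg⟩
  obtain ⟨α₀, hαt, hαiff⟩ :=
    exact_threshold_down f g hu hu1 hDown ⟨zg, hzg, hzgg⟩ ⟨zf, hzf, hgtzf⟩
  have hβg : ghost (f.eval β₀) := (hβiff β₀ hβt).mpr (nuLe_refl β₀)
  have hαg : ghost (g.eval α₀) := (hαiff α₀ hαt).mpr (nuLe_refl α₀)
  have hαβ : nuLt α₀ β₀ := by
    rw [nuLt_iff]
    intro hcon
    exact hno' α₀ hαt ⟨(hβiff α₀ hαt).mpr hcon, hαg⟩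
  have hftan : ∀ a : F, tangible a → (tangible (f.eval a) ↔ nuLt a β₀) := by
    intro a ha
    constructor
    · intro ht
      rw [nuLt_iff]
      intro hcon
      exact ht ((hβiff a ha).mpr hcon)
    · intro hlt hg
      exact (nuLt_iff.mp hlt) ((hβiff a ha).mp hg)
  have hgtan : ∀ a : F, tangible a → (tangible (g.eval a) ↔ nuLt α₀ a) := by
    intro a ha
    constructor
    · intro ht
      rw [nuLt_iff]
      intro hcon
      exact ht ((hαiff a ha).mpr hcon)
    · intro hlt hg
      exact (nuLt_iff.mp hlt) ((hαiff a ha).mp hg)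
  have hdeg : g.natDegree < f.natDegree := by
    obtain ⟨x₁, hx₁, hbey⟩ := exists_beyond_up hu hu1 (insert β₀ (thetaSet f g))
    have hβx : nuLt β₀ x₁ := hbey β₀ (Finset.mem_insert_self _ _)
    have hbeyΘ : ∀ θ ∈ thetaSet f g, nuLt θ x₁ :=
      fun θ h => hbey θ (Finset.mem_insert_of_mem h)
    have hdgx : DomAt g x₁ g.natDegree := dom_top' hgne hx₁ hbeyΘ
    have hgtab : ∀ z : F, tangible z → nuLe β₀ z → tangible (g.eval z) := by
      intro z hz h1
      exact (hgtan z hz).mpr (nuLt_of_nuLt_of_nuLe hαβ h1)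
    obtain ⟨k, hdgβ, hkc⟩ := (tang_eval_iff hgne hβt).mp (hgtab β₀ hβt (nuLe_refl β₀))
    have hk : k = g.natDegree :=
      unidom' hβt hx₁ hβx (fun z hz h1 _ => hgtab z hz h1) hdgβ hdgx
    subst hk
    obtain ⟨w₀, hw₀, hw₀β, hwin₀⟩ := exists_window_below hu hu1 (thetaSet f g) hβt
    obtain ⟨w, hw, hwβ, hαw, hwin⟩ : ∃ w : F, tangible w ∧ nuLt w β₀ ∧ nuLt α₀ w ∧
        ∀ θ ∈ thetaSet f g, nuLt θ w ∨ ¬ nuLt θ β₀ := by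
      rcases nuLe_or_nuLt w₀ α₀ with hcase | hcase
      · obtain ⟨z, hz, hαz, hzβ⟩ := density hαt hβt hαβ
        refine ⟨z, hz, hzβ, hαz, fun θ hθ => ?_⟩
        rcases hwin₀ θ hθ with h1 | h1
        · left; exact nuLt_trans (nuLt_of_nuLt_of_nuLe h1 hcase) hαz
        · right; exact h1
      · exact ⟨w₀, hw₀, hw₀β, hcase, hwin₀⟩
    have hdgw : DomAt g w g.natDegree := dom_persist_down hβt hw hwβ hdgβ hwin
    have hfw : tangible (f.eval w) := (hftan w hw).mpr hwβ
    have hgw : tangible (g.eval w) := (hgtan w hw).mpr hαw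
    have hEw : nu (f.eval w) = nu (g.eval w) := nuLe_antisymm (H2 w hw hfw) (H3 w hw hgw)
    obtain ⟨r, hrs, hrmax⟩ := exists_max_trm hfne β₀
    have hnufβ : nu (f.eval β₀) = nu (trm f β₀ r) := nu_eval_max hrs hrmax
    have hnuGβ : nu (g.eval β₀) = nu (trm g β₀ g.natDegree) := nu_eval_of_dom hβt hdgβ
    have gLEf : nuLe (trm g β₀ g.natDegree) (trm f β₀ r) :=
      nuLe_congr_right hnufβ (nuLe_congr_left hnuGβ
        (H3 β₀ hβt (hgtab β₀ hβt (nuLe_refl β₀))))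
    have hnuGw : nu (g.eval w) = nu (trm g w g.natDegree) := nu_eval_of_dom hw hdgw
    have fLEg_w : nuLe (trm f w r) (trm g w g.natDegree) :=
      nuLe_congr_right hnuGw (nuLe_trans (nuLe_trm_eval hrs) (nuLe_of_nu_eq hEw))
    have hw0 : w ≠ 0 := tang_ne_zero hw
    have hβ0 : β₀ ≠ 0 := tang_ne_zero hβt
    rcases Nat.lt_trichotomy r g.natDegree with hrk | hrk | hrk
    · exfalso
      have hcr := crossPt_spec (Polynomial.mem_support_iff.mp hrs)
        (Polynomial.mem_support_iff.mp hdgβ.1) hrk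
      have hβθ : nuLe β₀ (crossPt (f.coeff r) r (g.coeff g.natDegree) g.natDegree) := by
        rcases nu_trichot (crossPt (f.coeff r) r (g.coeff g.natDegree) g.natDegree) β₀
          with h1 | h1 | h1
        · exact absurd gLEf (nuLt_iff.mp ((hcr.2 β₀ hβt).2.2 h1))
        · exact nuLe_of_nu_eq h1.symm
        · exact nuLe_of_nuLt h1
      have hwθ : nuLt w (crossPt (f.coeff r) r (g.coeff g.natDegree) g.natDegree) :=
        nuLt_of_nuLt_of_nuLe hwβ hβθ
      exact absurd fLEg_w (nuLt_iff.mp ((hcr.2 w hw).1 hwθ))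
    · subst hrk
      have EQc : nu (f.coeff g.natDegree) = nu (g.coeff g.natDegree) :=
        nuLe_antisymm (trm_cancel hw0 fLEg_w) (trm_cancel hβ0 gLEf)
      obtain ⟨s, hdfw, hsc⟩ := (tang_eval_iff hfne hw).mp hfw
      have hsk : s = g.natDegree := by
        by_contra hne2
        have h1 := hdfw.2 g.natDegree hrs (fun e => hne2 e.symm)
        have h2 : nu (trm f w g.natDegree) = nu (trm g w g.natDegree) :=
          trm_coeff_congr EQc w
        have h3 : nu (trm f w s) = nu (f.eval w) := (nu_eval_of_dom hw hdfw).symm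
        exact h1.2 (by rw [h2, ← hnuGw, ← hEw, ← h3])
      subst hsk
      have hnd : ¬ DomAt f β₀ g.natDegree := by
        intro hcon
        exact ((tang_eval_iff hfne hβt).mpr ⟨g.natDegree, hcon, hsc⟩) hβg
      have hex : ∃ j ∈ f.support, j ≠ g.natDegree ∧
          nu (trm f β₀ j) = nu (trm f β₀ g.natDegree) := by
        by_contra hcon2
        push_neg at hcon2
        exact hnd ⟨hrs, fun j hj hne2 => by
          rcases nuLe_split (hrmax j hj) with h1 | h1
          · exact h1
          · exact absurd h1 (hcon2 j hj hne2)⟩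
      obtain ⟨j, hjs, hjn, htie⟩ := hex
      rcases Nat.lt_or_ge j g.natDegree with hjlt | hjge
      · exfalso
        have hcr := crossPt_spec (Polynomial.mem_support_iff.mp hjs)
          (Polynomial.mem_support_iff.mp hrs) hjlt
        have hβθ : nu β₀ = nu (crossPt (f.coeff j) j (f.coeff g.natDegree) g.natDegree) :=
          cross_eq hcr hβt htie
        have hwθ : nuLt w (crossPt (f.coeff j) j (f.coeff g.natDegree) g.natDegree) :=
          nuLt_congr_right hβθ hwβ
        exact nuLt_asymm ((hcr.2 w hw).1 hwθ) (hdfw.2 j hjs hjn)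
      · have hlt : g.natDegree < j := by omega
        exact lt_of_lt_of_le hlt (Polynomial.le_natDegree_of_mem_supp j hjs)
    · exact lt_of_lt_of_le hrk (Polynomial.le_natDegree_of_mem_supp r hrs)
  have htdeg : g.natTrailingDegree < f.natTrailingDegree := by
    obtain ⟨x₀, hx₀, hbel⟩ := exists_beyond_down hu hu1 (insert α₀ (thetaSet f g)) (by
      intro θ hθ
      rcases Finset.mem_insert.mp hθ with h | h
      · subst h; exact tang_ne_zero hαt
      · exact tang_ne_zero (thetaSet_tangible h))
    have hxα : nuLt x₀ α₀ := hbel α₀ (Finset.mem_insert_self _ _)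
    have hbelΘ : ∀ θ ∈ thetaSet f g, nuLt x₀ θ :=
      fun θ h => hbel θ (Finset.mem_insert_of_mem h)
    have hdfx : DomAt f x₀ f.natTrailingDegree := dom_bot hfne hx₀ hbelΘ
    have hftab : ∀ z : F, tangible z → nuLe z α₀ → tangible (f.eval z) := by
      intro z hz h1
      exact (hftan z hz).mpr (nuLt_of_nuLe_of_nuLt h1 hαβ)
    obtain ⟨s₀, hdfα, hs₀c⟩ := (tang_eval_iff hfne hαt).mp (hftab α₀ hαt (nuLe_refl α₀))
    have hs : f.natTrailingDegree = s₀ :=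
      unidom' hx₀ hαt hxα (fun z hz _ h2 => hftab z hz h2) hdfx hdfα
    have hdfα' : DomAt f α₀ f.natTrailingDegree := by rw [hs]; exact hdfα
    have hs₀c' : tangible (f.coeff f.natTrailingDegree) := by rw [hs]; exact hs₀c
    obtain ⟨w₁, hw₁, hαw₁, hwin₁⟩ := exists_window_above hu hu1 (thetaSet f g) hαt
    obtain ⟨w', hw', hαw', hw'β, hwin'⟩ : ∃ w' : F, tangible w' ∧ nuLt α₀ w' ∧
        nuLt w' β₀ ∧ ∀ θ ∈ thetaSet f g, nuLt w' θ ∨ ¬ nuLt α₀ θ := by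
      rcases nuLe_or_nuLt β₀ w₁ with hcase | hcase
      · obtain ⟨z, hz, hαz, hzβ⟩ := density hαt hβt hαβ
        refine ⟨z, hz, hαz, hzβ, fun θ hθ => ?_⟩
        rcases hwin₁ θ hθ with h1 | h1
        · left; exact nuLt_trans (nuLt_of_nuLt_of_nuLe hzβ hcase) h1
        · right; exact h1
      · exact ⟨w₁, hw₁, hαw₁, hcase, hwin₁⟩
    have hdfw' : DomAt f w' f.natTrailingDegree :=
      dom_persist_up_f hαt hw' hαw' hdfα' hwin'
    have hfw' : tangible (f.eval w') := (hftan w' hw').mpr hw'β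
    have hgw' : tangible (g.eval w') := (hgtan w' hw').mpr hαw'
    have hEw' : nu (f.eval w') = nu (g.eval w') :=
      nuLe_antisymm (H2 w' hw' hfw') (H3 w' hw' hgw')
    obtain ⟨r', hr's, hr'max⟩ := exists_max_trm hgne α₀
    have hnugα : nu (g.eval α₀) = nu (trm g α₀ r') := nu_eval_max hr's hr'max
    have hnuFα : nu (f.eval α₀) = nu (trm f α₀ f.natTrailingDegree) :=
      nu_eval_of_dom hαt hdfα'
    have fLEg_α : nuLe (trm f α₀ f.natTrailingDegree) (trm g α₀ r') :=
      nuLe_congr_right hnugα (nuLe_congr_left hnuFα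
        (H2 α₀ hαt (hftab α₀ hαt (nuLe_refl α₀))))
    have hnuFw' : nu (f.eval w') = nu (trm f w' f.natTrailingDegree) :=
      nu_eval_of_dom hw' hdfw'
    have gLEf_w' : nuLe (trm g w' r') (trm f w' f.natTrailingDegree) :=
      nuLe_congr_right hnuFw' (nuLe_trans (nuLe_trm_eval hr's) (nuLe_of_nu_eq hEw'.symm))
    have hw'0 : w' ≠ 0 := tang_ne_zero hw'
    have hα0 : α₀ ≠ 0 := tang_ne_zero hαt
    rcases Nat.lt_trichotomy r' f.natTrailingDegree with hrk | hrk | hrk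
    · exact lt_of_le_of_lt (Polynomial.natTrailingDegree_le_of_mem_supp r' hr's) hrk
    · rw [hrk] at hr's hr'max hnugα gLEf_w'
      have EQc : nu (g.coeff f.natTrailingDegree) = nu (f.coeff f.natTrailingDegree) :=
        nuLe_antisymm (trm_cancel hw'0 gLEf_w') (trm_cancel hα0 (by rw [hrk] at fLEg_α; exact fLEg_α))
      obtain ⟨s', hdgw', hs'c⟩ := (tang_eval_iff hgne hw').mp hgw'
      have hs'k : s' = f.natTrailingDegree := by
        by_contra hne2
        have h1 := hdgw'.2 f.natTrailingDegree hr's (fun e => hne2 e.symm)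
        have h2 : nu (trm g w' f.natTrailingDegree) = nu (trm f w' f.natTrailingDegree) :=
          trm_coeff_congr EQc w'
        have h3 : nu (trm g w' s') = nu (g.eval w') := (nu_eval_of_dom hw' hdgw').symm
        exact h1.2 (by rw [h2, ← hnuFw', hEw', ← h3])
      rw [hs'k] at hdgw' hs'c
      have hnd : ¬ DomAt g α₀ f.natTrailingDegree := by
        intro hcon
        exact ((tang_eval_iff hgne hαt).mpr ⟨f.natTrailingDegree, hcon, hs'c⟩) hαg
      have hex : ∃ j ∈ g.support, j ≠ f.natTrailingDegree ∧
          nu (trm g α₀ j) = nu (trm g α₀ f.natTrailingDegree) := by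
        by_contra hcon2
        push_neg at hcon2
        exact hnd ⟨hr's, fun j hj hne2 => by
          rcases nuLe_split (hr'max j hj) with h1 | h1
          · exact h1
          · exact absurd h1 (hcon2 j hj hne2)⟩
      obtain ⟨j, hjs, hjn, htie⟩ := hex
      rcases Nat.lt_or_ge f.natTrailingDegree j with hjgt | hjle
      · exfalso
        have hcr := crossPt_spec (Polynomial.mem_support_iff.mp hr's)
          (Polynomial.mem_support_iff.mp hjs) hjgt
        have hαθ : nu α₀ =
            nu (crossPt (g.coeff f.natTrailingDegree) f.natTrailingDegree (g.coeff j) j) :=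
          cross_eq hcr hαt htie.symm
        have hθw' : nuLt
            (crossPt (g.coeff f.natTrailingDegree) f.natTrailingDegree (g.coeff j) j) w' :=
          nuLt_congr_left hαθ hαw'
        exact nuLt_asymm ((hcr.2 w' hw').2.2 hθw') (hdgw'.2 j hjs hjn)
      · have hlt : j < f.natTrailingDegree := by omega
        exact lt_of_le_of_lt (Polynomial.natTrailingDegree_le_of_mem_supp j hjs) hlt
    · exfalso
      have hcr := crossPt_spec (Polynomial.mem_support_iff.mp hdfα'.1)
        (Polynomial.mem_support_iff.mp hr's) hrk
      have hθα : nuLe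
          (crossPt (f.coeff f.natTrailingDegree) f.natTrailingDegree (g.coeff r') r') α₀ := by
        rcases nu_trichot α₀
          (crossPt (f.coeff f.natTrailingDegree) f.natTrailingDegree (g.coeff r') r')
          with h1 | h1 | h1
        · exact absurd fLEg_α (nuLt_iff.mp ((hcr.2 α₀ hαt).1 h1))
        · exact nuLe_of_nu_eq h1.symm
        · exact nuLe_of_nuLt h1
      have hθw' : nuLt
          (crossPt (f.coeff f.natTrailingDegree) f.natTrailingDegree (g.coeff r') r') w' :=
        nuLt_of_nuLe_of_nuLt hθα hαw'
      exact absurd gLEf_w' (nuLt_iff.mp ((hcr.2 w' hw').2.2 hθw'))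
  refine ⟨nu α₀, nu β₀, gh_nu α₀, nu_ne_zero (tang_ne_zero hαt), gh_nu β₀,
    nu_ne_zero (tang_ne_zero hβt),
    nuLt_congr_right (nu_idem β₀).symm (nuLt_congr_left (nu_idem α₀).symm hαβ),
    ?_, ?_, ?_, hdeg, htdeg⟩
  · intro a ha
    constructor
    · intro h; exact nuLt_congr_right (nu_idem β₀).symm ((hftan a ha).mp h)
    · intro h; exact (hftan a ha).mpr (nuLt_congr_right (nu_idem β₀) h)
  · intro a ha
    constructor
    · intro h; exact nuLt_congr_left (nu_idem α₀).symm ((hgtan a ha).mp h)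
    · intro h; exact (hgtan a ha).mpr (nuLt_congr_left (nu_idem α₀) h)
  · intro a ha h1 h2
    have h1' : nuLt α₀ a := nuLt_congr_left (nu_idem α₀) h1
    have h2' : nuLt a β₀ := nuLt_congr_right (nu_idem β₀) h2
    exact nuLe_antisymm (H2 a ha ((hftan a ha).mpr h2')) (H3 a ha ((hgtan a ha).mpr h1'))

end Core

end STAux

theorem stmt1 {F : Type*} [STDivSemifield F] (hconn : STConnected F)
    (f g : F[X])
    (hno : ¬ ∃ a : F, commonTangibleRoot f g a)
    (hfm : ¬ isMonomial f) (hgm : ¬ isMonomial g)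
    (hghost : ghostPoly (f + g)) :
    ∃ f' g' : F[X], ((f' = f ∧ g' = g) ∨ (f' = g ∧ g' = f)) ∧
      ∃ α β : F, ghost α ∧ α ≠ 0 ∧ ghost β ∧ β ≠ 0 ∧ nuLt α β ∧
        (∀ a : F, tangible a → (tangible (f'.eval a) ↔ nuLt a β)) ∧
        (∀ a : F, tangible a → (tangible (g'.eval a) ↔ nuLt α a)) ∧
        (∀ a : F, tangible a → nuLt α a → nuLt a β →
          nu (f'.eval a) = nu (g'.eval a)) ∧
        g'.natDegree < f'.natDegree ∧
        g'.natTrailingDegree < f'.natTrailingDegree := by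
  classical
  have hgsum : ∀ z : F, ghost (f.eval z + g.eval z) := by
    intro z
    have h := hghost z
    rwa [Polynomial.eval_add] at h
  have hgsum' : ∀ z : F, ghost (g.eval z + f.eval z) := by
    intro z; rw [add_comm]; exact hgsum z
  have hno' : ∀ z : F, tangible z → ¬(ghost (f.eval z) ∧ ghost (g.eval z)) :=
    fun z hz hc => hno ⟨z, hz, hc.1, hc.2⟩
  have hno'' : ∀ z : F, tangible z → ¬(ghost (g.eval z) ∧ ghost (f.eval z)) :=
    fun z hz hc => hno ⟨z, hz, hc.2, hc.1⟩
  have hfne := STAux.not_monomial_ne_zero hfm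
  have hgne := STAux.not_monomial_ne_zero hgm
  have htdf := STAux.not_monomial_td_lt_deg hfm
  have htdg := STAux.not_monomial_td_lt_deg hgm
  rcases Classical.em (∃ u : F, tangible u ∧ nuLt 1 u) with ⟨u, hu, hu1⟩ | htriv
  · obtain ⟨zf, hzf, hzfg⟩ := STAux.exists_ghost_point f g hu hu1 hfne htdf
    obtain ⟨zg, hzg, hzgg⟩ := STAux.exists_ghost_point g f hu hu1 hgne htdg
    rcases STAux.up_or_down hu hu1 hno' hgsum ⟨zg, hzg, hzgg⟩ with hUf | hDf
    · rcases STAux.up_or_down hu hu1 hno'' hgsum' ⟨zf, hzf, hzfg⟩ with hUg | hDg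
      · exfalso
        rcases STAux.nu_trichot zf zg with h | h | h
        · exact hno ⟨zg, hzg, hUf zf zg hzf hzg hzfg h, hzgg⟩
        · exact hno ⟨zg, hzg, STAux.ghost_eval_congr hzf hzg h hzfg, hzgg⟩
        · exact hno ⟨zf, hzf, hzfg, hUg zg zf hzg hzf hzgg h⟩
      · obtain ⟨α, β, h1, h2, h3, h4, h5, h6, h7, h8, h9, h10⟩ :=
          STAux.master f g hu hu1 hno' hgsum hfm hgm hUf hDg
        exact ⟨f, g, Or.inl ⟨rfl, rfl⟩, α, β, h1, h2, h3, h4, h5, h6, h7, h8, h9, h10⟩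
    · rcases STAux.up_or_down hu hu1 hno'' hgsum' ⟨zf, hzf, hzfg⟩ with hUg | hDg
      · obtain ⟨α, β, h1, h2, h3, h4, h5, h6, h7, h8, h9, h10⟩ :=
          STAux.master g f hu hu1 hno'' hgsum' hgm hfm hUg hDf
        exact ⟨g, f, Or.inr ⟨rfl, rfl⟩, α, β, h1, h2, h3, h4, h5, h6, h7, h8, h9, h10⟩
      · exfalso
        rcases STAux.nu_trichot zf zg with h | h | h
        · exact hno ⟨zf, hzf, hzfg, hDg zg zf hzg hzf hzgg h⟩
        · exact hno ⟨zg, hzg, STAux.ghost_eval_congr hzf hzg h hzfg, hzgg⟩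
        · exact hno ⟨zg, hzg, hDf zf zg hzf hzg hzfg h, hzgg⟩
  · exfalso
    have hall : ∀ t : F, tangible t → nu t = nu 1 := by
      intro t ht
      by_contra hne
      exact htriv (STAux.exists_gt_one_unit ht hne)
    exact hno ⟨1, STAux.tang_one,
      STAux.eval_ghost_of_trivial hall htdf hfne STAux.tang_one,
      STAux.eval_ghost_of_trivial hall htdg hgne STAux.tang_one⟩
end

section
/- Let R be a supertropical semiring and f, g, p, q ∈ R[λ]. Suppose the polynomial f + g is ghost (i.e., (f+g)(a) ∈ G₀ for every a ∈ R) and p and q are coefficientwise ν-matched (ν of each coefficient of p equals ν of the corresponding coefficient of q). Then pf + qg is ghost, i.e., (pf + qg)(a) ∈ G₀ for every a ∈ R. -/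
open Polynomial

open Supertropical

open Supertropical Polynomial


section Aux

variable {R : Type*} [Supertropical R]

/-- `nu` as an additive monoid hom. -/
def nuHom (R : Type*) [Supertropical R] : R →+ R where
  toFun := nu
  map_zero' := nu_zero
  map_add' := nu_add

lemma ghost_add_of_nuLe (x y : R) (hx : ghost x) (h : nu x + nu y = nu x) :
    ghost (x + y) := by
  rcases Supertropical.bipotence x y with h1 | h1 | ⟨h1, _⟩
  · rw [h1]; exact hx
  · have hxy : nu x = nu y := by
      have : nu y = nu (x + y) := by rw [h1]
      rw [this, nu_add, h]
    have := Supertropical.supertropicality x y hxy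
    rw [this]; exact nu_idem x
  · rw [h1]; exact nu_idem x

lemma ghost_combination (P Q F G : R) (hPQ : nu P = nu Q) (hFG : ghost (F + G)) :
    ghost (P * F + Q * G) := by
  rcases Supertropical.bipotence F G with h1 | h1 | ⟨h1, h2⟩
  · -- F + G = F, so F is ghost
    have hF : ghost F := by rw [← h1]; exact hFG
    have hFF : F + F = F := by
      have := Supertropical.supertropicality F F rfl
      rw [this, hF]
    have hPF : ghost (P * F) := by
      have h2 : P * F + P * F = nu (P * F) := Supertropical.supertropicality _ _ rfl
      have h3 : P * F + P * F = P * F := by rw [← mul_add, hFF]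
      unfold ghost; rw [← h2, h3]
    refine ghost_add_of_nuLe _ _ hPF ?_
    have hdom : nu F + nu G = nu F := by rw [← nu_add, h1]
    rw [nu_mul, nu_mul, ← hPQ, ← mul_add, hdom]
  · -- G + F = G, symmetric
    have hG : ghost G := by rw [← h1]; exact hFG
    have hGG : G + G = G := by
      have := Supertropical.supertropicality G G rfl
      rw [this, hG]
    have hQG : ghost (Q * G) := by
      have h2 : Q * G + Q * G = nu (Q * G) := Supertropical.supertropicality _ _ rfl
      have h3 : Q * G + Q * G = Q * G := by rw [← mul_add, hGG]
      unfold ghost; rw [← h2, h3]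
    rw [add_comm]
    refine ghost_add_of_nuLe _ _ hQG ?_
    have hdom : nu G + nu F = nu G := by rw [← nu_add, add_comm, h1]
    rw [nu_mul, nu_mul, hPQ, ← mul_add, hdom]
  · have hnu : nu (P * F) = nu (Q * G) := by rw [nu_mul, nu_mul, hPQ, h2]
    have := Supertropical.supertropicality (P * F) (Q * G) hnu
    rw [this]; exact nu_idem _

lemma nu_eval_eq (p q : R[X]) (hpq : ∀ i : ℕ, nu (p.coeff i) = nu (q.coeff i))
    (a : R) : nu (p.eval a) = nu (q.eval a) := by
  set n := max p.natDegree q.natDegree + 1 with hn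
  have hp : p.eval a = ∑ i ∈ Finset.range n, p.coeff i * a ^ i :=
    Polynomial.eval_eq_sum_range' (Nat.lt_succ_of_le (le_max_left _ _)) a
  have hq : q.eval a = ∑ i ∈ Finset.range n, q.coeff i * a ^ i :=
    Polynomial.eval_eq_sum_range' (Nat.lt_succ_of_le (le_max_right _ _)) a
  rw [hp, hq]
  rw [show (nu : R → R) = (nuHom R : R → R) from rfl, map_sum, map_sum]
  refine Finset.sum_congr rfl fun i _ => ?_
  show nu (p.coeff i * a ^ i) = nu (q.coeff i * a ^ i)
  rw [nu_mul, nu_mul, hpq i]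

end Aux

/-- if `f + g` is ghost and `p`, `q` are coefficientwise
ν-matched, then `p·f + q·g` is ghost. -/
theorem stmt5 {R : Type*} [Supertropical R] (f g p q : R[X])
    (hfg : ghostPoly (f + g))
    (hpq : ∀ i : ℕ, nu (p.coeff i) = nu (q.coeff i)) :
    ghostPoly (p * f + q * g) := by
  intro a
  have heval : (p * f + q * g).eval a = p.eval a * f.eval a + q.eval a * g.eval a := by
    simp
  rw [heval]
  exact ghost_combination _ _ _ _ (nu_eval_eq p q hpq a) (by simpa using hfg a)
end

section
/- Let F be a supertropical semifield and let f = ∑_{i=0}^m α_i λ^i and g = ∑_{j=0}^n β_j λ^j be full polynomials of degrees m ≥ 1 and n ≥ 1 all of whose coefficients α_i, β_j are tangible. Set a_i = α_{i-1}/α_i for 1 ≤ i ≤ m and b_j = β_{j-1}/β_j for 1 ≤ j ≤ n. Then |Re(f,g)| = α_m^n · β_n^m · ∏_{i=1}^m ∏_{j=1}^n (a_i + b_j). -/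
open Polynomial

open Supertropical

/-!
Write `α_k = α_m ∏_{t > k} a_t` and `β_k = β_n ∏_{t > k} b_t`; fullness makes `a₁, …, a_m` and
`b₁, …, b_n` ν-nondecreasing. After multiplying each row of the Sylvester matrix by a suitable
tangible weight, every nonzero entry of column `j` becomes the leading coefficient of its row times
`∏_{t > p} a_t · ∏_{t > q} b_t` for a split `p + q = j + 1`. Along such splits this product is
unimodal in ν, with its maximum at the split read off from merging the two sorted sequences, so the
product of the entries of any permutation is ν-bounded by the product of the column maxima. The
merge also yields a permutation attaining every column maximum, with product
`α_m^n β_n^m ∏ max(a_i, b_j)`. Without ties `a_i^ν = b_j^ν` this permutation is the unique maximal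
one, so the permanent equals its product, and `max(a_i, b_j) = a_i + b_j`. A tie lets one swap two
adjacent columns of it to get a second maximal permutation, so the permanent is the ghost of that
product, and so is the right-hand side.
-/

theorem Nat.rel_of_forall_rel_succ_of_le_of_lt_of_le {α : Type*} (r : α → α → Prop) [IsTrans α r]
    {F : ℕ → α} {lo hi : ℕ} (h : ∀ k, lo ≤ k → k < hi → r (F k) (F (k + 1))) {p q : ℕ}
    (hp : lo ≤ p) (hpq : p < q) (hq : q ≤ hi) : r (F p) (F q) := by
  induction q, hpq using Nat.le_induction with
  | base => exact h p hp hq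
  | succ q hpq ih => exact _root_.trans (ih (by omega)) (h q (by omega) hq)

theorem Nat.exists_step_up_of_lt {f : ℕ → ℕ} (hf : ∀ u, f (u + 1) ≤ f u + 1) {s t : ℕ}
    (h0 : f 0 ≤ t) (ht : t < f s) : ∃ u < s, f u = t ∧ f (u + 1) = t + 1 := by
  induction s with
  | zero => omega
  | succ s ih =>
    by_cases hs : t < f s
    · obtain ⟨u, hu, hfu⟩ := ih hs
      exact ⟨u, by omega, hfu⟩
    · exact ⟨s, by omega, by have := hf s; omega, by have := hf s; omega⟩

theorem Finset.prod_Icc_succ_bot {M : Type*} [CommMonoid M] {a b : ℕ} (hab : a ≤ b)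
    (f : ℕ → M) : ∏ k ∈ Finset.Icc a b, f k = f a * ∏ k ∈ Finset.Icc (a + 1) b, f k := by
  rw [← Finset.mul_prod_Ioc_eq_prod_Icc hab, Finset.Icc_add_one_left_eq_Ioc]

theorem Finset.prod_comp_swap_mul {ι M : Type*} [Fintype ι] [DecidableEq ι] [CommMonoid M]
    (F : ι → ι → M) (τ : ι → ι) {i j : ι} (hij : i ≠ j) :
    (∏ k, F (τ (Equiv.swap i j k)) k) * (F (τ i) i * F (τ j) j) =
      (∏ k, F (τ k) k) * (F (τ j) i * F (τ i) j) := by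
  have split (G : ι → M) : ∏ k, G k = G i * G j * ∏ k ∈ (Finset.univ.erase i).erase j, G k := by
    rw [mul_assoc, Finset.mul_prod_erase _ _ (Finset.mem_erase.2 ⟨hij.symm, Finset.mem_univ j⟩),
      Finset.mul_prod_erase _ _ (Finset.mem_univ i)]
  rw [split, split fun k => F (τ k) k, Equiv.swap_apply_left, Equiv.swap_apply_right,
    Finset.prod_congr rfl fun k hk => by
      rw [Equiv.swap_apply_of_ne_of_ne (Finset.ne_of_mem_erase (Finset.mem_of_mem_erase hk))
        (Finset.ne_of_mem_erase hk)]]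
  ac_rfl

theorem sdet_eq_permanent {R : Type*} [CommSemiring R] {k : ℕ} (A : Matrix (Fin k) (Fin k) R) :
    sdet A = A.permanent := by
  rw [← Matrix.permanent_transpose]
  rfl

section resMatrix

variable {R : Type*} [CommSemiring R] {m n : ℕ} {f g : R[X]} {r j : Fin (m + n)}

theorem resMatrix_apply_of_lt (hr : (r : ℕ) < n) :
    resMatrix m n f g r j = if (r : ℕ) ≤ j then f.coeff (j - r) else 0 :=
  if_pos hr

theorem resMatrix_apply_of_le (hr : n ≤ (r : ℕ)) :
    resMatrix m n f g r j = if (r : ℕ) - n ≤ j then g.coeff (j - (r - n)) else 0 :=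
  if_neg (by omega)

end resMatrix

namespace Supertropical

/-! ### The ν-order -/

section NuOrder

variable {R : Type*} [Supertropical R] {a b c d : R}

theorem add_self_eq_nu (a : R) : a + a = nu a := supertropicality a a rfl

theorem nuLe_of_nu_eq (h : nu a = nu b) : nuLe a b := by
  rw [nuLe, h, add_self_eq_nu, nu_idem]

theorem nuLe_refl (a : R) : nuLe a a := nuLe_of_nu_eq rfl

theorem nuLe.trans (hab : nuLe a b) (hbc : nuLe b c) : nuLe a c := by
  rw [nuLe, ← hbc, ← add_assoc, hab]

instance : IsTrans R nuLe := ⟨fun _ _ _ => nuLe.trans⟩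

theorem nuLe_total (a b : R) : nuLe a b ∨ nuLe b a := by
  rcases bipotence (nu a) (nu b) with h | h | ⟨h, -⟩
  · exact Or.inr (by rwa [nuLe, add_comm])
  · exact Or.inl h
  · rw [nu_idem] at h
    exact Or.inr (by rwa [nuLe, add_comm])

theorem nuLe.nu_eq (hab : nuLe a b) (hba : nuLe b a) : nu a = nu b :=
  calc nu a = nu b + nu a := hba.symm
    _ = nu b := by rw [add_comm, hab]

theorem nuLt.not_nuLe (h : nuLt a b) : ¬ nuLe b a := fun h' => h.2 (h.1.nu_eq h')

theorem nuLt_of_not_nuLe (h : ¬ nuLe a b) : nuLt b a :=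
  ⟨(nuLe_total a b).resolve_left h, fun he => h (nuLe_of_nu_eq he.symm)⟩

theorem nuLe.trans_nuLt (hab : nuLe a b) (hbc : nuLt b c) : nuLt a c :=
  ⟨hab.trans hbc.1, fun he => hbc.not_nuLe ((nuLe_of_nu_eq he.symm).trans hab)⟩

theorem nuLt.trans_nuLe (hab : nuLt a b) (hbc : nuLe b c) : nuLt a c :=
  ⟨hab.1.trans hbc, fun he => hab.not_nuLe (hbc.trans (nuLe_of_nu_eq he.symm))⟩

instance : IsTrans R nuLt := ⟨fun _ _ _ hab hbc => hab.trans_nuLe hbc.1⟩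

theorem zero_nuLe (a : R) : nuLe 0 a := by
  rw [nuLe, nu_zero, zero_add]

theorem nuLe.mul_right (h : nuLe a b) (c : R) : nuLe (a * c) (b * c) := by
  rw [nuLe, nu_mul, nu_mul, ← add_mul, h]

theorem nuLe.mul (hab : nuLe a b) (hcd : nuLe c d) : nuLe (a * c) (b * d) :=
  (hab.mul_right c).trans (by simpa only [mul_comm b] using hcd.mul_right b)

theorem add_eq_left_of_nuLt (h : nuLt b a) : a + b = a := by
  rcases bipotence a b with h' | h' | ⟨-, he⟩
  · exact h'
  · exact absurd (by rw [nuLe, ← nu_add, h']) h.not_nuLe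
  · exact absurd he.symm h.2

theorem add_eq_right_of_nuLt (h : nuLt a b) : a + b = b := by
  rw [add_comm]
  exact add_eq_left_of_nuLt h

theorem nu_add_eq_of_nuLe (h : nuLe b a) : nu a + b = nu a := by
  by_cases he : nu b = nu a
  · rw [supertropicality (nu a) b (by rw [nu_idem, he]), nu_idem]
  · exact add_eq_left_of_nuLt ⟨by rwa [nuLe, nu_idem], by rwa [nu_idem]⟩

theorem ghost.mul_right (h : ghost a) (b : R) : ghost (a * b) := by
  rw [ghost, ← add_self_eq_nu, ← add_mul, add_self_eq_nu, h]

theorem nu_eq_of_nu_mul_right_eq (h : nu (a * c) = nu (b * c)) (hc : IsUnit c) : nu a = nu b := by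
  obtain ⟨c', hc'⟩ := hc.exists_right_inv
  calc nu a = nu (a * c) * nu c' := by rw [← nu_mul, mul_assoc, hc', mul_one]
    _ = nu b := by rw [h, ← nu_mul, mul_assoc, hc', mul_one]

theorem nu_eq_of_mul_eq_mul (h : a * c = b * d) (hcd : nu c = nu d) (hc : IsUnit c) :
    nu a = nu b :=
  nu_eq_of_nu_mul_right_eq (by rw [h, nu_mul, nu_mul, hcd]) hc

theorem nuLe_mul_right_iff (hc : IsUnit c) : nuLe (a * c) (b * c) ↔ nuLe a b := by
  refine ⟨fun h => ?_, fun h => h.mul_right c⟩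
  obtain ⟨c', hc'⟩ := hc.exists_right_inv
  simpa only [mul_assoc, hc', mul_one] using h.mul_right c'

theorem nuLt_mul_right_iff (hc : IsUnit c) : nuLt (a * c) (b * c) ↔ nuLt a b :=
  ⟨fun h => ⟨(nuLe_mul_right_iff hc).1 h.1, fun he => h.2 (by rw [nu_mul, nu_mul, he])⟩,
    fun h => ⟨h.1.mul_right c, fun he => h.2 (nu_eq_of_nu_mul_right_eq he hc)⟩⟩

theorem nuLt.mul_right (h : nuLt a b) (hc : IsUnit c) : nuLt (a * c) (b * c) :=
  (nuLt_mul_right_iff hc).2 h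

theorem nuLe_add (ha : nuLe a c) (hb : nuLe b c) : nuLe (a + b) c := by
  rw [nuLe, nu_add, add_assoc, hb, ha]

theorem nuLt_add (ha : nuLt a c) (hb : nuLt b c) : nuLt (a + b) c := by
  refine ⟨nuLe_add ha.1 hb.1, ?_⟩
  rcases nuLe_total a b with h | h
  · rw [nu_add, h]; exact hb.2
  · rw [nu_add, add_comm, h]; exact ha.2

open Classical in
noncomputable def nuMax (a b : R) : R := if nuLe a b then b else a

theorem nuMax_of_nuLe (h : nuLe a b) : nuMax a b = b := by
  rw [nuMax, if_pos h]

theorem nuMax_of_nuLt (h : nuLt b a) : nuMax a b = a := by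
  rw [nuMax, if_neg h.not_nuLe]

theorem nu_add_eq_nu_nuMax (a b : R) : nu (a + b) = nu (nuMax a b) := by
  rw [nu_add]
  by_cases h : nuLe a b
  · rw [nuMax_of_nuLe h, h]
  · rw [nuMax_of_nuLt (nuLt_of_not_nuLe h), add_comm, (nuLt_of_not_nuLe h).1]

theorem add_eq_nuMax (h : nu a ≠ nu b) : a + b = nuMax a b := by
  by_cases hab : nuLe a b
  · rw [nuMax_of_nuLe hab, add_eq_right_of_nuLt ⟨hab, h⟩]
  · rw [nuMax_of_nuLt (nuLt_of_not_nuLe hab), add_eq_left_of_nuLt (nuLt_of_not_nuLe hab)]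

variable {ι : Type*} {s : Finset ι} {x y : ι → R}

theorem nuLe_sum (h : ∀ i ∈ s, nuLe (x i) c) : nuLe (∑ i ∈ s, x i) c :=
  Finset.sum_induction x (nuLe · c) (fun _ _ => nuLe_add) (zero_nuLe c) h

theorem nuLt_sum (hs : s.Nonempty) (h : ∀ i ∈ s, nuLt (x i) c) : nuLt (∑ i ∈ s, x i) c :=
  Finset.sum_induction_nonempty x (nuLt · c) (fun _ _ => nuLt_add) hs h

theorem sum_eq_of_nuLt [DecidableEq ι] {i₀ : ι} (hi₀ : i₀ ∈ s)
    (h : ∀ i ∈ s, i ≠ i₀ → nuLt (x i) (x i₀)) : ∑ i ∈ s, x i = x i₀ := by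
  rw [← Finset.add_sum_erase s x hi₀]
  rcases (s.erase i₀).eq_empty_or_nonempty with he | hne
  · rw [he, Finset.sum_empty, add_zero]
  · exact add_eq_left_of_nuLt <| nuLt_sum hne fun i hi =>
      h i (Finset.mem_of_mem_erase hi) (Finset.ne_of_mem_erase hi)

theorem sum_eq_nu_of_nu_eq [DecidableEq ι] {i₀ i₁ : ι} (hi₀ : i₀ ∈ s) (hi₁ : i₁ ∈ s)
    (hne : i₁ ≠ i₀) (he : nu (x i₁) = nu (x i₀)) (h : ∀ i ∈ s, nuLe (x i) (x i₀)) :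
    ∑ i ∈ s, x i = nu (x i₀) := by
  rw [← Finset.add_sum_erase s x hi₀, ← Finset.add_sum_erase _ x (Finset.mem_erase.2 ⟨hne, hi₁⟩),
    ← add_assoc, supertropicality _ _ he.symm]
  exact nu_add_eq_of_nuLe <| nuLe_sum fun i hi =>
    h i (Finset.mem_of_mem_erase (Finset.mem_of_mem_erase hi))

theorem nuLe_prod (h : ∀ i ∈ s, nuLe (x i) (y i)) : nuLe (∏ i ∈ s, x i) (∏ i ∈ s, y i) := by
  induction s using Finset.cons_induction with
  | empty => exact nuLe_refl 1
  | cons i s hi ih =>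
    simp only [Finset.prod_cons]
    exact (h i (Finset.mem_cons_self i s)).mul (ih fun j hj => h j (Finset.mem_cons_of_mem hj))

theorem nu_prod_congr (h : ∀ i ∈ s, nu (x i) = nu (y i)) :
    nu (∏ i ∈ s, x i) = nu (∏ i ∈ s, y i) :=
  (nuLe_prod fun i hi => nuLe_of_nu_eq (h i hi)).nu_eq
    (nuLe_prod fun i hi => nuLe_of_nu_eq (h i hi).symm)

theorem nuLt_prod [DecidableEq ι] {i₀ : ι} (hi₀ : i₀ ∈ s) (h : ∀ i ∈ s, nuLe (x i) (y i))
    (hlt : nuLt (x i₀) (y i₀)) (hx : ∀ i ∈ s, IsUnit (x i)) :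
    nuLt (∏ i ∈ s, x i) (∏ i ∈ s, y i) := by
  rw [← Finset.mul_prod_erase s x hi₀, ← Finset.mul_prod_erase s y hi₀]
  refine (hlt.mul_right (Finset.prod_induction _ IsUnit (fun _ _ => IsUnit.mul) isUnit_one
    fun i hi => hx i (Finset.mem_of_mem_erase hi))).trans_nuLe ?_
  simpa only [mul_comm (y i₀)] using
    (nuLe_prod fun i hi => h i (Finset.mem_of_mem_erase hi)).mul_right (y i₀)

theorem ghost_prod_of_mem [DecidableEq ι] {i₀ : ι} (hi₀ : i₀ ∈ s) (h : ghost (x i₀)) :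
    ghost (∏ i ∈ s, x i) := by
  rw [← Finset.mul_prod_erase s x hi₀]
  exact h.mul_right _

theorem nu_mul_prod_prod_nuMax {κ : Type*} [DecidableEq ι] [DecidableEq κ] (c : R)
    {t : Finset κ} (a : ι → R) (b : κ → R) {i₀ : ι} {j₀ : κ} (hi₀ : i₀ ∈ s) (hj₀ : j₀ ∈ t)
    (he : nu (a i₀) = nu (b j₀)) :
    nu (c * ∏ i ∈ s, ∏ j ∈ t, nuMax (a i) (b j)) = c * ∏ i ∈ s, ∏ j ∈ t, (a i + b j) := by
  have hghost : ghost (c * ∏ i ∈ s, ∏ j ∈ t, (a i + b j)) := by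
    rw [mul_comm]
    refine (ghost_prod_of_mem hi₀ (ghost_prod_of_mem hj₀ ?_)).mul_right c
    rw [ghost, supertropicality _ _ he, nu_idem]
  rw [← hghost, nu_mul, nu_mul, nu_prod_congr fun i _ => nu_prod_congr fun j _ =>
    (nu_add_eq_nu_nuMax (a i) (b j)).symm]

end NuOrder

section Tangible

variable {K : Type*} [STSemifield K] {x : K}

theorem tangible.ne_zero (h : tangible x) : x ≠ 0 := by
  rintro rfl
  exact h nu_zero

theorem tangible.isUnit (h : tangible x) : IsUnit x := by
  obtain ⟨y, -, hy⟩ := STSemifield.tangible_inv x h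
  exact isUnit_iff_exists_inv.mpr ⟨y, hy⟩

theorem tangible.nu_ne_zero (h : tangible x) : nu x ≠ 0 := by
  intro h0
  have hx : x = 0 := by rw [← add_zero x, supertropicality x 0 (by rw [h0, nu_zero]), h0]
  exact h.ne_zero hx

theorem tangible_prod {ι : Type*} {s : Finset ι} {f : ι → K} (h : ∀ i ∈ s, tangible (f i)) :
    tangible (∏ i ∈ s, f i) :=
  Finset.prod_induction f tangible STSemifield.tangible_mul STSemifield.tangible_one h

end Tangible

section TailProd

variable {M : Type*} [CommMonoid M] (m : ℕ) (a : ℕ → M)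

def tailProd (p : ℕ) : M := ∏ t ∈ Finset.Icc (p + 1) m, a t

variable {m a}

theorem tailProd_eq_mul {p : ℕ} (h : p < m) :
    tailProd m a p = a (p + 1) * tailProd m a (p + 1) :=
  Finset.prod_Icc_succ_bot h a

theorem tailProd_self : tailProd m a m = 1 := by
  rw [tailProd, Finset.Icc_eq_empty (by omega), Finset.prod_empty]

theorem eq_mul_tailProd {c : ℕ → M} (hc : ∀ i, 1 ≤ i → i ≤ m → c i * a i = c (i - 1)) {r : ℕ}
    (hr : r ≤ m) : c r = c m * tailProd m a r := by
  induction hr using Nat.decreasingInduction with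
  | self => rw [tailProd_self, mul_one]
  | of_succ r hr ih =>
    rw [tailProd_eq_mul hr, ← mul_assoc, mul_right_comm, ← ih, hc (r + 1) (by omega) hr,
      Nat.add_sub_cancel]

theorem coeff_eq_ite_tailProd {R : Type*} [CommSemiring R] {f : R[X]} {a : ℕ → R}
    (hf : f.natDegree = m) (ha : ∀ i, 1 ≤ i → i ≤ m → f.coeff i * a i = f.coeff (i - 1))
    (r : ℕ) : f.coeff r = if r ≤ m then f.coeff m * tailProd m a r else 0 := by
  split_ifs with hr
  · exact eq_mul_tailProd ha hr
  · exact f.coeff_eq_zero_of_natDegree_lt (by omega)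

end TailProd

def TangibleOn {R : Type*} [Supertropical R] (m : ℕ) (a : ℕ → R) : Prop :=
  ∀ i, 1 ≤ i → i ≤ m → tangible (a i)

theorem tangible_tailProd {K : Type*} [STSemifield K] {m : ℕ} {a : ℕ → K} (ha : TangibleOn m a)
    (p : ℕ) : tangible (tailProd m a p) :=
  tangible_prod fun t ht => by rw [Finset.mem_Icc] at ht; exact ha t (by omega) ht.2

def NuSorted {R : Type*} [Supertropical R] (n : ℕ) (b : ℕ → R) : Prop :=
  ∀ j, 1 ≤ j → j < n → nuLe (b j) (b (j + 1))

theorem NuSorted.nuLe {R : Type*} [Supertropical R] {n : ℕ} {b : ℕ → R} (h : NuSorted n b)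
    {i j : ℕ} (hi : 1 ≤ i) (hij : i ≤ j) (hj : j ≤ n) : nuLe (b i) (b j) := by
  rcases hij.eq_or_lt with rfl | hlt
  · exact nuLe_refl _
  · exact Nat.rel_of_forall_rel_succ_of_le_of_lt_of_le _ (fun k hk hkn => h k hk hkn) hi hlt hj

theorem nuSorted_of_fullPoly {K : Type*} [STSemifield K] {f : K[X]} {m : ℕ} {a : ℕ → K}
    (hf : f.natDegree = m) (hfull : fullPoly f) (htf : ∀ i ≤ m, tangible (f.coeff i))
    (ha : ∀ i, 1 ≤ i → i ≤ m → f.coeff i * a i = f.coeff (i - 1)) : NuSorted m a := by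
  intro i hi him
  have hunit := (STSemifield.tangible_mul _ _ (htf i him.le) (htf (i + 1) him)).isUnit
  have h₁ := ha i hi him.le
  have h₂ := ha (i + 1) (by omega) him
  rw [Nat.add_sub_cancel] at h₂
  rw [← nuLe_mul_right_iff hunit]
  convert hfull.2 i hi (hf ▸ him) using 1
  · rw [← h₁]; ring
  · rw [← h₂]; ring

/-! ### Merging two ν-sorted sequences -/

structure NuSortedPair (R : Type*) [Supertropical R] where
  m : ℕ
  n : ℕ
  a : ℕ → R
  b : ℕ → R
  a_sorted : NuSorted m a
  b_sorted : NuSorted n b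

namespace NuSortedPair

section Merge

variable {R : Type*} [Supertropical R] (S : NuSortedPair R)

open Classical in
/-- `S.x s` is the number of `a`'s among the first `s` terms of the merge of `a₁, …, a_m` and
`b₁, …, b_n` into one ν-sorted sequence, in which an `a` precedes a `b` of the same ν-value. -/
noncomputable def x : ℕ → ℕ
  | 0 => 0
  | s + 1 =>
    if x s < S.m ∧ (S.n ≤ s - x s ∨ nuLe (S.a (x s + 1)) (S.b (s - x s + 1))) then
      x s + 1
    else x s

noncomputable def y (s : ℕ) : ℕ := s - S.x s

def IsAStep (s : ℕ) : Prop := S.x (s + 1) = S.x s + 1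

theorem x_zero : S.x 0 = 0 := rfl

theorem x_succ_eq_or (s : ℕ) : S.x (s + 1) = S.x s + 1 ∨ S.x (s + 1) = S.x s := by
  rw [x]
  split_ifs <;> simp

theorem x_le_self (s : ℕ) : S.x s ≤ s := by
  induction s with
  | zero => rfl
  | succ s ih => rcases S.x_succ_eq_or s with h | h <;> omega

theorem x_add_y (s : ℕ) : S.x s + S.y s = s := by
  have := S.x_le_self s
  rw [y]
  omega

theorem isAStep_iff (s : ℕ) : S.IsAStep s ↔
    S.x s < S.m ∧ (S.n ≤ S.y s ∨ nuLe (S.a (S.x s + 1)) (S.b (S.y s + 1))) := by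
  rw [IsAStep, x, y]
  split_ifs with h <;> simp [h]

theorem x_lt_of_isAStep {s : ℕ} (h : S.IsAStep s) : S.x s < S.m :=
  ((S.isAStep_iff s).1 h).1

theorem x_succ_of_not_isAStep {s : ℕ} (h : ¬ S.IsAStep s) : S.x (s + 1) = S.x s :=
  (S.x_succ_eq_or s).resolve_left h

theorem y_succ_of_isAStep {s : ℕ} (h : S.IsAStep s) : S.y (s + 1) = S.y s := by
  have := S.x_add_y s
  have := S.x_add_y (s + 1)
  rw [IsAStep] at h
  omega

theorem y_succ_of_not_isAStep {s : ℕ} (h : ¬ S.IsAStep s) : S.y (s + 1) = S.y s + 1 := by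
  have := S.x_add_y s
  have := S.x_add_y (s + 1)
  have := S.x_succ_of_not_isAStep h
  omega

theorem x_le (s : ℕ) : S.x s ≤ S.m := by
  induction s with
  | zero => exact Nat.zero_le _
  | succ s ih =>
    by_cases h : S.IsAStep s
    · rw [h]
      exact S.x_lt_of_isAStep h
    · rw [S.x_succ_of_not_isAStep h]
      exact ih

theorem y_le {s : ℕ} (hs : s ≤ S.m + S.n) : S.y s ≤ S.n := by
  induction s with
  | zero => exact Nat.zero_le _
  | succ s ih =>
    by_cases h : S.IsAStep s
    · rw [S.y_succ_of_isAStep h]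
      exact ih (by omega)
    · rw [S.y_succ_of_not_isAStep h]
      have := S.x_add_y s
      by_cases hxm : S.x s < S.m
      · have := mt (S.isAStep_iff s).2 h
        omega
      · omega

theorem y_lt_of_not_isAStep {s : ℕ} (h : ¬ S.IsAStep s) (hs : s < S.m + S.n) : S.y s < S.n := by
  have := S.y_le (s := s + 1) hs
  rw [S.y_succ_of_not_isAStep h] at this
  omega

theorem x_mono : Monotone S.x :=
  monotone_nat_of_le_succ fun s => by rcases S.x_succ_eq_or s with h | h <;> omega

theorem y_mono : Monotone S.y :=
  monotone_nat_of_le_succ fun s => by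
    by_cases h : S.IsAStep s
    · rw [S.y_succ_of_isAStep h]
    · rw [S.y_succ_of_not_isAStep h]; omega

theorem x_m_add_n : S.x (S.m + S.n) = S.m := by
  have := S.x_le (S.m + S.n)
  have := S.y_le le_rfl
  have := S.x_add_y (S.m + S.n)
  omega

theorem nuLe_next_of_isAStep {s : ℕ} (h : S.IsAStep s) (hy : S.y s < S.n) :
    nuLe (S.a (S.x s + 1)) (S.b (S.y s + 1)) :=
  ((S.isAStep_iff s).1 h).2.resolve_left (by omega)

theorem nuLt_next_of_not_isAStep {s : ℕ} (h : ¬ S.IsAStep s) (hx : S.x s < S.m) :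
    S.y s < S.n ∧ nuLt (S.b (S.y s + 1)) (S.a (S.x s + 1)) := by
  rw [isAStep_iff] at h
  push Not at h
  obtain ⟨hy, hlt⟩ := h hx
  exact ⟨hy, nuLt_of_not_nuLe hlt⟩

theorem nuLe_last_a_next_b {s : ℕ} (hx : 1 ≤ S.x s) (hy : S.y s < S.n) :
    nuLe (S.a (S.x s)) (S.b (S.y s + 1)) := by
  induction s with
  | zero => exact absurd hx (by simp [x_zero])
  | succ s ih =>
    by_cases h : S.IsAStep s
    · rw [S.y_succ_of_isAStep h] at hy ⊢
      rw [h]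
      exact S.nuLe_next_of_isAStep h hy
    · rw [S.y_succ_of_not_isAStep h] at hy ⊢
      rw [S.x_succ_of_not_isAStep h] at hx ⊢
      exact (ih hx (by omega)).trans (S.b_sorted.nuLe (by omega) (by omega) hy)

theorem nuLt_last_b_next_a {s : ℕ} (hy : 1 ≤ S.y s) (hx : S.x s < S.m) :
    nuLt (S.b (S.y s)) (S.a (S.x s + 1)) := by
  induction s with
  | zero => exact absurd hy (by simp [y, x_zero])
  | succ s ih =>
    by_cases h : S.IsAStep s
    · rw [S.y_succ_of_isAStep h] at hy ⊢
      rw [h] at hx ⊢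
      exact (ih hy (by omega)).trans_nuLe (S.a_sorted.nuLe (by omega) (by omega) hx)
    · rw [S.y_succ_of_not_isAStep h]
      rw [S.x_succ_of_not_isAStep h] at hx ⊢
      exact (S.nuLt_next_of_not_isAStep h hx).2

theorem exists_isAStep_eq {s t : ℕ} (ht : t < S.x s) : ∃ u < s, S.IsAStep u ∧ S.x u = t := by
  obtain ⟨u, hu, hxu, hxu'⟩ := Nat.exists_step_up_of_lt
    (fun u => by rcases S.x_succ_eq_or u with h | h <;> omega) (S.x_zero.trans_le t.zero_le) ht
  exact ⟨u, hu, by rw [IsAStep, hxu, hxu'], hxu⟩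

theorem exists_not_isAStep_eq {s t : ℕ} (ht : t < S.y s) :
    ∃ u < s, ¬ S.IsAStep u ∧ S.y u = t := by
  have hstep (u : ℕ) : S.y (u + 1) ≤ S.y u + 1 := by
    by_cases h : S.IsAStep u
    · rw [S.y_succ_of_isAStep h]; omega
    · rw [S.y_succ_of_not_isAStep h]
  obtain ⟨u, hu, hyu, hyu'⟩ := Nat.exists_step_up_of_lt hstep (Nat.zero_le t) ht
  exact ⟨u, hu, fun h => by rw [S.y_succ_of_isAStep h] at hyu'; omega, hyu⟩

def NoTie : Prop := ∀ i j, 1 ≤ i → i ≤ S.m → 1 ≤ j → j ≤ S.n → nu (S.a i) ≠ nu (S.b j)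

/-- The `a` placed at step `u` of the merge ties with the next `b`. -/
def IsTieStep (u : ℕ) : Prop :=
  S.IsAStep u ∧ S.y u < S.n ∧ nu (S.a (S.x u + 1)) = nu (S.b (S.y u + 1))

theorem exists_isTieStep {i j : ℕ} (hi : 1 ≤ i) (him : i ≤ S.m) (hj : 1 ≤ j) (hjn : j ≤ S.n)
    (he : nu (S.a i) = nu (S.b j)) : ∃ u, S.IsTieStep u := by
  obtain ⟨u, -, hA, hxu⟩ := S.exists_isAStep_eq (s := S.m + S.n) (t := i - 1)
    (by rw [x_m_add_n]; omega)
  -- `b j` cannot precede `a i` in the merge, since it would then be strictly smaller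
  have hyu : S.y u < j := by
    by_contra hle
    obtain ⟨w, hwu, hB, hyw⟩ := S.exists_not_isAStep_eq (s := u) (t := j - 1) (by omega)
    have hxw : S.x w ≤ i - 1 := hxu ▸ S.x_mono hwu.le
    have hlt := (S.nuLt_next_of_not_isAStep hB (by omega)).2
    rw [show S.y w + 1 = j by omega] at hlt
    exact (hlt.trans_nuLe (S.a_sorted.nuLe (by omega) (by omega) him)).2 he.symm
  have hle := S.nuLe_next_of_isAStep hA (by omega)
  refine ⟨u, hA, by omega, ?_⟩
  rw [show S.x u + 1 = i by omega] at hle ⊢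
  exact hle.nu_eq ((S.b_sorted.nuLe (by omega) (by omega) hjn).trans (nuLe_of_nu_eq he.symm))

theorem IsTieStep.succ {u : ℕ} (hu : S.IsTieStep u) (hA : S.IsAStep (u + 1)) :
    S.IsTieStep (u + 1) := by
  obtain ⟨hAu, hyu, htie⟩ := hu
  have hy := S.y_succ_of_isAStep hAu
  have hx : S.x (u + 1) = S.x u + 1 := hAu
  have hxm := S.x_lt_of_isAStep hA
  have hle := S.nuLe_next_of_isAStep hA (by omega)
  refine ⟨hA, by omega, ?_⟩
  rw [hx, hy] at hle ⊢
  exact hle.nu_eq ((nuLe_of_nu_eq htie.symm).trans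
    (S.a_sorted.nuLe (by omega) (by omega) (by omega)))

theorem exists_isTieStep_not_isAStep_succ {i j : ℕ} (hi : 1 ≤ i) (him : i ≤ S.m) (hj : 1 ≤ j)
    (hjn : j ≤ S.n) (he : nu (S.a i) = nu (S.b j)) :
    ∃ u, u + 1 < S.m + S.n ∧ S.IsTieStep u ∧ ¬ S.IsAStep (u + 1) := by
  obtain ⟨u₀, hu₀⟩ := S.exists_isTieStep hi him hj hjn he
  by_contra! hnot
  -- otherwise the run of `a`-steps starting at `u₀` would never end
  have run (k : ℕ) : S.IsTieStep (u₀ + k) ∧ k ≤ S.x (u₀ + k) := by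
    induction k with
    | zero => exact ⟨hu₀, Nat.zero_le _⟩
    | succ k ih =>
      rw [← add_assoc]
      obtain ⟨hP, hk⟩ := ih
      have hA : S.IsAStep (u₀ + k + 1) := hnot (u₀ + k) (by
        have := S.x_add_y (u₀ + k + 1)
        have := S.x_le (u₀ + k + 1)
        have := S.y_succ_of_isAStep hP.1
        have := hP.2.1
        omega) hP
      exact ⟨IsTieStep.succ S hP hA, by have : S.x (u₀ + k + 1) = _ := hP.1; omega⟩
  have := (run (S.m + 1)).2
  have := S.x_le (u₀ + (S.m + 1))
  omega

end Merge

/-! ### Products along an antidiagonal -/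

section Split

variable {R : Type*} [Supertropical R] (S : NuSortedPair R)

def splitProd (p q : ℕ) : R := tailProd S.m S.a p * tailProd S.n S.b q

noncomputable def optProd (s : ℕ) : R := S.splitProd (S.x s) (S.y s)

theorem splitProd_step {p q : ℕ} (hp : p < S.m) (hq : q < S.n) :
    S.splitProd p (q + 1) = S.a (p + 1) * S.splitProd (p + 1) (q + 1) ∧
      S.splitProd (p + 1) q = S.b (q + 1) * S.splitProd (p + 1) (q + 1) := by
  simp only [splitProd, tailProd_eq_mul hp, tailProd_eq_mul hq]
  constructor <;> ring

theorem nu_splitProd_eq_of_nu_eq {p q : ℕ} (hp : p < S.m) (hq : q < S.n)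
    (he : nu (S.a (p + 1)) = nu (S.b (q + 1))) :
    nu (S.splitProd (p + 1) q) = nu (S.splitProd p (q + 1)) := by
  obtain ⟨h₁, h₂⟩ := S.splitProd_step hp hq
  rw [h₁, h₂, nu_mul, nu_mul, he]

theorem tangible_splitProd {K : Type*} [STSemifield K] {S : NuSortedPair K}
    (ha : TangibleOn S.m S.a) (hb : TangibleOn S.n S.b) (p q : ℕ) : tangible (S.splitProd p q) :=
  STSemifield.tangible_mul _ _ (tangible_tailProd ha p) (tangible_tailProd hb q)

theorem splitProd_antidiag_step {s k : ℕ} (hk : k < S.m) (hks : k < s) (hq : s - k ≤ S.n) :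
    S.splitProd k (s - k) = S.a (k + 1) * S.splitProd (k + 1) (s - k) ∧
      S.splitProd (k + 1) (s - (k + 1)) = S.b (s - k) * S.splitProd (k + 1) (s - k) := by
  have := S.splitProd_step (p := k) (q := s - (k + 1)) hk (by omega)
  rwa [show s - (k + 1) + 1 = s - k by omega] at this

theorem nuLe_a_b_of_lt_x {s k : ℕ} (hk : k < S.x s) (hq : s - k ≤ S.n) :
    nuLe (S.a (k + 1)) (S.b (s - k)) := by
  have := S.x_add_y s
  have hab : nuLe (S.a (S.x s)) (S.b (S.y s + 1)) := S.nuLe_last_a_next_b (by omega) (by omega)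
  exact ((S.a_sorted.nuLe (by omega) hk (S.x_le s)).trans hab).trans
    (S.b_sorted.nuLe (by omega) (by omega) hq)

theorem splitProd_nuLe_optProd_of_le_x {s p : ℕ} (hp : p ≤ S.x s) (hq : s - p ≤ S.n) :
    nuLe (S.splitProd p (s - p)) (S.optProd s) := by
  rcases hp.eq_or_lt with rfl | hlt
  · exact nuLe_refl _
  refine Nat.rel_of_forall_rel_succ_of_le_of_lt_of_le nuLe (F := fun k => S.splitProd k (s - k))
    (fun k hpk hk => ?_) le_rfl hlt le_rfl
  have := S.x_add_y s
  obtain ⟨h₁, h₂⟩ := S.splitProd_antidiag_step (by have := S.x_le s; omega) (by omega)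
    (by omega : s - k ≤ S.n)
  rw [h₁, h₂]
  exact (S.nuLe_a_b_of_lt_x hk (by omega)).mul_right _

end Split

section Strict

variable {K : Type*} [STSemifield K] {S : NuSortedPair K}
  (ha : TangibleOn S.m S.a) (hb : TangibleOn S.n S.b)
include ha hb

theorem splitProd_nuLt_optProd_of_lt_x (hnt : S.NoTie) {s p : ℕ} (hp : p < S.x s)
    (hq : s - p ≤ S.n) : nuLt (S.splitProd p (s - p)) (S.optProd s) := by
  refine Nat.rel_of_forall_rel_succ_of_le_of_lt_of_le nuLt (F := fun k => S.splitProd k (s - k))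
    (fun k hpk hk => ?_) le_rfl hp le_rfl
  have := S.x_add_y s
  have := S.x_le s
  obtain ⟨h₁, h₂⟩ := S.splitProd_antidiag_step (by omega) (by omega) (by omega : s - k ≤ S.n)
  rw [h₁, h₂]
  have hlt : nuLt (S.a (k + 1)) (S.b (s - k)) :=
    ⟨S.nuLe_a_b_of_lt_x hk (by omega), hnt _ _ (by omega) (by omega) (by omega) (by omega)⟩
  exact hlt.mul_right (tangible_splitProd ha hb _ _).isUnit

theorem splitProd_nuLt_optProd_of_lt_y {s q : ℕ} (hs : s ≤ S.m + S.n) (hq : q < S.y s)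
    (hp : s - q ≤ S.m) :
    nuLt (S.splitProd (s - q) q) (S.optProd s) := by
  have := S.x_add_y s
  have hchain := Nat.rel_of_forall_rel_succ_of_le_of_lt_of_le nuLt
    (F := fun k => S.splitProd (s - k) k) (fun k hqk hk => ?_) le_rfl hq le_rfl
  · simpa only [optProd, show s - S.y s = S.x s by omega] using hchain
  have hp' : s - k ≤ S.m := by omega
  obtain ⟨h₁, h₂⟩ := S.splitProd_step (p := s - (k + 1)) (q := k) (by omega)
    (by have := S.y_le hs; omega)
  rw [show s - (k + 1) + 1 = s - k by omega] at h₁ h₂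
  rw [h₁, h₂]
  have hba : nuLt (S.b (S.y s)) (S.a (S.x s + 1)) := S.nuLt_last_b_next_a (by omega) (by omega)
  exact (((S.b_sorted.nuLe (by omega) hk (S.y_le hs)).trans_nuLt
    hba).trans_nuLe (S.a_sorted.nuLe (by omega) (by omega) hp')).mul_right
    (tangible_splitProd ha hb _ _).isUnit

theorem splitProd_nuLe_optProd {s p q : ℕ} (hpq : p + q = s) (hp : p ≤ S.m) (hq : q ≤ S.n) :
    nuLe (S.splitProd p q) (S.optProd s) := by
  subst hpq
  by_cases h : p ≤ S.x (p + q)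
  · simpa using S.splitProd_nuLe_optProd_of_le_x h (by omega)
  · have := S.x_add_y (p + q)
    simpa using (splitProd_nuLt_optProd_of_lt_y ha hb (s := p + q) (q := q) (by omega) (by omega)
      (by omega)).1

theorem splitProd_nuLt_optProd (hnt : S.NoTie) {s p q : ℕ} (hpq : p + q = s) (hp : p ≤ S.m)
    (hq : q ≤ S.n) (hne : p ≠ S.x s) : nuLt (S.splitProd p q) (S.optProd s) := by
  subst hpq
  have := S.x_add_y (p + q)
  rcases Nat.lt_or_gt_of_ne hne with h | h
  · simpa using splitProd_nuLt_optProd_of_lt_x ha hb hnt h (by omega)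
  · simpa using splitProd_nuLt_optProd_of_lt_y ha hb (s := p + q) (q := q) (by omega) (by omega)
      (by omega)

end Strict

section StepFactor

variable {R : Type*} [Supertropical R] (S : NuSortedPair R)

open Classical in
/-- The product of the terms of the other sequence that come after the `(s + 1)`-st term of the
merge. -/
noncomputable def stepFactor (s : ℕ) : R :=
  if S.IsAStep s then tailProd S.n S.b (S.y s) else tailProd S.m S.a (S.x s)

noncomputable def pairProd (p q : ℕ) : R :=
  ∏ i ∈ Finset.Icc (p + 1) S.m, ∏ j ∈ Finset.Icc (q + 1) S.n, nuMax (S.a i) (S.b j)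

theorem pairProd_eq_stepFactor_mul {s : ℕ} (hs : s < S.m + S.n) :
    S.pairProd (S.x s) (S.y s) = S.stepFactor s * S.pairProd (S.x (s + 1)) (S.y (s + 1)) := by
  by_cases h : S.IsAStep s
  · rw [stepFactor, if_pos h, h, S.y_succ_of_isAStep h, pairProd, pairProd,
      Finset.prod_Icc_succ_bot (S.x_lt_of_isAStep h)]
    congr 1
    refine Finset.prod_congr rfl fun j hj => nuMax_of_nuLe ?_
    rw [Finset.mem_Icc] at hj
    exact (S.nuLe_next_of_isAStep h (by omega)).trans (S.b_sorted.nuLe (by omega) hj.1 hj.2)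
  · have hyn := S.y_le (s := s + 1) hs
    rw [S.y_succ_of_not_isAStep h] at hyn ⊢
    rw [stepFactor, if_neg h, S.x_succ_of_not_isAStep h, pairProd, pairProd, tailProd,
      ← Finset.prod_mul_distrib]
    refine Finset.prod_congr rfl fun i hi => ?_
    rw [Finset.mem_Icc] at hi
    rw [Finset.prod_Icc_succ_bot (by omega), nuMax_of_nuLt]
    exact (S.nuLt_next_of_not_isAStep h (by omega)).2.trans_nuLe
      (S.a_sorted.nuLe (by omega) hi.1 hi.2)

theorem prod_stepFactor :
    ∏ s ∈ Finset.range (S.m + S.n), S.stepFactor s =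
      ∏ i ∈ Finset.Icc 1 S.m, ∏ j ∈ Finset.Icc 1 S.n, nuMax (S.a i) (S.b j) := by
  have key (s : ℕ) (hs : s ≤ S.m + S.n) :
      S.pairProd 0 0 = (∏ k ∈ Finset.range s, S.stepFactor k) * S.pairProd (S.x s) (S.y s) := by
    induction s with
    | zero => simp [x_zero, y]
    | succ s ih =>
      rw [ih (by omega), S.pairProd_eq_stepFactor_mul (by omega), Finset.prod_range_succ, mul_assoc]
  have hend : S.pairProd (S.x (S.m + S.n)) (S.y (S.m + S.n)) = 1 := by
    have := S.x_add_y (S.m + S.n)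
    rw [pairProd, x_m_add_n, Finset.Icc_eq_empty (by omega), Finset.prod_empty]
  rw [← mul_one (∏ s ∈ Finset.range _, _), ← hend, ← key _ le_rfl]
  rfl

end StepFactor

end NuSortedPair

/-! ### The Sylvester matrix -/

structure SylvesterData (K : Type*) [STSemifield K] extends NuSortedPair K where
  f : K[X]
  g : K[X]
  a_tangible : TangibleOn m a
  b_tangible : TangibleOn n b
  lead_f_tangible : tangible (f.coeff m)
  lead_g_tangible : tangible (g.coeff n)
  coeff_f : ∀ r, f.coeff r = if r ≤ m then f.coeff m * tailProd m a r else 0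
  coeff_g : ∀ r, g.coeff r = if r ≤ n then g.coeff n * tailProd n b r else 0

namespace SylvesterData

variable {K : Type*} [STSemifield K] (S : SylvesterData K)

def rowLead (r : Fin (S.m + S.n)) : K := if (r : ℕ) < S.n then S.f.coeff S.m else S.g.coeff S.n

def rowWeight (r : Fin (S.m + S.n)) : K :=
  if (r : ℕ) < S.n then tailProd S.n S.b (r + 1) else tailProd S.m S.a (r - S.n + 1)

def weightedEntry (r j : Fin (S.m + S.n)) : K := resMatrix S.m S.n S.f S.g r j * S.rowWeight r

theorem tangible_rowLead (r : Fin (S.m + S.n)) : tangible (S.rowLead r) := by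
  unfold rowLead
  split_ifs
  exacts [S.lead_f_tangible, S.lead_g_tangible]

theorem tangible_rowWeight (r : Fin (S.m + S.n)) : tangible (S.rowWeight r) := by
  unfold rowWeight
  split_ifs
  exacts [tangible_tailProd S.b_tangible _, tangible_tailProd S.a_tangible _]

theorem tangible_rowLead_mul_splitProd (r : Fin (S.m + S.n)) (p q : ℕ) :
    tangible (S.rowLead r * S.splitProd p q) :=
  STSemifield.tangible_mul _ _ (S.tangible_rowLead r)
    (NuSortedPair.tangible_splitProd S.a_tangible S.b_tangible p q)

theorem weightedEntry_of_lt {r j : Fin (S.m + S.n)} (hr : (r : ℕ) < S.n) (hrj : (r : ℕ) ≤ j)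
    (hjr : (j : ℕ) - r ≤ S.m) :
    S.weightedEntry r j = S.rowLead r * S.splitProd ((j : ℕ) - r) ((r : ℕ) + 1) := by
  rw [weightedEntry, resMatrix_apply_of_lt hr, if_pos hrj, S.coeff_f, if_pos hjr, rowWeight,
    rowLead, if_pos hr, if_pos hr, NuSortedPair.splitProd, mul_assoc]

theorem weightedEntry_of_le {r j : Fin (S.m + S.n)} (hr : S.n ≤ (r : ℕ))
    (hrj : (r : ℕ) - S.n ≤ j) (hjr : (j : ℕ) - (r - S.n) ≤ S.n) :
    S.weightedEntry r j =
      S.rowLead r * S.splitProd ((r : ℕ) - S.n + 1) ((j : ℕ) - (r - S.n)) := by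
  rw [weightedEntry, resMatrix_apply_of_le hr, if_pos hrj, S.coeff_g, if_pos hjr, rowWeight,
    rowLead, if_neg (by omega), if_neg (by omega), NuSortedPair.splitProd]
  ring

theorem exists_weightedEntry_eq {r j : Fin (S.m + S.n)}
    (h : resMatrix S.m S.n S.f S.g r j ≠ 0) :
    ∃ p q : ℕ, p + q = (j : ℕ) + 1 ∧ p ≤ S.m ∧ q ≤ S.n ∧
      ((r : ℕ) < S.n ∧ (r : ℕ) + 1 = q ∨ S.n ≤ (r : ℕ) ∧ (r : ℕ) + 1 = S.n + p) ∧
      S.weightedEntry r j = S.rowLead r * S.splitProd p q := by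
  rcases lt_or_ge (r : ℕ) S.n with hr | hr
  · rw [resMatrix_apply_of_lt hr, S.coeff_f] at h
    have hrj : (r : ℕ) ≤ j := by by_contra hrj; simp [hrj] at h
    have hjr : (j : ℕ) - r ≤ S.m := by by_contra hjr; simp [hrj, hjr] at h
    exact ⟨(j : ℕ) - r, (r : ℕ) + 1, by omega, hjr, by omega, Or.inl ⟨hr, rfl⟩,
      S.weightedEntry_of_lt hr hrj hjr⟩
  · rw [resMatrix_apply_of_le hr, S.coeff_g] at h
    have hrj : (r : ℕ) - S.n ≤ j := by by_contra hrj; simp [hrj] at h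
    have hjr : (j : ℕ) - (r - S.n) ≤ S.n := by by_contra hjr; simp [hrj, hjr] at h
    exact ⟨(r : ℕ) - S.n + 1, (j : ℕ) - (r - S.n), by omega, by omega, hjr, Or.inr ⟨hr, by omega⟩,
      S.weightedEntry_of_le hr hrj hjr⟩

theorem weightedEntry_nuLe (r j : Fin (S.m + S.n)) :
    nuLe (S.weightedEntry r j) (S.rowLead r * S.optProd ((j : ℕ) + 1)) := by
  by_cases h : resMatrix S.m S.n S.f S.g r j = 0
  · rw [weightedEntry, h, zero_mul]
    exact zero_nuLe _
  obtain ⟨p, q, hpq, hp, hq, -, he⟩ := S.exists_weightedEntry_eq h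
  rw [he]
  exact (nuLe_refl _).mul (S.splitProd_nuLe_optProd S.a_tangible S.b_tangible hpq hp hq)

theorem row_eq_of_nu_weightedEntry_eq (hnt : S.NoTie) {r j : Fin (S.m + S.n)}
    (h : nu (S.weightedEntry r j) = nu (S.rowLead r * S.optProd ((j : ℕ) + 1))) :
    (r : ℕ) < S.n ∧ (r : ℕ) + 1 = S.y ((j : ℕ) + 1) ∨
      S.n ≤ (r : ℕ) ∧ (r : ℕ) + 1 = S.n + S.x ((j : ℕ) + 1) := by
  have hne : resMatrix S.m S.n S.f S.g r j ≠ 0 := by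
    intro h0
    rw [weightedEntry, h0, zero_mul, nu_zero] at h
    exact (S.tangible_rowLead_mul_splitProd r _ _).nu_ne_zero h.symm
  obtain ⟨p, q, hpq, hp, hq, hrow, he⟩ := S.exists_weightedEntry_eq hne
  have hpx : p = S.x ((j : ℕ) + 1) := by
    by_contra hpx
    have hlt := (S.splitProd_nuLt_optProd S.a_tangible S.b_tangible hnt hpq hp hq hpx).mul_right
      (S.tangible_rowLead r).isUnit
    rw [mul_comm, ← he, mul_comm (S.optProd _)] at hlt
    exact hlt.2 h
  have := S.x_add_y ((j : ℕ) + 1)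
  omega

open Classical in
noncomputable def optRow (j : Fin (S.m + S.n)) : Fin (S.m + S.n) :=
  if h : S.IsAStep j then ⟨S.n + S.x j, by have := S.x_lt_of_isAStep h; omega⟩
  else ⟨S.y j, by have := S.y_lt_of_not_isAStep h j.isLt; omega⟩

theorem optRow_of_isAStep {j : Fin (S.m + S.n)} (h : S.IsAStep j) :
    (S.optRow j : ℕ) = S.n + S.x j := by
  simp [optRow, h]

theorem optRow_of_not_isAStep {j : Fin (S.m + S.n)} (h : ¬ S.IsAStep j) :
    (S.optRow j : ℕ) = S.y j := by
  simp [optRow, h]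

theorem optRow_lt_iff (j : Fin (S.m + S.n)) : (S.optRow j : ℕ) < S.n ↔ ¬ S.IsAStep j := by
  by_cases h : S.IsAStep j
  · simp [S.optRow_of_isAStep h, h]
  · simpa [S.optRow_of_not_isAStep h, h] using S.y_lt_of_not_isAStep h j.isLt

theorem optRow_ne_of_lt {j k : Fin (S.m + S.n)} (hjk : j < k) : S.optRow j ≠ S.optRow k := by
  intro he
  have hlt := S.optRow_lt_iff j
  have hlt' := S.optRow_lt_iff k
  have hval := congrArg Fin.val he
  rw [he] at hlt
  by_cases hj : S.IsAStep j <;> by_cases hk : S.IsAStep k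
  · have := S.x_mono (show (j : ℕ) + 1 ≤ k from hjk)
    have hxj : S.x ((j : ℕ) + 1) = S.x j + 1 := hj
    rw [S.optRow_of_isAStep hj, S.optRow_of_isAStep hk] at hval
    omega
  · exact hlt.1 (hlt'.2 hk) hj
  · exact hlt'.1 (hlt.2 hj) hk
  · have := S.y_mono (show (j : ℕ) + 1 ≤ k from hjk)
    rw [S.optRow_of_not_isAStep hj, S.optRow_of_not_isAStep hk] at hval
    rw [S.y_succ_of_not_isAStep hj] at this
    omega

theorem optRow_injective : Function.Injective S.optRow := by
  intro j k he
  by_contra hne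
  rcases lt_or_gt_of_ne hne with h | h
  exacts [S.optRow_ne_of_lt h he, S.optRow_ne_of_lt h he.symm]

noncomputable def optPerm : Equiv.Perm (Fin (S.m + S.n)) :=
  Equiv.ofBijective S.optRow (Finite.injective_iff_bijective.1 S.optRow_injective)

theorem optPerm_apply (j : Fin (S.m + S.n)) : S.optPerm j = S.optRow j := rfl

theorem resMatrix_optRow (j : Fin (S.m + S.n)) :
    resMatrix S.m S.n S.f S.g (S.optRow j) j = S.rowLead (S.optRow j) * S.stepFactor j := by
  have := S.x_add_y j
  have hlt := S.optRow_lt_iff j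
  by_cases h : S.IsAStep j
  · have hr := S.optRow_of_isAStep h
    have hyn := S.y_le (s := j + 1) (by omega)
    rw [S.y_succ_of_isAStep h] at hyn
    rw [resMatrix_apply_of_le (by omega), if_pos (by omega), S.coeff_g, if_pos (by omega),
      rowLead, if_neg (by tauto), NuSortedPair.stepFactor, if_pos h,
      show (j : ℕ) - (S.optRow j - S.n) = S.y j by omega]
  · have hr := S.optRow_of_not_isAStep h
    have := S.x_le j
    rw [resMatrix_apply_of_lt (hlt.2 h), if_pos (by omega), S.coeff_f, if_pos (by omega),
      rowLead, if_pos (hlt.2 h), NuSortedPair.stepFactor, if_neg h,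
      show (j : ℕ) - S.optRow j = S.x j by omega]

theorem weightedEntry_optRow (j : Fin (S.m + S.n)) :
    S.weightedEntry (S.optRow j) j = S.rowLead (S.optRow j) * S.optProd ((j : ℕ) + 1) := by
  have hlt := S.optRow_lt_iff j
  rw [weightedEntry, resMatrix_optRow, mul_assoc, NuSortedPair.stepFactor, rowWeight,
    NuSortedPair.optProd, NuSortedPair.splitProd]
  by_cases h : S.IsAStep j
  · rw [if_pos h, if_neg (by tauto), h, S.y_succ_of_isAStep h, S.optRow_of_isAStep h,
      Nat.add_sub_cancel_left, mul_comm (tailProd _ _ _)]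
  · rw [if_neg h, if_pos (hlt.2 h), S.x_succ_of_not_isAStep h, S.y_succ_of_not_isAStep h,
      S.optRow_of_not_isAStep h]

theorem eq_optRow_of_nu_eq (hnt : S.NoTie) (σ : Equiv.Perm (Fin (S.m + S.n)))
    (hσ : ∀ j, nu (S.weightedEntry (σ j) j) = nu (S.rowLead (σ j) * S.optProd ((j : ℕ) + 1)))
    (j : Fin (S.m + S.n)) : σ j = S.optRow j := by
  obtain ⟨j, hj⟩ := j
  induction j using Nat.strong_induction_on with
  | _ j ih =>
  -- the other candidate row of column `j` is the optimal row of an earlier column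
  have earlier (u : ℕ) (hu : u < j) (he : σ ⟨j, hj⟩ = S.optRow ⟨u, by omega⟩) : False := by
    have := σ.injective ((ih u hu (by omega)).trans he.symm)
    simp only [Fin.mk.injEq] at this
    omega
  have := S.x_add_y j
  rcases S.row_eq_of_nu_weightedEntry_eq hnt (hσ ⟨j, hj⟩) with ⟨hr, hry⟩ | ⟨hr, hrx⟩
  · by_cases h : S.IsAStep j
    · rw [S.y_succ_of_isAStep h] at hry
      obtain ⟨u, hu, hB, hyu⟩ := S.exists_not_isAStep_eq (s := j) (t := S.y j - 1) (by omega)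
      exact (earlier u hu (Fin.ext (by rw [S.optRow_of_not_isAStep hB]; simp only; omega))).elim
    · ext
      rw [S.optRow_of_not_isAStep h]
      rw [S.y_succ_of_not_isAStep h] at hry
      simp only
      omega
  · by_cases h : S.IsAStep j
    · ext
      rw [S.optRow_of_isAStep h]
      rw [h] at hrx
      simp only
      omega
    · rw [S.x_succ_of_not_isAStep h] at hrx
      obtain ⟨u, hu, hA, hxu⟩ := S.exists_isAStep_eq (s := j) (t := S.x j - 1) (by omega)
      exact (earlier u hu (Fin.ext (by rw [S.optRow_of_isAStep hA]; simp only; omega))).elim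

def colProd (σ : Equiv.Perm (Fin (S.m + S.n))) : K := ∏ j, resMatrix S.m S.n S.f S.g (σ j) j

noncomputable def colBound : K :=
  (∏ r, S.rowLead r) * ∏ j : Fin (S.m + S.n), S.optProd ((j : ℕ) + 1)

theorem prod_weightedEntry (σ : Equiv.Perm (Fin (S.m + S.n))) :
    ∏ j, S.weightedEntry (σ j) j = S.colProd σ * ∏ r, S.rowWeight r := by
  rw [colProd, ← Equiv.prod_comp σ S.rowWeight, ← Finset.prod_mul_distrib]
  rfl

theorem prod_rowLead_mul_optProd (σ : Equiv.Perm (Fin (S.m + S.n))) :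
    ∏ j : Fin (S.m + S.n), S.rowLead (σ j) * S.optProd ((j : ℕ) + 1) = S.colBound := by
  rw [Finset.prod_mul_distrib, Equiv.prod_comp σ S.rowLead, colBound]

theorem colProd_optPerm_mul : S.colProd S.optPerm * ∏ r, S.rowWeight r = S.colBound := by
  rw [← prod_weightedEntry, ← S.prod_rowLead_mul_optProd S.optPerm]
  exact Finset.prod_congr rfl fun j _ => S.weightedEntry_optRow j

theorem isUnit_prod_rowWeight : IsUnit (∏ r, S.rowWeight r) :=
  (tangible_prod fun r _ => S.tangible_rowWeight r).isUnit

theorem colProd_nuLe_optPerm (σ : Equiv.Perm (Fin (S.m + S.n))) :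
    nuLe (S.colProd σ) (S.colProd S.optPerm) := by
  rw [← nuLe_mul_right_iff S.isUnit_prod_rowWeight, colProd_optPerm_mul, ← prod_weightedEntry,
    ← S.prod_rowLead_mul_optProd σ]
  exact nuLe_prod fun j _ => S.weightedEntry_nuLe (σ j) j

theorem colProd_nuLt_optPerm (hnt : S.NoTie) {σ : Equiv.Perm (Fin (S.m + S.n))}
    (hσ : σ ≠ S.optPerm) : nuLt (S.colProd σ) (S.colProd S.optPerm) := by
  rw [← nuLt_mul_right_iff S.isUnit_prod_rowWeight, colProd_optPerm_mul]
  by_cases hz : ∃ j, resMatrix S.m S.n S.f S.g (σ j) j = 0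
  · obtain ⟨j, hj⟩ := hz
    rw [colProd, Finset.prod_eq_zero (f := fun k => resMatrix S.m S.n S.f S.g (σ k) k)
      (Finset.mem_univ j) hj, zero_mul]
    have hbound : tangible S.colBound := STSemifield.tangible_mul _ _
      (tangible_prod fun r _ => S.tangible_rowLead r)
      (tangible_prod fun _ _ => NuSortedPair.tangible_splitProd S.a_tangible S.b_tangible _ _)
    exact ⟨zero_nuLe _, by rw [nu_zero]; exact hbound.nu_ne_zero.symm⟩
  push Not at hz
  obtain ⟨j, hj⟩ : ∃ j, nu (S.weightedEntry (σ j) j) ≠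
      nu (S.rowLead (σ j) * S.optProd ((j : ℕ) + 1)) := by
    by_contra! h
    exact hσ (Equiv.ext (S.eq_optRow_of_nu_eq hnt σ h))
  rw [← prod_weightedEntry, ← S.prod_rowLead_mul_optProd σ]
  refine nuLt_prod (Finset.mem_univ j) (fun k _ => S.weightedEntry_nuLe (σ k) k)
    ⟨S.weightedEntry_nuLe (σ j) j, hj⟩ fun k _ => ?_
  obtain ⟨p, q, -, -, -, -, he⟩ := S.exists_weightedEntry_eq (hz k)
  rw [he]
  exact (S.tangible_rowLead_mul_splitProd _ p q).isUnit

theorem prod_rowLead : ∏ r, S.rowLead r = S.f.coeff S.m ^ S.n * S.g.coeff S.n ^ S.m := by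
  rw [show ∏ r, S.rowLead r = ∏ k ∈ Finset.range (S.m + S.n),
      if k < S.n then S.f.coeff S.m else S.g.coeff S.n from
      Fin.prod_univ_eq_prod_range (fun k => if k < S.n then S.f.coeff S.m else S.g.coeff S.n) _,
    add_comm, Finset.prod_range_add,
    Finset.prod_congr rfl fun k hk => if_pos (Finset.mem_range.1 hk),
    Finset.prod_congr rfl fun k _ => if_neg (Nat.not_lt.2 (Nat.le_add_right S.n k))]
  simp

theorem colProd_optPerm : S.colProd S.optPerm =
    S.f.coeff S.m ^ S.n * S.g.coeff S.n ^ S.m *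
      ∏ i ∈ Finset.Icc 1 S.m, ∏ j ∈ Finset.Icc 1 S.n, nuMax (S.a i) (S.b j) := by
  have hperm : ∏ j, S.rowLead (S.optRow j) = ∏ r, S.rowLead r := Equiv.prod_comp S.optPerm _
  simp only [colProd, optPerm_apply, resMatrix_optRow]
  rw [Finset.prod_mul_distrib, hperm, prod_rowLead, ← NuSortedPair.prod_stepFactor,
    ← Fin.prod_univ_eq_prod_range]

theorem nu_weightedEntry_swap {u : ℕ} (htie : S.IsTieStep u)
    (hB : ¬ S.IsAStep (u + 1)) {c₀ c₁ : Fin (S.m + S.n)} (hc₀ : (c₀ : ℕ) = u)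
    (hc₁ : (c₁ : ℕ) = u + 1) :
    nu (S.weightedEntry (S.optRow c₀) c₀ * S.weightedEntry (S.optRow c₁) c₁) =
      nu (S.weightedEntry (S.optRow c₁) c₀ * S.weightedEntry (S.optRow c₀) c₁) := by
  obtain ⟨hA, hy, he⟩ := htie
  have hxA : S.x (u + 1) = S.x u + 1 := hA
  have := S.x_add_y u
  have hx := S.x_lt_of_isAStep hA
  have hr₀ : (S.optRow c₀ : ℕ) = S.n + S.x u := by rw [S.optRow_of_isAStep (hc₀ ▸ hA), hc₀]
  have hr₁ : (S.optRow c₁ : ℕ) = S.y u := by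
    rw [S.optRow_of_not_isAStep (hc₁ ▸ hB), hc₁, S.y_succ_of_isAStep hA]
  rw [weightedEntry_optRow, weightedEntry_optRow, hc₀, hc₁,
    S.weightedEntry_of_lt (r := S.optRow c₁) (j := c₀) (by omega) (by omega) (by omega),
    S.weightedEntry_of_le (r := S.optRow c₀) (j := c₁) (by omega) (by omega) (by omega),
    hr₀, hr₁, hc₀, hc₁]
  simp only [NuSortedPair.optProd, hxA, S.y_succ_of_isAStep hA, S.x_succ_of_not_isAStep hB,
    S.y_succ_of_not_isAStep hB, nu_mul, show u - S.y u = S.x u by omega,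
    Nat.add_sub_cancel_left, show u + 1 - S.x u = S.y u + 1 by omega,
    S.nu_splitProd_eq_of_nu_eq hx hy he]
  ring

theorem exists_nu_colProd_eq (htie : ¬ S.NoTie) :
    ∃ σ ≠ S.optPerm, nu (S.colProd σ) = nu (S.colProd S.optPerm) := by
  simp only [NuSortedPair.NoTie, not_forall, not_not] at htie
  obtain ⟨i, j, hi, him, hj, hjn, he⟩ := htie
  obtain ⟨u, hu, htie, hB⟩ := S.exists_isTieStep_not_isAStep_succ hi him hj hjn he
  obtain ⟨c₀, hc₀⟩ : ∃ c : Fin (S.m + S.n), (c : ℕ) = u := ⟨⟨u, by omega⟩, rfl⟩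
  obtain ⟨c₁, hc₁⟩ : ∃ c : Fin (S.m + S.n), (c : ℕ) = u + 1 := ⟨⟨u + 1, hu⟩, rfl⟩
  have hc : c₀ ≠ c₁ := fun h => by have := congrArg Fin.val h; omega
  refine ⟨(Equiv.swap c₀ c₁).trans S.optPerm, fun h => hc ?_, ?_⟩
  · simpa using S.optPerm.injective (congrArg (· c₀) h).symm
  have hswap : (S.colProd ((Equiv.swap c₀ c₁).trans S.optPerm) * ∏ r, S.rowWeight r) *
      (S.weightedEntry (S.optRow c₀) c₀ * S.weightedEntry (S.optRow c₁) c₁) =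
      (S.colProd S.optPerm * ∏ r, S.rowWeight r) *
      (S.weightedEntry (S.optRow c₁) c₀ * S.weightedEntry (S.optRow c₀) c₁) := by
    rw [← prod_weightedEntry, ← prod_weightedEntry]
    exact Finset.prod_comp_swap_mul S.weightedEntry S.optPerm hc
  refine nu_eq_of_nu_mul_right_eq (nu_eq_of_mul_eq_mul hswap
    (S.nu_weightedEntry_swap htie hB hc₀ hc₁) ?_) S.isUnit_prod_rowWeight
  rw [weightedEntry_optRow, weightedEntry_optRow]
  exact (STSemifield.tangible_mul _ _ (S.tangible_rowLead_mul_splitProd _ _ _)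
    (S.tangible_rowLead_mul_splitProd _ _ _)).isUnit

theorem resultant_eq : resultant S.m S.n S.f S.g =
    S.f.coeff S.m ^ S.n * S.g.coeff S.n ^ S.m *
      ∏ i ∈ Finset.Icc 1 S.m, ∏ j ∈ Finset.Icc 1 S.n, (S.a i + S.b j) := by
  classical
  rw [_root_.resultant, sdet_eq_permanent]
  change ∑ σ, S.colProd σ = _
  by_cases hnt : S.NoTie
  · rw [sum_eq_of_nuLt (x := S.colProd) (Finset.mem_univ S.optPerm)
      fun σ _ hσ => S.colProd_nuLt_optPerm hnt hσ, colProd_optPerm]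
    refine congrArg _ (Finset.prod_congr rfl fun i hi => Finset.prod_congr rfl fun j hj => ?_)
    rw [Finset.mem_Icc] at hi hj
    exact (add_eq_nuMax (hnt i j hi.1 hi.2 hj.1 hj.2)).symm
  · obtain ⟨σ, hσ, he⟩ := S.exists_nu_colProd_eq hnt
    rw [sum_eq_nu_of_nu_eq (Finset.mem_univ _) (Finset.mem_univ σ) hσ he
      fun τ _ => S.colProd_nuLe_optPerm τ, colProd_optPerm]
    simp only [NuSortedPair.NoTie, not_forall, not_not] at hnt
    obtain ⟨i, j, hi, him, hj, hjn, hij⟩ := hnt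
    exact nu_mul_prod_prod_nuMax _ _ _ (Finset.mem_Icc.2 ⟨hi, him⟩) (Finset.mem_Icc.2 ⟨hj, hjn⟩)
      hij

end SylvesterData

end Supertropical

open Supertropical Polynomial

theorem stmt10_general {F : Type*} [STSemifield F] (m n : ℕ)
    (f g : F[X]) (hf : f.natDegree = m) (hg : g.natDegree = n)
    (hfull : fullPoly f) (hgfull : fullPoly g)
    (htf : ∀ i ≤ m, tangible (f.coeff i)) (htg : ∀ j ≤ n, tangible (g.coeff j))
    (a b : ℕ → F)
    (hta : ∀ i, 1 ≤ i → i ≤ m → tangible (a i))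
    (htb : ∀ j, 1 ≤ j → j ≤ n → tangible (b j))
    (ha : ∀ i, 1 ≤ i → i ≤ m → f.coeff i * a i = f.coeff (i - 1))
    (hb : ∀ j, 1 ≤ j → j ≤ n → g.coeff j * b j = g.coeff (j - 1)) :
    resultant m n f g =
      f.coeff m ^ n * g.coeff n ^ m *
        ∏ i ∈ Finset.Icc 1 m, ∏ j ∈ Finset.Icc 1 n, (a i + b j) :=
  SylvesterData.resultant_eq
    { m, n, a, b, f, g
      a_sorted := nuSorted_of_fullPoly hf hfull htf ha
      b_sorted := nuSorted_of_fullPoly hg hgfull htg hb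
      a_tangible := hta
      b_tangible := htb
      lead_f_tangible := htf m le_rfl
      lead_g_tangible := htg n le_rfl
      coeff_f := coeff_eq_ite_tailProd hf ha
      coeff_g := coeff_eq_ite_tailProd hg hb }

/-- the resultant of two full polynomials with tangible
coefficients, where `a i = α_{i-1}/α_i` and `b j = β_{j-1}/β_j` in the group
of tangible elements. -/
theorem stmt10 {F : Type*} [STSemifield F] (m n : ℕ) (hm : 1 ≤ m) (hn : 1 ≤ n)
    (f g : F[X]) (hf : f.natDegree = m) (hg : g.natDegree = n)
    (hfull : fullPoly f) (hgfull : fullPoly g)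
    (htf : ∀ i ≤ m, tangible (f.coeff i)) (htg : ∀ j ≤ n, tangible (g.coeff j))
    (a b : ℕ → F)
    (hta : ∀ i, 1 ≤ i → i ≤ m → tangible (a i))
    (htb : ∀ j, 1 ≤ j → j ≤ n → tangible (b j))
    (ha : ∀ i, 1 ≤ i → i ≤ m → f.coeff i * a i = f.coeff (i - 1))
    (hb : ∀ j, 1 ≤ j → j ≤ n → g.coeff j * b j = g.coeff (j - 1)) :
    resultant m n f g =
      f.coeff m ^ n * g.coeff n ^ m *
        ∏ i ∈ Finset.Icc 1 m, ∏ j ∈ Finset.Icc 1 n, (a i + b j) :=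
  stmt10_general m n f g hf hg hfull hgfull htf htg a b hta htb ha hb
end
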